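/- arXiv:2605.04783 — 7 statements merged into one kernel-verified Lean document; each statement's English description precedes it below -/
import Mathlib

section
/- For every integer k ≥ 1, the maximum number of edges in a graph with matching number at most k−1 and maximum degree at most k−1 equals k(k−1) if k is odd, and k(k−3/2) if k is even. -/
open SimpleGraph

/-- The matching number of `G` restricted to a vertex subset `S`. -/
noncomputable def nuOn {V : Type*} (G : SimpleGraph V) (S : Set V) : ℕ :=
  sSup {n | ∃ M : G.Subgraph, M.IsMatching ∧ M.verts ⊆ S ∧ M.edgeSet.ncard = n}

/-- The matching number `ν(G)`. -/
noncomputable def nu {V : Type*} (G : SimpleGraph V) : ℕ := nuOn G Set.univ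

namespace CH

variable {V : Type*}

/-- a matching, as a simple graph of max degree ≤ 1 -/
def IsMat (m : SimpleGraph V) : Prop := ∀ v, (m.neighborSet v).Subsingleton

noncomputable def mu (m : SimpleGraph V) : ℕ := m.edgeSet.ncard

/-- matching number via simple-graph matchings -/
noncomputable def nu' (G : SimpleGraph V) : ℕ :=
  sSup {n | ∃ m, m ≤ G ∧ IsMat m ∧ mu m = n}

variable [Fintype V]

lemma matset_nonempty (G : SimpleGraph V) :
    Set.Nonempty {n | ∃ m, m ≤ G ∧ IsMat m ∧ mu m = n} := by
  refine ⟨0, ⊥, bot_le, fun v x hx y hy => absurd hx (by simp), ?_⟩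
  simp [mu]

lemma matset_bddAbove (G : SimpleGraph V) :
    BddAbove {n | ∃ m, m ≤ G ∧ IsMat m ∧ mu m = n} := by
  classical
  refine ⟨(Set.univ : Set (Sym2 V)).ncard, ?_⟩
  rintro n ⟨m, _, _, rfl⟩
  exact Set.ncard_le_ncard (Set.subset_univ _) Set.finite_univ

lemma le_nu' {G m : SimpleGraph V} (h : m ≤ G) (hm : IsMat m) : mu m ≤ nu' G :=
  le_csSup (matset_bddAbove G) ⟨m, h, hm, rfl⟩

lemma exists_max (G : SimpleGraph V) : ∃ m, m ≤ G ∧ IsMat m ∧ mu m = nu' G := by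
  have := Nat.sSup_mem (matset_nonempty G) (matset_bddAbove G)
  exact this

lemma nu'_le {G : SimpleGraph V} {t : ℕ} (h : ∀ m, m ≤ G → IsMat m → mu m ≤ t) :
    nu' G ≤ t := csSup_le (matset_nonempty G) (by rintro n ⟨m, hm1, hm2, rfl⟩; exact h m hm1 hm2)

lemma nu'_mono {G G' : SimpleGraph V} (h : G ≤ G') : nu' G ≤ nu' G' :=
  nu'_le fun m hm him => le_nu' (hm.trans h) him

/-- the two notions of matching number agree -/
lemma nu_eq_nu' (G : SimpleGraph V) : nu G = nu' G := by
  classical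
  unfold nu nuOn nu'
  congr 1
  ext n
  constructor
  · rintro ⟨M, hM, -, rfl⟩
    refine ⟨M.spanningCoe, M.spanningCoe_le, ?_, ?_⟩
    · intro v x hx y hy
      simp only [SimpleGraph.mem_neighborSet, Subgraph.spanningCoe_adj] at hx hy
      obtain ⟨w, -, hw⟩ := hM (M.edge_vert hx)
      rw [hw x hx, hw y hy]
    · unfold mu
      have : M.spanningCoe.edgeSet = M.edgeSet := by
        ext e
        induction e using Sym2.ind with
        | _ x y => exact Iff.rfl
      rw [this]
  · rintro ⟨m, hle, him, rfl⟩
    refine ⟨⟨m.support, m.Adj, fun h => hle h, fun h => ⟨_, h⟩, ⟨fun x y h => h.symm⟩⟩,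
      ?_, Set.subset_univ _, ?_⟩
    · rintro v ⟨w, hw⟩
      exact ⟨w, hw, fun y hy => (him v hy hw)⟩
    · unfold mu
      have : (Subgraph.mk m.support m.Adj (fun h => hle h) (fun h => ⟨_, h⟩)
          ⟨fun x y h => h.symm⟩ : G.Subgraph).edgeSet = m.edgeSet := by
        ext e
        induction e using Sym2.ind with
        | _ x y => exact Iff.rfl
      rw [this]

section Counting

lemma ncard_nbr_eq_degree (G : SimpleGraph V) [DecidableRel G.Adj] (v : V) :
    (G.neighborSet v).ncard = G.degree v := by
  rw [← SimpleGraph.card_neighborSet_eq_degree, Set.ncard_eq_toFinset_card',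
    Set.toFinset_card]

lemma handshake (G : SimpleGraph V) :
    ∑ v, (G.neighborSet v).ncard = 2 * G.edgeSet.ncard := by
  classical
  have h2 : G.edgeSet.ncard = G.edgeFinset.card := by
    rw [Set.ncard_eq_toFinset_card', SimpleGraph.edgeFinset]
  simp_rw [ncard_nbr_eq_degree, h2]
  exact sum_degrees_eq_twice_card_edges G

lemma IsMat.nbr_ncard_le_one {m : SimpleGraph V} (hm : IsMat m) (v : V) :
    (m.neighborSet v).ncard ≤ 1 :=
  (Set.ncard_le_one (Set.toFinite _)).2 fun a ha b hb => hm v ha hb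

lemma IsMat.anti {m m' : SimpleGraph V} (h : m' ≤ m) (hm : IsMat m) : IsMat m' :=
  fun v a ha b hb => hm v (h ha) (h hb)

lemma support_ncard {m : SimpleGraph V} (hm : IsMat m) :
    m.support.ncard = 2 * mu m := by
  classical
  show m.support.ncard = 2 * m.edgeSet.ncard
  rw [← handshake]
  have key : ∀ v, (m.neighborSet v).ncard = if v ∈ m.support then 1 else 0 := by
    intro v
    by_cases hv : v ∈ m.support
    · obtain ⟨w, hw⟩ := hv
      rw [if_pos ⟨w, hw⟩, Set.ncard_eq_one]
      exact ⟨w, Set.eq_singleton_iff_unique_mem.2 ⟨hw, fun y hy => hm v hy hw⟩⟩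
    · rw [if_neg hv]
      have : m.neighborSet v = ∅ := by
        ext a; simp only [SimpleGraph.mem_neighborSet, Set.mem_empty_iff_false, iff_false]
        exact fun ha => hv ⟨a, ha⟩
      rw [this, Set.ncard_empty]
  simp_rw [key]
  rw [← Finset.card_filter, Set.ncard_eq_toFinset_card']
  congr 1
  ext v
  simp

lemma two_mu_le_card {m : SimpleGraph V} (hm : IsMat m) :
    2 * mu m ≤ Fintype.card V := by
  rw [← support_ncard hm]
  calc m.support.ncard ≤ (Set.univ : Set V).ncard :=
        Set.ncard_le_ncard (Set.subset_univ _) Set.finite_univ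
    _ = Fintype.card V := by rw [Set.ncard_univ, Nat.card_eq_fintype_card]

lemma nu'_le_half (G : SimpleGraph V) : nu' G ≤ Fintype.card V / 2 :=
  nu'_le fun m _ hm => (Nat.le_div_iff_mul_le (by norm_num)).2
    (by have := two_mu_le_card hm; omega)

end Counting

section Del

/-- delete all edges at a vertex -/
def del (G : SimpleGraph V) (v : V) : SimpleGraph V where
  Adj x y := G.Adj x y ∧ x ≠ v ∧ y ≠ v
  symm := ⟨fun x y h => ⟨h.1.symm, h.2.2, h.2.1⟩⟩
  loopless := ⟨fun x h => G.loopless.irrefl x h.1⟩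

lemma del_le (G : SimpleGraph V) (v : V) : del G v ≤ G := fun _ _ h => h.1

lemma del_mono {G G' : SimpleGraph V} (h : G ≤ G') (v : V) : del G v ≤ del G' v :=
  fun _ _ hx => ⟨h hx.1, hx.2⟩

lemma edgeSet_subset_del_union (G : SimpleGraph V) (v : V) :
    G.edgeSet ⊆ (del G v).edgeSet ∪ (fun w => s(v, w)) '' (G.neighborSet v) := by
  intro e he
  induction e using Sym2.ind with
  | _ x y =>
    rw [SimpleGraph.mem_edgeSet] at he
    by_cases hx : x = v
    · subst hx; exact Or.inr ⟨y, he, rfl⟩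
    · by_cases hy : y = v
      · subst hy; exact Or.inr ⟨x, he.symm, Sym2.eq_swap⟩
      · exact Or.inl (by rw [SimpleGraph.mem_edgeSet]; exact ⟨he, hx, hy⟩)

lemma ncard_le_del_add_deg (G : SimpleGraph V) (v : V) :
    G.edgeSet.ncard ≤ (del G v).edgeSet.ncard + (G.neighborSet v).ncard :=
  le_trans (Set.ncard_le_ncard (edgeSet_subset_del_union G v)
      ((Set.toFinite _).union (Set.toFinite _)))
    (le_trans (Set.ncard_union_le _ _) (by gcongr; exact Set.ncard_image_le (Set.toFinite _)))

lemma nu'_le_del_add_one (G : SimpleGraph V) (v : V) :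
    nu' G ≤ nu' (del G v) + 1 := by
  obtain ⟨m, hm, him, hmu⟩ := exists_max G
  have h1 : del m v ≤ del G v := del_mono hm v
  have h2 : IsMat (del m v) := him.anti (del_le m v)
  have h3 : mu m ≤ mu (del m v) + 1 := by
    refine le_trans (Set.ncard_le_ncard (edgeSet_subset_del_union m v)
      ((Set.toFinite _).union (Set.toFinite _))) ?_
    refine le_trans (Set.ncard_union_le _ _) ?_
    have : ((fun w => s(v, w)) '' (m.neighborSet v)).ncard ≤ 1 :=
      le_trans (Set.ncard_image_le (Set.toFinite _)) (him.nbr_ncard_le_one v)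
    have hmu' : mu (del m v) = (del m v).edgeSet.ncard := rfl
    omega
  calc nu' G = mu m := hmu.symm
    _ ≤ mu (del m v) + 1 := h3
    _ ≤ nu' (del G v) + 1 := by have := le_nu' h1 h2; omega

lemma nonessential_max_missing {G : SimpleGraph V} {v : V}
    (h : ¬ nu' (del G v) < nu' G) :
    ∃ m, m ≤ G ∧ IsMat m ∧ mu m = nu' G ∧ v ∉ m.support := by
  obtain ⟨m, hm, him, hmu⟩ := exists_max (del G v)
  refine ⟨m, hm.trans (del_le G v), him, ?_, ?_⟩
  · rw [hmu]
    exact le_antisymm (nu'_mono (del_le G v)) (not_lt.1 h)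
  · rintro ⟨w, hw⟩
    exact (hm hw).2.1 rfl

end Del

section Extend

lemma matching_insert {G m : SimpleGraph V} (hmG : m ≤ G) (him : IsMat m) {x y : V}
    (hxy : G.Adj x y) (hx : x ∉ m.support) (hy : y ∉ m.support) :
    ∃ m', m' ≤ G ∧ IsMat m' ∧ mu m' = mu m + 1 := by
  classical
  set f := SimpleGraph.fromEdgeSet {s(x, y)} with hf
  have hfadj : ∀ a b, f.Adj a b ↔ ((a = x ∧ b = y) ∨ (a = y ∧ b = x)) := by
    intro a b
    rw [hf, SimpleGraph.fromEdgeSet_adj]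
    constructor
    · rintro ⟨hab, hne⟩
      rw [Set.mem_singleton_iff, Sym2.eq_iff] at hab
      tauto
    · rintro (⟨rfl, rfl⟩ | ⟨rfl, rfl⟩)
      · exact ⟨rfl, hxy.ne⟩
      · exact ⟨Sym2.eq_swap, hxy.ne'⟩
  refine ⟨m ⊔ f, sup_le hmG ?_, ?_, ?_⟩
  · intro a b hab
    rcases (hfadj a b).1 hab with ⟨rfl, rfl⟩ | ⟨rfl, rfl⟩
    · exact hxy
    · exact hxy.symm
  · intro v a ha b hb
    rw [SimpleGraph.mem_neighborSet, SimpleGraph.sup_adj] at ha hb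
    have hma : ∀ c, m.Adj v c → ¬(v = x ∨ v = y) := by
      rintro c hc (rfl | rfl)
      exacts [hx ⟨c, hc⟩, hy ⟨c, hc⟩]
    rcases ha with ha | ha
    · rcases hb with hb | hb
      · exact him v ha hb
      · rcases (hfadj v b).1 hb with ⟨rfl, rfl⟩ | ⟨rfl, rfl⟩
        · exact absurd (Or.inl rfl) (hma a ha)
        · exact absurd (Or.inr rfl) (hma a ha)
    · rcases hb with hb | hb
      · rcases (hfadj v a).1 ha with ⟨rfl, rfl⟩ | ⟨rfl, rfl⟩
        · exact absurd (Or.inl rfl) (hma b hb)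
        · exact absurd (Or.inr rfl) (hma b hb)
      · rcases (hfadj v a).1 ha with ⟨rfl, rfl⟩ | ⟨rfl, rfl⟩ <;>
          rcases (hfadj v b).1 hb with ⟨h1, h2⟩ | ⟨h1, h2⟩ <;> subst h2 <;> first
            | rfl
            | (exact absurd h1 hxy.ne) | (exact absurd h1 hxy.ne')
  · unfold mu
    rw [SimpleGraph.edgeSet_sup, hf, SimpleGraph.edgeSet_fromEdgeSet]
    have hdiag : {s(x, y)} \ Sym2.diagSet = {s(x, y)} := by
      ext e
      simp only [Set.mem_diff, Set.mem_singleton_iff, Sym2.mem_diagSet,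
        and_iff_left_iff_imp]
      rintro rfl
      rw [Sym2.mk_isDiag_iff]
      exact hxy.ne
    rw [hdiag, Set.union_singleton, Set.ncard_insert_of_notMem ?_ (Set.toFinite _)]
    · intro hmem
      rw [SimpleGraph.mem_edgeSet] at hmem
      exact hx ⟨y, hmem⟩

lemma no_edge_outside_max {G m : SimpleGraph V} (hmG : m ≤ G) (him : IsMat m)
    (hmax : mu m = nu' G) {x y : V} (hxy : G.Adj x y) (hx : x ∉ m.support) :
    y ∈ m.support := by
  by_contra hy
  obtain ⟨m', hm', him', hmu'⟩ := matching_insert hmG him hxy hx hy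
  have := le_nu' hm' him'
  omega

end Extend

section Reach

def reachSet (G : SimpleGraph V) (w : V) : Set V := {x | G.Reachable w x}

lemma self_mem_reachSet (G : SimpleGraph V) (w : V) : w ∈ reachSet G w :=
  Reachable.refl w

lemma reach_closed {G : SimpleGraph V} {w x y : V} (h : G.Adj x y) :
    x ∈ reachSet G w ↔ y ∈ reachSet G w :=
  ⟨fun hx => hx.trans h.reachable, fun hy => hy.trans h.symm.reachable⟩

/-- restriction of a graph to a vertex set (keeping the ambient type) -/
def restrict (G : SimpleGraph V) (S : Set V) : SimpleGraph V where
  Adj x y := G.Adj x y ∧ x ∈ S ∧ y ∈ S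
  symm := ⟨fun x y h => ⟨h.1.symm, h.2.2, h.2.1⟩⟩
  loopless := ⟨fun x h => G.loopless.irrefl x h.1⟩

lemma restrict_le (G : SimpleGraph V) (S : Set V) : restrict G S ≤ G := fun _ _ h => h.1

lemma edge_partition (G : SimpleGraph V) (S : Set V)
    (hS : ∀ x y, G.Adj x y → (x ∈ S ↔ y ∈ S)) :
    G.edgeSet.ncard = (restrict G S).edgeSet.ncard + (restrict G Sᶜ).edgeSet.ncard := by
  have hU : G.edgeSet = (restrict G S).edgeSet ∪ (restrict G Sᶜ).edgeSet := by
    ext e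
    induction e using Sym2.ind with
    | _ x y =>
      simp only [SimpleGraph.mem_edgeSet, Set.mem_union]
      constructor
      · intro h
        by_cases hx : x ∈ S
        · exact Or.inl ⟨h, hx, (hS x y h).1 hx⟩
        · exact Or.inr ⟨h, hx, fun hy => hx ((hS x y h).2 hy)⟩
      · rintro (⟨h, -⟩ | ⟨h, -⟩) <;> exact h
  rw [hU, Set.ncard_union_eq ?_ (Set.toFinite _) (Set.toFinite _)]
  rw [Set.disjoint_left]
  intro e he1 he2
  induction e using Sym2.ind with
  | _ x y => exact he2.2.1 he1.2.1

lemma nu'_restrict_add {G : SimpleGraph V} {S T : Set V} (hST : Disjoint S T) :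
    nu' (restrict G S) + nu' (restrict G T) ≤ nu' G := by
  obtain ⟨m1, hm1, him1, hmu1⟩ := exists_max (restrict G S)
  obtain ⟨m2, hm2, him2, hmu2⟩ := exists_max (restrict G T)
  have hS1 : ∀ {x y}, m1.Adj x y → x ∈ S := fun h => (hm1 h).2.1
  have hT2 : ∀ {x y}, m2.Adj x y → x ∈ T := fun h => (hm2 h).2.1
  have hsup : m1 ⊔ m2 ≤ G :=
    sup_le (hm1.trans (restrict_le _ _)) (hm2.trans (restrict_le _ _))
  have hmat : IsMat (m1 ⊔ m2) := by
    intro v a ha b hb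
    rw [SimpleGraph.mem_neighborSet, SimpleGraph.sup_adj] at ha hb
    rcases ha with ha | ha <;> rcases hb with hb | hb
    · exact him1 v ha hb
    · exact absurd (hT2 hb) (Set.disjoint_left.1 hST (hS1 ha))
    · exact absurd (hT2 ha) (Set.disjoint_left.1 hST (hS1 hb))
    · exact him2 v ha hb
  have hmu : mu (m1 ⊔ m2) = mu m1 + mu m2 := by
    unfold mu
    rw [SimpleGraph.edgeSet_sup, Set.ncard_union_eq ?_ (Set.toFinite _) (Set.toFinite _)]
    rw [Set.disjoint_left]
    intro e he1 he2
    induction e using Sym2.ind with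
    | _ x y => exact Set.disjoint_left.1 hST (hS1 he1) (hT2 he2)
  calc nu' (restrict G S) + nu' (restrict G T) = mu (m1 ⊔ m2) := by
        rw [hmu, hmu1, hmu2]
    _ ≤ nu' G := le_nu' hsup hmat

/-- a connected set has at least `|c| - 1` internal edges -/
lemma reach_ncard_le_edges (H : SimpleGraph V) (w : V) :
    (reachSet H w).ncard ≤ (restrict H (reachSet H w)).edgeSet.ncard + 1 := by
  classical
  set c := reachSet H w with hc
  have hpar : ∀ x, x ∈ c → x ≠ w →
      ∃ p, H.Adj p x ∧ p ∈ c ∧ H.dist w p + 1 = H.dist w x := by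
    intro x hx hne
    have hr : H.Reachable w x := hx
    have hd : 0 < H.dist w x := hr.pos_dist_of_ne (Ne.symm hne)
    obtain ⟨P, hP⟩ := hr.exists_walk_length_eq_dist
    rcases hrev : P.reverse with _ | ⟨hadj, q⟩
    · exfalso
      have hl := congrArg SimpleGraph.Walk.length hrev
      rw [SimpleGraph.Walk.length_reverse] at hl
      simp only [SimpleGraph.Walk.length_nil] at hl
      omega
    · rename_i p
      have hlen : q.length + 1 = H.dist w x := by
        have := congrArg SimpleGraph.Walk.length hrev
        rw [SimpleGraph.Walk.length_reverse, hP] at this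
        simp only [SimpleGraph.Walk.length_cons] at this
        omega
      have hpc : p ∈ c := hx.trans hadj.reachable
      have h1 : H.dist w p ≤ q.length := by
        have := H.dist_le q.reverse
        rwa [SimpleGraph.Walk.length_reverse] at this
      have h2 : H.dist w x ≤ H.dist w p + 1 := by
        obtain ⟨Q, hQ⟩ := (hpc : H.Reachable w p).exists_walk_length_eq_dist
        have := H.dist_le (Q.concat hadj.symm)
        rwa [SimpleGraph.Walk.length_concat, hQ] at this
      exact ⟨p, hadj.symm, hpc, by omega⟩
  choose! par hpar1 hpar2 hpar3 using hpar
  have hw : w ∈ c := self_mem_reachSet H w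
  have hinj : (c \ {w}).ncard ≤ (restrict H c).edgeSet.ncard := by
    refine Set.ncard_le_ncard_of_injOn (fun x => s(x, par x)) ?_ ?_ (Set.toFinite _)
    · rintro x ⟨hx, hxw⟩
      rw [Set.mem_singleton_iff] at hxw
      rw [SimpleGraph.mem_edgeSet]
      exact ⟨(hpar1 x hx hxw).symm, hx, hpar2 x hx hxw⟩
    · rintro x ⟨hx, hxw⟩ y ⟨hy, hyw⟩ hxy
      rw [Set.mem_singleton_iff] at hxw hyw
      rw [Sym2.eq_iff] at hxy
      rcases hxy with ⟨h1, -⟩ | ⟨h1, h2⟩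
      · exact h1
      · exfalso
        have e1 := hpar3 x hx hxw
        have e2 := hpar3 y hy hyw
        rw [← h1] at e2
        rw [h2] at e1
        omega
  have := Set.ncard_diff_singleton_add_one hw (Set.toFinite _)
  omega

lemma three_leaves_false (H : SimpleGraph V) (w : V)
    (hdeg : ∀ v, (H.neighborSet v).ncard ≤ 2)
    {x y z : V} (hx : x ∈ reachSet H w) (hy : y ∈ reachSet H w) (hz : z ∈ reachSet H w)
    (hxy : x ≠ y) (hxz : x ≠ z) (hyz : y ≠ z)
    (dx : (H.neighborSet x).ncard ≤ 1) (dy : (H.neighborSet y).ncard ≤ 1)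
    (dz : (H.neighborSet z).ncard ≤ 1) : False := by
  classical
  set c := reachSet H w with hc
  set R := restrict H c with hR
  have hRnbr : ∀ v, (R.neighborSet v).ncard = if v ∈ c then (H.neighborSet v).ncard else 0 := by
    intro v
    by_cases hv : v ∈ c
    · rw [if_pos hv]
      congr 1
      ext a
      simp only [SimpleGraph.mem_neighborSet]
      exact ⟨fun h => h.1, fun h => ⟨h, hv, (reach_closed h).1 hv⟩⟩
    · rw [if_neg hv]
      have : R.neighborSet v = ∅ := by
        ext a
        simp only [SimpleGraph.mem_neighborSet, Set.mem_empty_iff_false, iff_false]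
        exact fun h => hv h.2.1
      rw [this, Set.ncard_empty]
  have hHS := handshake R
  -- sum over c only
  have hsum : ∑ v, (R.neighborSet v).ncard = ∑ v ∈ c.toFinset, (H.neighborSet v).ncard := by
    rw [← Finset.sum_subset (Finset.subset_univ c.toFinset)]
    · exact Finset.sum_congr rfl fun v hv => by
        rw [hRnbr v, if_pos (Set.mem_toFinset.1 hv)]
    · intro v _ hv
      rw [hRnbr v, if_neg (fun h => hv (Set.mem_toFinset.2 h))]
  set T : Finset V := {x, y, z} with hT
  have hTsub : T ⊆ c.toFinset := by
    intro a ha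
    rw [hT] at ha
    simp only [Finset.mem_insert, Finset.mem_singleton] at ha
    rcases ha with rfl | rfl | rfl <;> rw [Set.mem_toFinset] <;> assumption
  have hTcard : T.card = 3 := by
    rw [hT]
    rw [Finset.card_insert_of_notMem (by simp [hxy, hxz]),
      Finset.card_insert_of_notMem (by simp [hyz]), Finset.card_singleton]
  have hsplit : ∑ v ∈ c.toFinset \ T, (H.neighborSet v).ncard
      + ∑ v ∈ T, (H.neighborSet v).ncard = ∑ v ∈ c.toFinset, (H.neighborSet v).ncard :=
    Finset.sum_sdiff hTsub
  have hb1 : ∑ v ∈ c.toFinset \ T, (H.neighborSet v).ncard ≤ (c.toFinset \ T).card * 2 := by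
    have := Finset.sum_le_card_nsmul (c.toFinset \ T) (fun v => (H.neighborSet v).ncard) 2
      (fun v _ => hdeg v)
    simpa using this
  have hb2 : ∑ v ∈ T, (H.neighborSet v).ncard ≤ 3 := by
    rw [hT]
    rw [Finset.sum_insert (by simp [hxy, hxz]), Finset.sum_insert (by simp [hyz]),
      Finset.sum_singleton]
    omega
  have hccard : c.toFinset.card = c.ncard := (Set.ncard_eq_toFinset_card' c).symm
  have hsd : (c.toFinset \ T).card = c.toFinset.card - 3 := by
    rw [Finset.card_sdiff_of_subset hTsub, hTcard]
  have hc3 : 3 ≤ c.toFinset.card := hTcard ▸ Finset.card_le_card hTsub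
  have hlow := reach_ncard_le_edges H w
  rw [← hc] at hlow
  rw [← hR] at hlow
  omega

end Reach

section Switch

set_option maxHeartbeats 1000000 in
private lemma prop_sup (P Q A B : Prop) (h1 : A → ¬B → (P ↔ Q)) (h2 : B → ¬A → (P ↔ Q)) :
    (((P ∧ Q ∧ B) ∨ ((¬P ∨ ¬Q) ∧ A)) ∨ ((P ∧ Q ∧ A) ∨ ((¬P ∨ ¬Q) ∧ B))) ↔ (A ∨ B) := by
  tauto

set_option maxHeartbeats 1000000 in
private lemma prop_inf (P Q A B : Prop) (h1 : A → ¬B → (P ↔ Q)) (h2 : B → ¬A → (P ↔ Q)) :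
    (((P ∧ Q ∧ B) ∨ ((¬P ∨ ¬Q) ∧ A)) ∧ ((P ∧ Q ∧ A) ∨ ((¬P ∨ ¬Q) ∧ B))) ↔ (A ∧ B) := by
  tauto

def symmdiffG (m n : SimpleGraph V) : SimpleGraph V where
  Adj x y := Xor' (m.Adj x y) (n.Adj x y)
  symm := ⟨fun x y h => by
    rcases h with ⟨h1, h2⟩ | ⟨h1, h2⟩
    · exact Or.inl ⟨h1.symm, fun hn => h2 hn.symm⟩
    · exact Or.inr ⟨h1.symm, fun hn => h2 hn.symm⟩⟩
  loopless := ⟨fun x h => by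
    rcases h with ⟨h1, -⟩ | ⟨h1, -⟩
    · exact m.loopless.irrefl x h1
    · exact n.loopless.irrefl x h1⟩

/-- switch a matching to another inside a set `c` -/
def switchG (c : Set V) (inside outside : SimpleGraph V) : SimpleGraph V where
  Adj x y := (x ∈ c ∧ y ∈ c ∧ inside.Adj x y) ∨ ((x ∉ c ∨ y ∉ c) ∧ outside.Adj x y)
  symm := ⟨fun x y h => by
    rcases h with ⟨h1, h2, h3⟩ | ⟨h1, h2⟩
    · exact Or.inl ⟨h2, h1, h3.symm⟩
    · exact Or.inr ⟨h1.symm, h2.symm⟩⟩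
  loopless := ⟨fun x h => by
    rcases h with ⟨-, -, h3⟩ | ⟨-, h2⟩
    · exact inside.loopless.irrefl x h3
    · exact outside.loopless.irrefl x h2⟩

lemma switch_main {G m n : SimpleGraph V} (hm : m ≤ G) (hn : n ≤ G)
    (him : IsMat m) (hin : IsMat n)
    (hmm : mu m = nu' G) (hnn : mu n = nu' G) (w : V) :
    ∃ m', m' ≤ G ∧ IsMat m' ∧ mu m' = nu' G ∧
      (∀ x ∈ reachSet (symmdiffG m n) w, (x ∈ m'.support ↔ x ∈ n.support)) ∧
      (∀ x ∉ reachSet (symmdiffG m n) w, (x ∈ m'.support ↔ x ∈ m.support)) := by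
  classical
  set c := reachSet (symmdiffG m n) w with hcdef
  have hcl : ∀ {x y : V}, Xor' (m.Adj x y) (n.Adj x y) → (x ∈ c ↔ y ∈ c) := by
    intro x y h
    exact reach_closed (show (symmdiffG m n).Adj x y from h)
  set m' := switchG c n m with hm'def
  set n' := switchG c m n with hn'def
  have hm'adj : ∀ {x y : V}, m'.Adj x y ↔
      ((x ∈ c ∧ y ∈ c ∧ n.Adj x y) ∨ ((x ∉ c ∨ y ∉ c) ∧ m.Adj x y)) := Iff.rfl
  have hn'adj : ∀ {x y : V}, n'.Adj x y ↔
      ((x ∈ c ∧ y ∈ c ∧ m.Adj x y) ∨ ((x ∉ c ∨ y ∉ c) ∧ n.Adj x y)) := Iff.rfl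
  -- sup and inf identities
  have hsup : m' ⊔ n' = m ⊔ n := by
    ext x y
    rw [SimpleGraph.sup_adj, SimpleGraph.sup_adj, hm'adj, hn'adj]
    exact prop_sup _ _ _ _ (fun a b => hcl (Or.inl ⟨a, b⟩)) (fun a b => hcl (Or.inr ⟨a, b⟩))
  have hinf : m' ⊓ n' = m ⊓ n := by
    ext x y
    rw [SimpleGraph.inf_adj, SimpleGraph.inf_adj, hm'adj, hn'adj]
    exact prop_inf _ _ _ _ (fun a b => hcl (Or.inl ⟨a, b⟩)) (fun a b => hcl (Or.inr ⟨a, b⟩))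
  have hmusum : mu m' + mu n' = mu m + mu n := by
    have key : ∀ a b : SimpleGraph V, mu a + mu b
        = (a ⊔ b).edgeSet.ncard + (a ⊓ b).edgeSet.ncard := by
      intro a b
      rw [SimpleGraph.edgeSet_sup, SimpleGraph.edgeSet_inf]
      exact (Set.ncard_union_add_ncard_inter _ _ (Set.toFinite _) (Set.toFinite _)).symm
    rw [key m' n', key m n, hsup, hinf]
  -- m' is a matching below G
  have hm'G : m' ≤ G := by
    intro x y h
    rcases hm'adj.1 h with ⟨-, -, h3⟩ | ⟨-, h2⟩
    · exact hn h3
    · exact hm h2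
  have hn'G : n' ≤ G := by
    intro x y h
    rcases hn'adj.1 h with ⟨-, -, h3⟩ | ⟨-, h2⟩
    · exact hm h3
    · exact hn h2
  have hin' : ∀ {v y : V}, v ∈ c → (m'.Adj v y ↔ n.Adj v y) := by
    intro v y hv
    constructor
    · intro h
      rcases hm'adj.1 h with ⟨-, -, h3⟩ | ⟨hor, hA⟩
      · exact h3
      · by_contra hB
        have := hcl (Or.inl ⟨hA, hB⟩)
        rcases hor with h' | h'
        · exact h' hv
        · exact h' (this.1 hv)
    · intro hB
      by_cases hy : y ∈ c
      · exact hm'adj.2 (Or.inl ⟨hv, hy, hB⟩)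
      · by_cases hA : m.Adj v y
        · exact hm'adj.2 (Or.inr ⟨Or.inr hy, hA⟩)
        · exact absurd ((hcl (Or.inr ⟨hB, hA⟩)).1 hv) hy
  have hout' : ∀ {v y : V}, v ∉ c → (m'.Adj v y ↔ m.Adj v y) := by
    intro v y hv
    constructor
    · intro h
      rcases hm'adj.1 h with ⟨h1, -, -⟩ | ⟨-, h2⟩
      · exact absurd h1 hv
      · exact h2
    · intro hA
      exact hm'adj.2 (Or.inr ⟨Or.inl hv, hA⟩)
  have him' : IsMat m' := by
    intro v a ha b hb
    rw [SimpleGraph.mem_neighborSet] at ha hb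
    by_cases hv : v ∈ c
    · exact hin v ((hin' hv).1 ha) ((hin' hv).1 hb)
    · exact him v ((hout' hv).1 ha) ((hout' hv).1 hb)
  have hn'mat : IsMat n' := by
    intro v a ha b hb
    rw [SimpleGraph.mem_neighborSet] at ha hb
    by_cases hv : v ∈ c
    · rcases hn'adj.1 ha with ⟨-, -, h3⟩ | ⟨hor, hA⟩
      all_goals rcases hn'adj.1 hb with ⟨-, -, h3'⟩ | ⟨hor', hA'⟩
      · exact him v h3 h3'
      · -- mixed: a via m inside, b via n outside
        rcases hor' with h' | h'
        · exact absurd hv h'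
        · by_cases hA2 : m.Adj v b
          · exact him v h3 hA2
          · exact absurd ((hcl (Or.inr ⟨hA', hA2⟩)).1 hv) h'
      · rcases hor with h' | h'
        · exact absurd hv h'
        · by_cases hA2 : m.Adj v a
          · exact him v hA2 h3'
          · exact absurd ((hcl (Or.inr ⟨hA, hA2⟩)).1 hv) h'
      · -- both via n outside: v in c though, use closure to get m-adjacency or contradiction
        rcases hor with h' | h'
        · exact absurd hv h'
        · rcases hor' with h'' | h''
          · exact absurd hv h''
          · by_cases hA2 : m.Adj v a
            · by_cases hA3 : m.Adj v b
              · exact him v hA2 hA3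
              · exact absurd ((hcl (Or.inr ⟨hA', hA3⟩)).1 hv) h''
            · exact absurd ((hcl (Or.inr ⟨hA, hA2⟩)).1 hv) h'
    · -- outside: n'.Adj v y ↔ n.Adj v y
      have houtn : ∀ {y : V}, n'.Adj v y → n.Adj v y := by
        intro y h
        rcases hn'adj.1 h with ⟨h1, -, -⟩ | ⟨-, h2⟩
        · exact absurd h1 hv
        · exact h2
      exact hin v (houtn ha) (houtn hb)
  have hmax' : mu m' = nu' G := by
    have h1 := le_nu' hm'G him'
    have h2 := le_nu' hn'G hn'mat
    omega
  refine ⟨m', hm'G, him', hmax', ?_, ?_⟩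
  · intro x hx
    constructor
    · rintro ⟨y, hy⟩
      exact ⟨y, (hin' hx).1 hy⟩
    · rintro ⟨y, hy⟩
      exact ⟨y, (hin' hx).2 hy⟩
  · intro x hx
    constructor
    · rintro ⟨y, hy⟩
      exact ⟨y, (hout' hx).1 hy⟩
    · rintro ⟨y, hy⟩
      exact ⟨y, (hout' hx).2 hy⟩

end Switch

section Gallai

lemma gallai_core {G : SimpleGraph V}
    (hne : ∀ v, ¬ nu' (del G v) < nu' G)
    {c₀ : Set V}
    (hedge : ∀ x y, G.Adj x y → x ∈ c₀ ∧ y ∈ c₀)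
    (hconn : ∀ x ∈ c₀, ∀ y ∈ c₀, G.Reachable x y) :
    ∀ m, m ≤ G → IsMat m → mu m = nu' G →
      ∀ u v, u ∈ c₀ → v ∈ c₀ → u ∉ m.support → v ∉ m.support → u = v := by
  classical
  by_contra hbad
  push_neg at hbad
  obtain ⟨m₀, hm₀, him₀, hmu₀, u₀, v₀, hu₀, hv₀, hmu, hmv, hne₀⟩ := hbad
  set Bad : Set ℕ := {d | ∃ m u v, (m ≤ G ∧ IsMat m ∧ mu m = nu' G) ∧ u ∈ c₀ ∧ v ∈ c₀ ∧
      u ∉ m.support ∧ v ∉ m.support ∧ u ≠ v ∧ G.dist u v = d} with hBad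
  have hBadne : Bad.Nonempty :=
    ⟨_, m₀, u₀, v₀, ⟨hm₀, him₀, hmu₀⟩, hu₀, hv₀, hmu, hmv, hne₀, rfl⟩
  obtain ⟨m, u, v, ⟨hm, him, hmum⟩, hu, hv, hmu', hmv', huv, hd⟩ := Nat.sInf_mem hBadne
  set d := sInf Bad with hddef
  have hmin : ∀ k, k ∈ Bad → d ≤ k := fun k hk => Nat.sInf_le hk
  have hreach : G.Reachable u v := hconn u hu v hv
  have hd1 : 1 ≤ d := by
    have := hreach.pos_dist_of_ne huv
    omega
  rcases eq_or_lt_of_le hd1 with hd1' | hd2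
  · have hadj : G.Adj u v := SimpleGraph.dist_eq_one_iff_adj.1 (by omega)
    exact absurd (no_edge_outside_max hm him hmum hadj hmu') hmv'
  · obtain ⟨P, hP⟩ := hreach.exists_walk_length_eq_dist
    cases P with
    | nil => exact absurd rfl huv
    | cons hadj q =>
      rename_i w
      rw [SimpleGraph.Walk.length_cons] at hP
      have hw : w ∈ c₀ := (hedge u w hadj).2
      have hdwv : G.dist w v ≤ d - 1 := by
        have := G.dist_le q
        omega
      have huw : u ≠ w := hadj.ne
      have hdu : G.dist u w ≤ 1 := by
        have := G.dist_le hadj.toWalk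
        simpa using this
      have hwv : w ≠ v := by
        intro h
        rw [h] at hdu
        omega
      have hwm : w ∈ m.support := by
        by_contra hws
        have hmem : G.dist w v ∈ Bad :=
          ⟨m, w, v, ⟨hm, him, hmum⟩, hw, hv, hws, hmv', hwv, rfl⟩
        have := hmin _ hmem
        omega
      obtain ⟨n, hn, hin, hnn, hwn⟩ := nonessential_max_missing (hne w)
      have hun : u ∈ n.support := by
        by_contra hus
        have hmem : G.dist u w ∈ Bad :=
          ⟨n, u, w, ⟨hn, hin, hnn⟩, hu, hw, hus, hwn, huw, rfl⟩
        have := hmin _ hmem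
        omega
      have hvn : v ∈ n.support := by
        by_contra hvs
        have hmem : G.dist w v ∈ Bad :=
          ⟨n, w, v, ⟨hn, hin, hnn⟩, hw, hv, hwn, hvs, hwv, rfl⟩
        have := hmin _ hmem
        omega
      set H := symmdiffG m n with hH
      have hsubmn : ∀ x, H.neighborSet x ⊆ m.neighborSet x ∪ n.neighborSet x := by
        intro x a ha
        rcases ha with ⟨h1, -⟩ | ⟨h1, -⟩
        · exact Or.inl h1
        · exact Or.inr h1
      have hdeg2 : ∀ x, (H.neighborSet x).ncard ≤ 2 := by
        intro x
        calc (H.neighborSet x).ncard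
            ≤ (m.neighborSet x ∪ n.neighborSet x).ncard :=
              Set.ncard_le_ncard (hsubmn x) (Set.toFinite _)
          _ ≤ (m.neighborSet x).ncard + (n.neighborSet x).ncard := Set.ncard_union_le _ _
          _ ≤ 2 := by
              have := him.nbr_ncard_le_one x
              have := hin.nbr_ncard_le_one x
              omega
      have deg_le_of_missing_n : ∀ x, x ∉ n.support → (H.neighborSet x).ncard ≤ 1 := by
        intro x hx
        have hsub : H.neighborSet x ⊆ m.neighborSet x := by
          intro a ha
          rcases hsubmn x ha with h | h
          · exact h
          · exact absurd ⟨a, h⟩ hx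
        exact le_trans (Set.ncard_le_ncard hsub (Set.toFinite _)) (him.nbr_ncard_le_one x)
      have deg_le_of_missing_m : ∀ x, x ∉ m.support → (H.neighborSet x).ncard ≤ 1 := by
        intro x hx
        have hsub : H.neighborSet x ⊆ n.neighborSet x := by
          intro a ha
          rcases hsubmn x ha with h | h
          · exact absurd ⟨a, h⟩ hx
          · exact h
        exact le_trans (Set.ncard_le_ncard hsub (Set.toFinite _)) (hin.nbr_ncard_le_one x)
      have hkey : u ∉ reachSet H w ∨ v ∉ reachSet H w := by
        by_contra hk
        push_neg at hk
        exact three_leaves_false H w hdeg2 (self_mem_reachSet H w) hk.1 hk.2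
          huw.symm hwv huv (deg_le_of_missing_n w hwn)
          (deg_le_of_missing_m u hmu') (deg_le_of_missing_m v hmv')
      obtain ⟨m', hm'G, him', hmax', hinside, houtside⟩ :=
        switch_main hm hn him hin hmum hnn w
      have hw'm : w ∉ m'.support := fun h =>
        hwn ((hinside w (self_mem_reachSet _ w)).1 h)
      rcases hkey with hk | hk
      · have hu'm : u ∉ m'.support := fun h => hmu' ((houtside u hk).1 h)
        have hmem : G.dist u w ∈ Bad :=
          ⟨m', u, w, ⟨hm'G, him', hmax'⟩, hu, hw, hu'm, hw'm, huw, rfl⟩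
        have := hmin _ hmem
        omega
      · have hv'm : v ∉ m'.support := fun h => hmv' ((houtside v hk).1 h)
        have hmem : G.dist w v ∈ Bad :=
          ⟨m', w, v, ⟨hm'G, him', hmax'⟩, hw, hv, hw'm, hv'm, hwv, rfl⟩
        have := hmin _ hmem
        omega

end Gallai

section Main

/-- The Chvátal–Hanson bound as a function of the matching number -/
def gfun (D n : ℕ) : ℕ := D * n + (D / 2) * (n / ((D + 1) / 2))

lemma gfun_mono (D : ℕ) {a b : ℕ} (h : a ≤ b) : gfun D a ≤ gfun D b :=
  add_le_add (Nat.mul_le_mul_left _ h) (Nat.mul_le_mul_left _ (Nat.div_le_div_right h))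

lemma gfun_superadd (D a b : ℕ) : gfun D a + gfun D b ≤ gfun D (a + b) := by
  unfold gfun
  have hdiv : a / ((D + 1) / 2) + b / ((D + 1) / 2) ≤ (a + b) / ((D + 1) / 2) := by
    rcases Nat.eq_zero_or_pos ((D + 1) / 2) with hs | hs
    · simp [hs]
    · rw [Nat.le_div_iff_mul_le hs, add_mul]
      exact add_le_add (Nat.div_mul_le_self a _) (Nat.div_mul_le_self b _)
  calc D * a + D / 2 * (a / ((D + 1) / 2)) + (D * b + D / 2 * (b / ((D + 1) / 2)))
      = D * (a + b) + D / 2 * (a / ((D + 1) / 2) + b / ((D + 1) / 2)) := by ring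
    _ ≤ D * (a + b) + D / 2 * ((a + b) / ((D + 1) / 2)) := by
        exact Nat.add_le_add_left (Nat.mul_le_mul_left _ hdiv) _

lemma gfun_step (D : ℕ) {n : ℕ} (h : 1 ≤ n) : gfun D (n - 1) + D ≤ gfun D n := by
  unfold gfun
  have h1 : D * (n - 1) + D = D * n := by
    cases n with
    | zero => omega
    | succ k => rw [Nat.succ_sub_one, Nat.mul_succ]
  have h2 : (n - 1) / ((D + 1) / 2) ≤ n / ((D + 1) / 2) :=
    Nat.div_le_div_right (by omega)
  have h3 := Nat.mul_le_mul_left (D / 2) h2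
  omega

theorem main_bound (D : ℕ) (hD : 1 ≤ D) :
    ∀ E : ℕ, ∀ G : SimpleGraph V, G.edgeSet.ncard ≤ E →
      (∀ v, (G.neighborSet v).ncard ≤ D) →
      G.edgeSet.ncard ≤ gfun D (nu' G) := by
  classical
  intro E
  induction E with
  | zero =>
    intro G hE _
    rw [Nat.le_zero.1 hE]
    exact Nat.zero_le _
  | succ E ih =>
    intro G hE hdeg
    by_cases hE0 : G.edgeSet.ncard = 0
    · rw [hE0]; exact Nat.zero_le _
    by_cases hsplit : ∃ x y x' y', G.Adj x y ∧ G.Adj x' y' ∧ ¬ G.Reachable x x'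
    · obtain ⟨x, y, x', y', hxy, hxy', hnr⟩ := hsplit
      set S := reachSet G x with hSdef
      have hScl : ∀ a b, G.Adj a b → (a ∈ S ↔ b ∈ S) := fun a b h => reach_closed h
      have hpart := edge_partition G S hScl
      have h1pos : 1 ≤ (restrict G S).edgeSet.ncard := by
        have hmem : s(x, y) ∈ (restrict G S).edgeSet := by
          rw [SimpleGraph.mem_edgeSet]
          exact ⟨hxy, self_mem_reachSet G x, (hScl x y hxy).1 (self_mem_reachSet G x)⟩
        have := Set.ncard_pos (Set.toFinite ((restrict G S).edgeSet))
        exact this.2 ⟨_, hmem⟩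
      have h2pos : 1 ≤ (restrict G Sᶜ).edgeSet.ncard := by
        have hy' : x' ∉ S ∧ y' ∉ S := by
          constructor
          · exact hnr
          · intro h
            exact hnr (h.trans hxy'.symm.reachable)
        have hmem : s(x', y') ∈ (restrict G Sᶜ).edgeSet := by
          rw [SimpleGraph.mem_edgeSet]
          exact ⟨hxy', hy'.1, hy'.2⟩
        have := Set.ncard_pos (Set.toFinite ((restrict G Sᶜ).edgeSet))
        exact this.2 ⟨_, hmem⟩
      have hdegr : ∀ (T : Set V) (v : V), ((restrict G T).neighborSet v).ncard ≤ D := by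
        intro T v
        refine le_trans (Set.ncard_le_ncard ?_ (Set.toFinite _)) (hdeg v)
        intro a ha
        exact (restrict_le G T) ha
      have hrec1 := ih (restrict G S) (by omega) (hdegr S)
      have hrec2 := ih (restrict G Sᶜ) (by omega) (hdegr Sᶜ)
      have hnuadd := nu'_restrict_add (G := G) (disjoint_compl_right (a := S))
      calc G.edgeSet.ncard
          = (restrict G S).edgeSet.ncard + (restrict G Sᶜ).edgeSet.ncard := hpart
        _ ≤ gfun D (nu' (restrict G S)) + gfun D (nu' (restrict G Sᶜ)) :=
            add_le_add hrec1 hrec2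
        _ ≤ gfun D (nu' (restrict G S) + nu' (restrict G Sᶜ)) := gfun_superadd _ _ _
        _ ≤ gfun D (nu' G) := gfun_mono D hnuadd
    · push_neg at hsplit
      obtain ⟨e₀, he₀⟩ : G.edgeSet.Nonempty := Set.nonempty_of_ncard_ne_zero hE0
      obtain ⟨x₀, y₀, hxy₀⟩ : ∃ a b, G.Adj a b := by
        induction e₀ using Sym2.ind with
        | _ a b => exact ⟨a, b, he₀⟩
      set c₀ := reachSet G x₀ with hc₀def
      have hedge : ∀ a b, G.Adj a b → a ∈ c₀ ∧ b ∈ c₀ := by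
        intro a b h
        have ha : G.Reachable x₀ a := hsplit x₀ y₀ a b hxy₀ h
        exact ⟨ha, ha.trans h.reachable⟩
      have hconn : ∀ a ∈ c₀, ∀ b ∈ c₀, G.Reachable a b :=
        fun a ha b hb => (ha : G.Reachable x₀ a).symm.trans hb
      by_cases hess : ∃ v, nu' (del G v) < nu' G
      · obtain ⟨v, hv⟩ := hess
        have hdegv : 1 ≤ (G.neighborSet v).ncard := by
          by_contra h0
          push_neg at h0
          have hnb : G.neighborSet v = ∅ :=
            (Set.ncard_eq_zero (Set.toFinite _)).1 (by omega)
          have hdeleq : del G v = G := by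
            ext a b
            constructor
            · exact fun h => h.1
            · intro h
              refine ⟨h, ?_, ?_⟩
              · intro hav
                have hb : b ∈ G.neighborSet v := hav ▸ h
                rw [hnb] at hb
                exact hb
              · intro hav
                have hb : a ∈ G.neighborSet v := hav ▸ h.symm
                rw [hnb] at hb
                exact hb
          rw [hdeleq] at hv
          exact lt_irrefl _ hv
        have hlt : (del G v).edgeSet.ncard < G.edgeSet.ncard := by
          obtain ⟨a, ha⟩ := (Set.ncard_pos (Set.toFinite _)).1 hdegv
          refine Set.ncard_lt_ncard ⟨?_, ?_⟩ (Set.toFinite _)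
          · intro e he
            induction e using Sym2.ind with
            | _ p q => exact (del_le G v) he
          · intro hsub
            have : s(v, a) ∈ (del G v).edgeSet := hsub (by rwa [SimpleGraph.mem_edgeSet])
            rw [SimpleGraph.mem_edgeSet] at this
            exact this.2.1 rfl
        have hdegdel : ∀ x, ((del G v).neighborSet x).ncard ≤ D := by
          intro x
          refine le_trans (Set.ncard_le_ncard ?_ (Set.toFinite _)) (hdeg x)
          intro a ha
          exact (del_le G v) ha
        have hrec := ih (del G v) (by omega) hdegdel
        have hν1 : 1 ≤ nu' G := by omega
        calc G.edgeSet.ncard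
            ≤ (del G v).edgeSet.ncard + (G.neighborSet v).ncard := ncard_le_del_add_deg G v
          _ ≤ gfun D (nu' (del G v)) + D := add_le_add hrec (hdeg v)
          _ ≤ gfun D (nu' G - 1) + D := by
              have : nu' (del G v) ≤ nu' G - 1 := by omega
              exact Nat.add_le_add_right (gfun_mono D this) D
          _ ≤ gfun D (nu' G) := gfun_step D hν1
      · have hne : ∀ v, ¬ nu' (del G v) < nu' G := fun v hv => hess ⟨v, hv⟩
        obtain ⟨m, hm, him, hmu⟩ := exists_max G
        have hgal := gallai_core hne hedge hconn m hm him hmu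
        have hc₀card : c₀.ncard ≤ 2 * nu' G + 1 := by
          have hsub : c₀ ⊆ m.support ∪ (c₀ \ m.support) := by
            intro a ha
            by_cases h : a ∈ m.support
            · exact Or.inl h
            · exact Or.inr ⟨ha, h⟩
          have hsing : (c₀ \ m.support).ncard ≤ 1 :=
            (Set.ncard_le_one (Set.toFinite _)).2
              (fun a ha b hb => hgal a b ha.1 hb.1 ha.2 hb.2)
          have hsupp : m.support.ncard = 2 * nu' G := by
            rw [support_ncard him, hmu]
          calc c₀.ncard ≤ (m.support ∪ (c₀ \ m.support)).ncard :=
                Set.ncard_le_ncard hsub (Set.toFinite _)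
            _ ≤ m.support.ncard + (c₀ \ m.support).ncard := Set.ncard_union_le _ _
            _ ≤ 2 * nu' G + 1 := by omega
        have hhs := handshake G
        have hzero : ∀ v, v ∉ c₀ → (G.neighborSet v).ncard = 0 := by
          intro v hv
          have : G.neighborSet v = ∅ := by
            ext a
            simp only [SimpleGraph.mem_neighborSet, Set.mem_empty_iff_false, iff_false]
            exact fun h => hv (hedge v a h).1
          rw [this, Set.ncard_empty]
        have hsum : ∑ v, (G.neighborSet v).ncard
            = ∑ v ∈ c₀.toFinset, (G.neighborSet v).ncard := by
          rw [← Finset.sum_subset (Finset.subset_univ c₀.toFinset)]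
          intro v _ hv
          exact hzero v (fun h => hv (Set.mem_toFinset.2 h))
        have hccard : c₀.toFinset.card = c₀.ncard := (Set.ncard_eq_toFinset_card' c₀).symm
        by_cases hts : c₀.ncard ≤ D
        · -- small component: e ≤ D ν
          have hdeg' : ∀ v ∈ c₀.toFinset, (G.neighborSet v).ncard ≤ c₀.ncard - 1 := by
            intro v hv
            rw [Set.mem_toFinset] at hv
            have hsub : G.neighborSet v ⊆ c₀ \ {v} := by
              intro a ha
              refine ⟨(hedge v a ha).2, ?_⟩
              intro h
              rw [Set.mem_singleton_iff] at h
              exact G.loopless.irrefl v (h ▸ ha)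
            have := Set.ncard_diff_singleton_add_one hv (Set.toFinite _)
            have hle := Set.ncard_le_ncard hsub (Set.toFinite _)
            omega
          have hsumle : ∑ v ∈ c₀.toFinset, (G.neighborSet v).ncard
              ≤ c₀.ncard * (c₀.ncard - 1) := by
            have := Finset.sum_le_card_nsmul c₀.toFinset (fun v => (G.neighborSet v).ncard)
              (c₀.ncard - 1) hdeg'
            rw [hccard] at this
            simpa using this
          have hmul : c₀.ncard * (c₀.ncard - 1) ≤ D * (2 * nu' G) :=
            Nat.mul_le_mul hts (by omega)
          have h2e : 2 * G.edgeSet.ncard ≤ 2 * (D * nu' G) := by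
            have : D * (2 * nu' G) = 2 * (D * nu' G) := by ring
            omega
          have he : G.edgeSet.ncard ≤ D * nu' G :=
            Nat.le_of_mul_le_mul_left h2e (by norm_num)
          exact le_trans he (Nat.le_add_right _ _)
        · -- big component: e ≤ D ν + D/2 and ν ≥ ⌈D/2⌉
          have hsumle : ∑ v ∈ c₀.toFinset, (G.neighborSet v).ncard ≤ c₀.ncard * D := by
            have := Finset.sum_le_card_nsmul c₀.toFinset (fun v => (G.neighborSet v).ncard)
              D (fun v _ => hdeg v)
            rw [hccard] at this
            simpa using this
          have hmul : c₀.ncard * D ≤ (2 * nu' G + 1) * D :=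
            Nat.mul_le_mul_right D hc₀card
          have h2e : 2 * G.edgeSet.ncard ≤ 2 * (D * nu' G) + D := by
            have hh : (2 * nu' G + 1) * D = 2 * (D * nu' G) + D := by ring
            omega
          have hν : (D + 1) / 2 ≤ nu' G := by omega
          have hdivpos : 0 < (D + 1) / 2 := by omega
          have hone : 1 ≤ nu' G / ((D + 1) / 2) := (Nat.one_le_div_iff hdivpos).2 hν
          have hgoal : G.edgeSet.ncard ≤ D * nu' G + D / 2 := by omega
          calc G.edgeSet.ncard ≤ D * nu' G + D / 2 := hgoal
            _ ≤ D * nu' G + D / 2 * (nu' G / ((D + 1) / 2)) := by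
                have := Nat.mul_le_mul_left (D / 2) hone
                omega
            _ = gfun D (nu' G) := rfl

end Main

section Transfer

variable {W : Type*} [Fintype W]

lemma comap_edgeSet_image (e : W ≃ V) (G : SimpleGraph V) :
    Sym2.map e '' (G.comap (e : W → V)).edgeSet = G.edgeSet := by
  ext f
  constructor
  · rintro ⟨f', hf', rfl⟩
    induction f' using Sym2.ind with
    | _ x y =>
      rw [Sym2.map_pair_eq, SimpleGraph.mem_edgeSet]
      exact hf'
  · intro hf
    induction f using Sym2.ind with
    | _ a b =>
      refine ⟨s(e.symm a, e.symm b), ?_, ?_⟩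
      · rw [SimpleGraph.mem_edgeSet, SimpleGraph.comap_adj]
        simpa using hf
      · rw [Sym2.map_pair_eq]
        simp
    
lemma comap_edge_ncard (e : W ≃ V) (G : SimpleGraph V) :
    (G.comap (e : W → V)).edgeSet.ncard = G.edgeSet.ncard := by
  rw [← comap_edgeSet_image e G]
  exact (Set.ncard_image_of_injective _ (Sym2.map.injective e.injective)).symm

lemma comap_nbr_ncard (e : W ≃ V) (G : SimpleGraph V) (x : W) :
    ((G.comap (e : W → V)).neighborSet x).ncard = (G.neighborSet (e x)).ncard := by
  have himg : (G.comap (e : W → V)).neighborSet x = e.symm '' (G.neighborSet (e x)) := by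
    ext a
    simp only [SimpleGraph.mem_neighborSet, SimpleGraph.comap_adj, Set.mem_image]
    constructor
    · intro h
      exact ⟨e a, h, by simp⟩
    · rintro ⟨b, hb, rfl⟩
      simpa using hb
  rw [himg]
  exact Set.ncard_image_of_injective _ e.symm.injective

lemma nu'_comap_le (e : W ≃ V) (G : SimpleGraph V) :
    nu' (G.comap (e : W → V)) ≤ nu' G := by
  refine nu'_le fun m hm him => ?_
  set m' : SimpleGraph V := m.comap (e.symm : V → W) with hm'def
  have hle : m' ≤ G := by
    intro a b h
    have := hm h
    rw [SimpleGraph.comap_adj] at this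
    simpa using this
  have hmat : IsMat m' := by
    intro v a ha b hb
    rw [SimpleGraph.mem_neighborSet] at ha hb
    have := him (e.symm v) ha hb
    exact e.symm.injective this
  have hmu : mu m' = mu m := comap_edge_ncard e.symm m
  rw [← hmu]
  exact le_nu' hle hmat

lemma nu'_comap (e : W ≃ V) (G : SimpleGraph V) :
    nu' (G.comap (e : W → V)) = nu' G := by
  refine le_antisymm (nu'_comap_le e G) ?_
  have h2 := nu'_comap_le e.symm (G.comap (e : W → V))
  have heq : (G.comap (e : W → V)).comap (e.symm : V → W) = G := by
    ext a b
    rw [SimpleGraph.comap_adj, SimpleGraph.comap_adj]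
    simp
  rwa [heq] at h2

end Transfer

section Blocks

variable {M P : ℕ}

/-- disjoint union of the `B a` along the first coordinate -/
def prodG (B : Fin M → SimpleGraph (Fin P)) : SimpleGraph (Fin M × Fin P) where
  Adj x y := x.1 = y.1 ∧ (B x.1).Adj x.2 y.2
  symm := by
    constructor
    rintro ⟨a, p⟩ ⟨b, q⟩ ⟨h1, h2⟩
    dsimp only at h1 h2 ⊢
    subst h1
    exact ⟨rfl, h2.symm⟩
  loopless := by
    constructor
    rintro ⟨a, p⟩ ⟨-, h⟩
    exact (B a).loopless.irrefl p h

lemma prodG_adj {B : Fin M → SimpleGraph (Fin P)} {a b : Fin M} {p q : Fin P} :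
    (prodG B).Adj (a, p) (b, q) ↔ a = b ∧ (B a).Adj p q := Iff.rfl

lemma prodG_nbr_ncard (B : Fin M → SimpleGraph (Fin P)) (a : Fin M) (p : Fin P) :
    ((prodG B).neighborSet (a, p)).ncard = ((B a).neighborSet p).ncard := by
  have himg : (prodG B).neighborSet (a, p) = (fun q => (a, q)) '' ((B a).neighborSet p) := by
    ext ⟨b, q⟩
    simp only [SimpleGraph.mem_neighborSet, Set.mem_image]
    constructor
    · rintro ⟨h1, h2⟩
      dsimp only at h1 h2
      exact ⟨q, h2, by rw [h1]⟩
    · rintro ⟨q', hq', heq⟩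
      obtain ⟨h1, h2⟩ := Prod.mk.injEq _ _ _ _ ▸ heq
      subst h1
      subst h2
      exact ⟨rfl, hq'⟩
  rw [himg]
  exact Set.ncard_image_of_injective _ (fun x y h => (Prod.ext_iff.1 h).2)

lemma prodG_edge_ncard (B : Fin M → SimpleGraph (Fin P)) :
    2 * (prodG B).edgeSet.ncard = ∑ a, ∑ p, ((B a).neighborSet p).ncard := by
  rw [← handshake (prodG B), Fintype.sum_prod_type]
  refine Finset.sum_congr rfl fun a _ => Finset.sum_congr rfl fun p _ => ?_
  exact prodG_nbr_ncard B a p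

lemma nu'_prodG_le (B : Fin M → SimpleGraph (Fin P)) :
    nu' (prodG B) ≤ ∑ a, nu' (B a) := by
  classical
  refine nu'_le fun m hm him => ?_
  set ma : Fin M → SimpleGraph (Fin P) := fun a =>
    { Adj := fun p q => m.Adj (a, p) (a, q)
      symm := ⟨fun p q h => h.symm⟩
      loopless := ⟨fun p h => m.loopless.irrefl _ h⟩ } with hmadef
  have hle : ∀ a, ma a ≤ B a := by
    intro a p q h
    exact ((hm h).2 : (B a).Adj p q)
  have hmat : ∀ a, IsMat (ma a) := by
    intro a p x hx y hy
    have := him (a, p) hx hy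
    exact (Prod.ext_iff.1 this).2
  -- counting
  set F : Sym2 (Fin M × Fin P) → Fin M :=
    Sym2.lift ⟨fun x y => min x.1 y.1, fun x y => min_comm _ _⟩ with hFdef
  have hF : ∀ (x y : Fin M × Fin P), F s(x, y) = min x.1 y.1 := fun x y => rfl
  have hmucard : ∀ (X : SimpleGraph (Fin M × Fin P)) [Fintype X.edgeSet],
      mu X = X.edgeFinset.card := by
    intro X _
    rw [mu, Set.ncard_eq_toFinset_card', SimpleGraph.edgeFinset]
  have hmucard' : ∀ (X : SimpleGraph (Fin P)) [Fintype X.edgeSet],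
      mu X = X.edgeFinset.card := by
    intro X _
    rw [mu, Set.ncard_eq_toFinset_card', SimpleGraph.edgeFinset]
  have hfib : m.edgeFinset.card = ∑ a, (m.edgeFinset.filter (fun f => F f = a)).card :=
    Finset.card_eq_sum_card_fiberwise (fun x _ => Finset.mem_univ _)
  have hfiber : ∀ a, (m.edgeFinset.filter (fun f => F f = a))
      = (ma a).edgeFinset.image (Sym2.map (fun q => (a, q))) := by
    intro a
    ext f
    induction f using Sym2.ind with
    | _ x y =>
      simp only [Finset.mem_filter, Finset.mem_image, SimpleGraph.mem_edgeFinset,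
        SimpleGraph.mem_edgeSet]
      constructor
      · rintro ⟨hf, hFa⟩
        have hblock : x.1 = y.1 := (hm hf).1
        rw [hF x y, hblock, min_self] at hFa
        refine ⟨s(x.2, y.2), ?_, ?_⟩
        · show m.Adj (a, x.2) (a, y.2)
          have hx : (a, x.2) = x := by
            rw [← hFa, ← hblock]
          have hy : (a, y.2) = y := by
            rw [← hFa]
          rw [hx, hy]
          exact hf
        · rw [Sym2.map_pair_eq]
          have hx : (a, x.2) = x := by rw [← hFa, ← hblock]
          have hy : (a, y.2) = y := by rw [← hFa]
          rw [hx, hy]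
      · rintro ⟨g, hg, hgeq⟩
        induction g using Sym2.ind with
        | _ p q =>
          rw [Sym2.map_pair_eq] at hgeq
          rw [Sym2.eq_iff] at hgeq
          have hadj : m.Adj (a, p) (a, q) := hg
          constructor
          · rcases hgeq with ⟨h1, h2⟩ | ⟨h1, h2⟩
            · rw [← h1, ← h2]; exact hadj
            · rw [← h1, ← h2]; exact hadj.symm
          · rcases hgeq with ⟨h1, h2⟩ | ⟨h1, h2⟩ <;>
              rw [hF x y, ← h1, ← h2] <;> simp
  have himg : ∀ a, ((ma a).edgeFinset.image (Sym2.map (fun q => (a, q)))).card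
      = (ma a).edgeFinset.card := fun a =>
    Finset.card_image_of_injective _ (Sym2.map.injective (fun x y h => (Prod.ext_iff.1 h).2))
  have hmusum : mu m = ∑ a, mu (ma a) := by
    rw [hmucard m, hfib]
    refine Finset.sum_congr rfl fun a _ => ?_
    rw [hfiber a, himg a, hmucard' (ma a)]
  rw [hmusum]
  exact Finset.sum_le_sum fun a _ => le_nu' (hle a) (hmat a)

end Blocks

section SpecificBlocks

/-- ncard of complement in a fintype -/
lemma ncard_compl_eq {α : Type*} [Fintype α] (S : Set α) :
    Sᶜ.ncard = Fintype.card α - S.ncard := by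
  rw [Set.compl_eq_univ_diff, Set.ncard_diff (Set.subset_univ S) (Set.toFinite _),
    Set.ncard_univ, Nat.card_eq_fintype_card]

lemma top_nbr_ncard {α : Type*} [Fintype α] (v : α) :
    ((⊤ : SimpleGraph α).neighborSet v).ncard = Fintype.card α - 1 := by
  have h : (⊤ : SimpleGraph α).neighborSet v = ({v} : Set α)ᶜ := by
    ext a
    simp only [SimpleGraph.mem_neighborSet, SimpleGraph.top_adj, Set.mem_compl_iff,
      Set.mem_singleton_iff]
    exact ne_comm
  rw [h, ncard_compl_eq, Set.ncard_singleton]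

/-- the near-(k-1)-regular graph on k+1 vertices (k even):
complete graph minus a near-perfect matching minus one extra edge at 0 -/
def blk0 (k : ℕ) : SimpleGraph (Fin (k + 1)) where
  Adj p q := ¬(p.val / 2 = q.val / 2) ∧ ¬(p.val = 0 ∧ q.val = k) ∧ ¬(p.val = k ∧ q.val = 0)
  symm := by
    constructor
    rintro p q ⟨h1, h2, h3⟩
    exact ⟨fun h => h1 h.symm, fun h => h3 ⟨h.2, h.1⟩, fun h => h2 ⟨h.2, h.1⟩⟩
  loopless := ⟨fun p h => h.1 rfl⟩

/-- the star `K_{1,k-1}` on k+1 vertices (vertex k isolated) -/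
def starG (k : ℕ) : SimpleGraph (Fin (k + 1)) where
  Adj p q := (p.val = 0 ∧ q.val ≠ 0 ∧ q.val ≠ k) ∨ (q.val = 0 ∧ p.val ≠ 0 ∧ p.val ≠ k)
  symm := by
    constructor
    rintro p q (h | h)
    · exact Or.inr h
    · exact Or.inl h
  loopless := by
    constructor
    rintro p (⟨h1, h2, -⟩ | ⟨h1, h2, -⟩) <;> exact h2 h1

lemma blk0_nbr_ncard {k : ℕ} (hk2 : 2 ≤ k) (hke : k % 2 = 0) (v : Fin (k + 1)) :
    ((blk0 k).neighborSet v).ncard = if v.val = 0 then k - 2 else k - 1 := by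
  have hvlt : v.val < k + 1 := v.2
  have hnbr : (blk0 k).neighborSet v =
      ({q : Fin (k + 1) | q.val / 2 = v.val / 2 ∨ (v.val = 0 ∧ q.val = k) ∨
        (v.val = k ∧ q.val = 0)})ᶜ := by
    ext q
    simp only [SimpleGraph.mem_neighborSet, Set.mem_compl_iff, Set.mem_setOf_eq]
    show (¬(v.val / 2 = q.val / 2) ∧ ¬(v.val = 0 ∧ q.val = k) ∧ ¬(v.val = k ∧ q.val = 0)) ↔ _
    constructor
    · rintro ⟨h1, h2, h3⟩ (h | h | h)
      · exact h1 h.symm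
      · exact h2 h
      · exact h3 h
    · intro h
      refine ⟨fun h1 => h (Or.inl h1.symm), fun h2 => h (Or.inr (Or.inl h2)),
        fun h3 => h (Or.inr (Or.inr h3))⟩
  rw [hnbr, ncard_compl_eq, Fintype.card_fin]
  by_cases hv0 : v.val = 0
  · rw [if_pos hv0]
    have hset : {q : Fin (k + 1) | q.val / 2 = v.val / 2 ∨ (v.val = 0 ∧ q.val = k) ∨
        (v.val = k ∧ q.val = 0)} =
        {(⟨0, by omega⟩ : Fin (k + 1)), ⟨1, by omega⟩, ⟨k, by omega⟩} := by
      ext q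
      have hq : q.val < k + 1 := q.2
      simp only [Set.mem_setOf_eq, Set.mem_insert_iff, Set.mem_singleton_iff, Fin.ext_iff]
      omega
    rw [hset]
    have h3 : ({(⟨0, by omega⟩ : Fin (k + 1)), ⟨1, by omega⟩, ⟨k, by omega⟩} :
        Set (Fin (k + 1))).ncard = 3 := by
      rw [Set.ncard_insert_of_notMem (by
        simp only [Set.mem_insert_iff, Set.mem_singleton_iff, Fin.ext_iff]
        omega) (Set.toFinite _), Set.ncard_pair (by
        simp only [ne_eq, Fin.ext_iff]
        omega)]
    omega
  · rw [if_neg hv0]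
    by_cases hvk : v.val = k
    · have hset : {q : Fin (k + 1) | q.val / 2 = v.val / 2 ∨ (v.val = 0 ∧ q.val = k) ∨
          (v.val = k ∧ q.val = 0)} =
          {(⟨k, by omega⟩ : Fin (k + 1)), ⟨0, by omega⟩} := by
        ext q
        have hq : q.val < k + 1 := q.2
        simp only [Set.mem_setOf_eq, Set.mem_insert_iff, Set.mem_singleton_iff, Fin.ext_iff]
        omega
      rw [hset, Set.ncard_pair (by simp only [ne_eq, Fin.ext_iff]; omega)]
      omega
    · have hset : {q : Fin (k + 1) | q.val / 2 = v.val / 2 ∨ (v.val = 0 ∧ q.val = k) ∨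
          (v.val = k ∧ q.val = 0)} =
          {(⟨2 * (v.val / 2), by omega⟩ : Fin (k + 1)), ⟨2 * (v.val / 2) + 1, by omega⟩} := by
        ext q
        have hq : q.val < k + 1 := q.2
        simp only [Set.mem_setOf_eq, Set.mem_insert_iff, Set.mem_singleton_iff, Fin.ext_iff]
        omega
      rw [hset, Set.ncard_pair (by simp only [ne_eq, Fin.ext_iff]; omega)]
      omega

lemma starG_nbr_ncard {k : ℕ} (hk2 : 2 ≤ k) (v : Fin (k + 1)) :
    ((starG k).neighborSet v).ncard =
      if v.val = 0 then k - 1 else if v.val = k then 0 else 1 := by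
  have hvlt : v.val < k + 1 := v.2
  by_cases hv0 : v.val = 0
  · rw [if_pos hv0]
    have hnbr : (starG k).neighborSet v =
        ({(⟨0, by omega⟩ : Fin (k + 1)), ⟨k, by omega⟩} : Set (Fin (k + 1)))ᶜ := by
      ext q
      have hq : q.val < k + 1 := q.2
      show ((v.val = 0 ∧ q.val ≠ 0 ∧ q.val ≠ k) ∨ (q.val = 0 ∧ v.val ≠ 0 ∧ v.val ≠ k)) ↔ _
      simp only [Set.mem_compl_iff, Set.mem_insert_iff, Set.mem_singleton_iff, Fin.ext_iff]
      omega
    rw [hnbr, ncard_compl_eq, Fintype.card_fin,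
      Set.ncard_pair (by simp only [ne_eq, Fin.ext_iff]; omega)]
    omega
  · rw [if_neg hv0]
    by_cases hvk : v.val = k
    · rw [if_pos hvk]
      have hnbr : (starG k).neighborSet v = ∅ := by
        ext q
        have hq : q.val < k + 1 := q.2
        show ((v.val = 0 ∧ q.val ≠ 0 ∧ q.val ≠ k) ∨ (q.val = 0 ∧ v.val ≠ 0 ∧ v.val ≠ k)) ↔ _
        simp only [Set.mem_empty_iff_false, iff_false]
        omega
      rw [hnbr, Set.ncard_empty]
    · rw [if_neg hvk]
      have hnbr : (starG k).neighborSet v = {(⟨0, by omega⟩ : Fin (k + 1))} := by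
        ext q
        have hq : q.val < k + 1 := q.2
        show ((v.val = 0 ∧ q.val ≠ 0 ∧ q.val ≠ k) ∨ (q.val = 0 ∧ v.val ≠ 0 ∧ v.val ≠ k)) ↔ _
        simp only [Set.mem_singleton_iff, Fin.ext_iff]
        omega
      rw [hnbr, Set.ncard_singleton]

lemma nu'_starG_le_one {k : ℕ} (hk2 : 2 ≤ k) : nu' (starG k) ≤ 1 := by
  refine nu'_le fun m hm him => ?_
  set z : Fin (k + 1) := ⟨0, by omega⟩ with hz
  have hsub : m.edgeSet ⊆ (fun y => s(z, y)) '' (m.neighborSet z) := by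
    intro e he
    induction e using Sym2.ind with
    | _ p q =>
      rw [SimpleGraph.mem_edgeSet] at he
      rcases hm he with h | h
      · have hp : p = z := Fin.ext h.1
        exact ⟨q, by rw [← hp]; exact he, by rw [hp]⟩
      · have hq : q = z := Fin.ext h.1
        exact ⟨p, by rw [← hq]; exact he.symm, by rw [hq, Sym2.eq_swap]⟩
  calc mu m ≤ ((fun y => s(z, y)) '' (m.neighborSet z)).ncard :=
        Set.ncard_le_ncard hsub (Set.toFinite _)
    _ ≤ (m.neighborSet z).ncard := Set.ncard_image_le (Set.toFinite _)
    _ ≤ 1 := him.nbr_ncard_le_one z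

end SpecificBlocks

section Constructions

lemma odd_construction {k : ℕ} (hk : 1 ≤ k) (hodd : Odd k) :
    ∃ (n : ℕ) (G : SimpleGraph (Fin n)),
      nu G ≤ k - 1 ∧ (∀ v, (G.neighborSet v).ncard ≤ k - 1) ∧
      k * (k - 1) = G.edgeSet.ncard := by
  classical
  set B : Fin 2 → SimpleGraph (Fin k) := fun _ => ⊤ with hB
  set e : Fin (2 * k) ≃ Fin 2 × Fin k := finProdFinEquiv.symm with he
  refine ⟨2 * k, (prodG B).comap (e : Fin (2 * k) → Fin 2 × Fin k), ?_, ?_, ?_⟩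
  · rw [nu_eq_nu', nu'_comap]
    refine le_trans (nu'_prodG_le B) ?_
    have hb : ∀ a : Fin 2, nu' (B a) ≤ k / 2 := by
      intro a
      have := nu'_le_half (B a)
      rwa [Fintype.card_fin] at this
    calc ∑ a, nu' (B a) ≤ ∑ _a : Fin 2, k / 2 := Finset.sum_le_sum fun a _ => hb a
      _ = 2 * (k / 2) := by
          rw [Finset.sum_const, Finset.card_univ, Fintype.card_fin, smul_eq_mul]
      _ ≤ k - 1 := by obtain ⟨s, rfl⟩ := hodd; omega
  · intro v
    rw [comap_nbr_ncard]
    rcases hev : e v with ⟨a, p⟩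
    rw [prodG_nbr_ncard]
    have := top_nbr_ncard (α := Fin k) p
    rw [Fintype.card_fin] at this
    exact le_of_eq this
  · rw [comap_edge_ncard]
    have h2 := prodG_edge_ncard B
    have hval : ∀ (a : Fin 2) (p : Fin k), ((B a).neighborSet p).ncard = k - 1 := by
      intro a p
      have := top_nbr_ncard (α := Fin k) p
      rwa [Fintype.card_fin] at this
    have hSS : ∑ a : Fin 2, ∑ p : Fin k, ((B a).neighborSet p).ncard = 2 * (k * (k - 1)) := by
      calc ∑ a : Fin 2, ∑ p : Fin k, ((B a).neighborSet p).ncard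
          = ∑ _a : Fin 2, ∑ _p : Fin k, (k - 1) :=
            Finset.sum_congr rfl fun a _ => Finset.sum_congr rfl fun p _ => hval a p
        _ = 2 * (k * (k - 1)) := by
            simp only [Finset.sum_const, Finset.card_univ, Fintype.card_fin, smul_eq_mul]
    rw [hSS] at h2
    set K := k * (k - 1)
    omega

lemma even_construction {k : ℕ} (hk2 : 2 ≤ k) (hke : k % 2 = 0) :
    ∃ (n : ℕ) (G : SimpleGraph (Fin n)),
      nu G ≤ k - 1 ∧ (∀ v, (G.neighborSet v).ncard ≤ k - 1) ∧
      k * (2 * k - 3) / 2 = G.edgeSet.ncard := by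
  classical
  have hk2pos : 1 ≤ k / 2 := by omega
  set B : Fin (k / 2) → SimpleGraph (Fin (k + 1)) :=
    fun a => if a.val = 0 then blk0 k else starG k with hB
  set e : Fin (k / 2 * (k + 1)) ≃ Fin (k / 2) × Fin (k + 1) := finProdFinEquiv.symm with he
  set z : Fin (k / 2) := ⟨0, by omega⟩ with hz
  refine ⟨k / 2 * (k + 1), (prodG B).comap (e : _ → _), ?_, ?_, ?_⟩
  · rw [nu_eq_nu', nu'_comap]
    refine le_trans (nu'_prodG_le B) ?_
    rw [← Finset.add_sum_erase _ _ (Finset.mem_univ z)]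
    have h1 : nu' (B z) ≤ (k + 1) / 2 := by
      have := nu'_le_half (B z)
      rwa [Fintype.card_fin] at this
    have h2 : ∑ a ∈ Finset.univ.erase z, nu' (B a) ≤ (k / 2 - 1) * 1 := by
      refine le_trans (Finset.sum_le_card_nsmul _ _ 1 ?_) ?_
      · intro a ha
        have hane : a ≠ z := (Finset.mem_erase.1 ha).1
        have hav : a.val ≠ 0 := fun h => hane (Fin.ext h)
        have hBa : B a = starG k := by rw [hB]; simp [hav]
        rw [hBa]
        exact nu'_starG_le_one hk2
      · rw [Finset.card_erase_of_mem (Finset.mem_univ z), Finset.card_univ,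
          Fintype.card_fin, smul_eq_mul]
    omega
  · intro v
    rw [comap_nbr_ncard]
    rcases hev : e v with ⟨a, p⟩
    rw [prodG_nbr_ncard]
    by_cases ha : a.val = 0
    · have hBa : B a = blk0 k := by rw [hB]; simp [ha]
      rw [hBa, blk0_nbr_ncard hk2 hke]
      split <;> omega
    · have hBa : B a = starG k := by rw [hB]; simp [ha]
      rw [hBa, starG_nbr_ncard hk2]
      split
      · omega
      · split <;> omega
  · rw [comap_edge_ncard]
    have h2 := prodG_edge_ncard B
    -- per-block degree sums
    set z0 : Fin (k + 1) := ⟨0, by omega⟩ with hz0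
    set zk : Fin (k + 1) := ⟨k, by omega⟩ with hzk
    have hsb : ∑ p : Fin (k + 1), ((blk0 k).neighborSet p).ncard = (k - 2) + k * (k - 1) := by
      rw [← Finset.add_sum_erase _ _ (Finset.mem_univ z0)]
      have hz0v : ((blk0 k).neighborSet z0).ncard = k - 2 := by
        rw [blk0_nbr_ncard hk2 hke z0, if_pos rfl]
      have hrest : ∑ p ∈ Finset.univ.erase z0, ((blk0 k).neighborSet p).ncard
          = ∑ _p ∈ Finset.univ.erase z0, (k - 1) := by
        refine Finset.sum_congr rfl fun p hp => ?_
        have hpne : p ≠ z0 := (Finset.mem_erase.1 hp).1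
        rw [blk0_nbr_ncard hk2 hke p, if_neg (fun h => hpne (Fin.ext h))]
      rw [hz0v, hrest, Finset.sum_const, Finset.card_erase_of_mem (Finset.mem_univ z0),
        Finset.card_univ, Fintype.card_fin, smul_eq_mul, Nat.add_sub_cancel]
    have hss : ∑ p : Fin (k + 1), ((starG k).neighborSet p).ncard = 2 * k - 2 := by
      have hne : zk ≠ z0 := by
        rw [hzk, hz0]
        simp only [ne_eq, Fin.ext_iff]
        omega
      rw [← Finset.add_sum_erase _ _ (Finset.mem_univ z0),
        ← Finset.add_sum_erase _ _ (Finset.mem_erase.2 ⟨hne, Finset.mem_univ zk⟩)]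
      have hv0 : ((starG k).neighborSet z0).ncard = k - 1 := by
        rw [starG_nbr_ncard hk2 z0, if_pos rfl]
      have hvk : ((starG k).neighborSet zk).ncard = 0 := by
        rw [starG_nbr_ncard hk2 zk, if_neg (by rw [hzk]; simp; omega), if_pos rfl]
      have hrest : ∑ p ∈ (Finset.univ.erase z0).erase zk, ((starG k).neighborSet p).ncard
          = ∑ _p ∈ (Finset.univ.erase z0).erase zk, 1 := by
        refine Finset.sum_congr rfl fun p hp => ?_
        obtain ⟨hp1, hp2⟩ := Finset.mem_erase.1 hp
        have hp3 : p ≠ z0 := (Finset.mem_erase.1 hp2).1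
        rw [starG_nbr_ncard hk2 p, if_neg (fun h => hp3 (Fin.ext h)),
          if_neg (fun h => hp1 (Fin.ext h))]
      rw [hv0, hvk, hrest, Finset.sum_const, smul_eq_mul,
        Finset.card_erase_of_mem (Finset.mem_erase.2 ⟨hne, Finset.mem_univ zk⟩),
        Finset.card_erase_of_mem (Finset.mem_univ z0), Finset.card_univ, Fintype.card_fin]
      omega
    have hSS : ∑ a : Fin (k / 2), ∑ p : Fin (k + 1), ((B a).neighborSet p).ncard
        = ((k - 2) + k * (k - 1)) + (k / 2 - 1) * (2 * k - 2) := by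
      rw [← Finset.add_sum_erase _ _ (Finset.mem_univ z)]
      have hz' : B z = blk0 k := by rw [hB]; simp [hz]
      have hrest : ∑ a ∈ Finset.univ.erase z, ∑ p : Fin (k + 1), ((B a).neighborSet p).ncard
          = ∑ _a ∈ Finset.univ.erase z, (2 * k - 2) := by
        refine Finset.sum_congr rfl fun a ha => ?_
        have hane : a ≠ z := (Finset.mem_erase.1 ha).1
        have hav : a.val ≠ 0 := fun h => hane (Fin.ext h)
        have hBa : B a = starG k := by
          rw [hB]
          simp [hav]
        rw [hBa, hss]
      rw [hz', hsb, hrest, Finset.sum_const, smul_eq_mul,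
        Finset.card_erase_of_mem (Finset.mem_univ z), Finset.card_univ, Fintype.card_fin]
    rw [hSS] at h2
    -- arithmetic: total = k * (2k - 3)
    obtain ⟨t, rfl⟩ : ∃ t, k = 2 * t + 2 := ⟨(k - 2) / 2, by omega⟩
    have e1 : 2 * t + 2 - 2 = 2 * t := by omega
    have e2 : 2 * t + 2 - 1 = 2 * t + 1 := by omega
    have e3 : (2 * t + 2) / 2 - 1 = t := by omega
    have e4 : 2 * (2 * t + 2) - 2 = 4 * t + 2 := by omega
    have e5 : 2 * (2 * t + 2) - 3 = 4 * t + 1 := by omega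
    rw [e1, e2, e3, e4] at h2
    rw [e5]
    have e6 : 2 * t + (2 * t + 2) * (2 * t + 1) + t * (4 * t + 2)
        = 2 * ((t + 1) * (4 * t + 1)) := by ring
    have e7 : (2 * t + 2) * (4 * t + 1) = 2 * ((t + 1) * (4 * t + 1)) := by ring
    rw [e6] at h2
    rw [e7, Nat.mul_div_cancel_left _ (by norm_num : 0 < 2)]
    omega

end Constructions

section Final

lemma gfun_value_odd {k : ℕ} (hk : 1 ≤ k) (hodd : Odd k) :
    gfun (k - 1) (k - 1) = k * (k - 1) := by
  obtain ⟨s, rfl⟩ := hodd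
  unfold gfun
  have h1 : 2 * s + 1 - 1 = 2 * s := by omega
  rw [h1]
  rcases Nat.eq_zero_or_pos s with rfl | hs
  · simp
  · have h2 : (2 * s + 1) / 2 = s := by omega
    have h3 : 2 * s / 2 = s := by omega
    have h4 : 2 * s / s = 2 := Nat.mul_div_cancel 2 hs
    rw [h2, h3, h4]
    ring

lemma gfun_value_even {k : ℕ} (hk2 : 2 ≤ k) (hke : k % 2 = 0) :
    gfun (k - 1) (k - 1) = k * (2 * k - 3) / 2 := by
  obtain ⟨t, rfl⟩ : ∃ t, k = 2 * t + 2 := ⟨(k - 2) / 2, by omega⟩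
  unfold gfun
  have h1 : 2 * t + 2 - 1 = 2 * t + 1 := by omega
  have h2 : (2 * t + 1) / 2 = t := by omega
  have h3 : (2 * t + 1 + 1) / 2 = t + 1 := by omega
  have h4 : (2 * t + 1) / (t + 1) = 1 := Nat.div_eq_of_lt_le (by omega) (by omega)
  have h5 : 2 * (2 * t + 2) - 3 = 4 * t + 1 := by omega
  rw [h1, h2, h3, h4, h5]
  have h6 : (2 * t + 2) * (4 * t + 1) = 2 * ((2 * t + 1) * (2 * t + 1) + t * 1) := by ring
  rw [h6, Nat.mul_div_cancel_left _ (by norm_num : 0 < 2)]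

lemma upper_bound {k n : ℕ} (hk2 : 2 ≤ k) (G : SimpleGraph (Fin n))
    (hnu : nu G ≤ k - 1) (hdeg : ∀ v, (G.neighborSet v).ncard ≤ k - 1) :
    G.edgeSet.ncard ≤ gfun (k - 1) (k - 1) := by
  have hmb := main_bound (V := Fin n) (k - 1) (by omega) (G.edgeSet.ncard) G le_rfl hdeg
  refine le_trans hmb (gfun_mono _ ?_)
  rw [← nu_eq_nu']
  exact hnu

end Final

end CH

/-- `f(k-1,k-1)`: the maximum number of edges of a graph with matching number at most
`k-1` and maximum degree at most `k-1` equals `k(k-1)` for odd `k` and `k(2k-3)/2`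
for even `k`. -/
theorem f_k_minus_one (k : ℕ) (hk : 1 ≤ k) :
    IsGreatest {m : ℕ | ∃ (n : ℕ) (G : SimpleGraph (Fin n)),
        nu G ≤ k - 1 ∧ (∀ v, (G.neighborSet v).ncard ≤ k - 1) ∧ m = G.edgeSet.ncard}
      (if Odd k then k * (k - 1) else k * (2 * k - 3) / 2) := by
  classical
  constructor
  · by_cases hodd : Odd k
    · rw [if_pos hodd]
      exact CH.odd_construction hk hodd
    · rw [if_neg hodd]
      have hke : k % 2 = 0 := by
        rcases Nat.even_or_odd k with he | ho
        · exact Nat.even_iff.1 he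
        · exact absurd ho hodd
      have hk2 : 2 ≤ k := by omega
      exact CH.even_construction hk2 hke
  · rintro m ⟨n, G, hnu, hdeg, rfl⟩
    by_cases hk1 : k = 1
    · subst hk1
      have hhs := CH.handshake G
      have hz : ∑ v, (G.neighborSet v).ncard = 0 :=
        Finset.sum_eq_zero fun v _ => Nat.le_zero.1 (by simpa using hdeg v)
      have he0 : G.edgeSet.ncard = 0 := by omega
      rw [he0]
      exact Nat.zero_le _
    · have hk2 : 2 ≤ k := by omega
      have hb := CH.upper_bound hk2 G hnu hdeg
      by_cases hodd : Odd k
      · rw [if_pos hodd]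
        rwa [CH.gfun_value_odd hk hodd] at hb
      · rw [if_neg hodd]
        have hke : k % 2 = 0 := by
          rcases Nat.even_or_odd k with he | ho
          · exact Nat.even_iff.1 he
          · exact absurd ho hodd
        rwa [CH.gfun_value_even hk2 hke] at hb
end

section
/- Let k ≥ 3 and let (P,Q,R) be a k-admissible triple. Then the graph H_n(P,Q,R) is F_k-free, i.e., contains no copy of the friendship graph F_k. -/
open SimpleGraph

/-- The friendship graph `F_k`: `k` triangles sharing the common center `none`. -/
def friendshipGraph (k : ℕ) : SimpleGraph (Option (Fin k × Fin 2)) :=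
  SimpleGraph.fromRel (fun a b => a = none ∨ b = none ∨ ∃ i, a = some (i, 0) ∧ b = some (i, 1))

/-- `G` contains no copy of the friendship graph `F_k`. -/
def FkFree (k : ℕ) {V : Type*} (G : SimpleGraph V) : Prop :=
  ∀ f : friendshipGraph k →g G, ¬ Function.Injective ⇑f

/-- The graph `H_n(P,Q,R)`: internal edges `E(P) ∪ E(Q)`, crossing edges
`((X×Y) \ (A×B)) ∪ E(R)`. -/
def Hconstr {V : Type*} (X Y A B : Set V) (P Q R : SimpleGraph V) : SimpleGraph V :=
  SimpleGraph.fromRel (fun u v =>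
    P.Adj u v ∨ Q.Adj u v ∨ R.Adj u v ∨ (u ∈ X ∧ v ∈ Y ∧ ¬(u ∈ A ∧ v ∈ B)))

/-! Let `c` be the centre of a copy of `F_k`; by the symmetry `X ↔ Y, A ↔ B, P ↔ Q` we may assume
`c ∈ X`. Each of the `k` disjoint edges `xy` opposite to `c` either has an endpoint in `X`, which
is then a `P`-neighbour of `c`, or lies inside `Y`, where it is a `Q`-edge. If `c ∉ A`, then `c`
has no `P`-neighbours and the `Q`-edges form a matching of size `k > ν(Q)`. If `c ∈ A`, the
`Q`-edges have both ends in `B`, hence in `N_R(c)`, and `k ≤ d_P(c) + ν(Q[N_R(c)]) ≤ k - 1`. -/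

namespace SimpleGraph

variable {V : Type*} [Finite V] {G : SimpleGraph V} {S : Set V}

theorem Subgraph.IsMatching.ncard_edgeSet_le_nuOn {M : G.Subgraph} (hM : M.IsMatching)
    (hS : M.verts ⊆ S) : M.edgeSet.ncard ≤ nuOn G S :=
  le_csSup ⟨Set.ncard (Set.univ : Set (Sym2 V)), by
    rintro _ ⟨N, -, -, rfl⟩
    exact Set.ncard_le_ncard (Set.subset_univ _)⟩ ⟨M, hM, hS, rfl⟩

-- An injective `e : ι × Fin 2 → V` lists `|ι|` pairwise disjoint pairs `e (i, 0), e (i, 1)`,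
-- as the leaves of the triangles of `F_k` are indexed.
theorem card_le_nuOn {ι : Type*} [Fintype ι] {e : ι × Fin 2 → V} (he : e.Injective)
    (hadj : ∀ i, G.Adj (e (i, 0)) (e (i, 1))) (hS : ∀ p, e p ∈ S) :
    Fintype.card ι ≤ nuOn G S := by
  have hM : (⨆ i, G.subgraphOfAdj (hadj i)).IsMatching :=
    Subgraph.IsMatching.iSup (fun i => .subgraphOfAdj _) fun i j hij => by
      simp [support_subgraphOfAdj, he.eq_iff, hij.symm]
  have hverts : (⨆ i, G.subgraphOfAdj (hadj i)).verts ⊆ S := by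
    simp only [Subgraph.verts_iSup, subgraphOfAdj_verts, Set.iUnion_subset_iff]
    exact fun i => Set.insert_subset (hS _) (Set.singleton_subset_iff.2 (hS _))
  have hedges :
      (⨆ i, G.subgraphOfAdj (hadj i)).edgeSet = Set.range fun i => s(e (i, 0), e (i, 1)) := by
    ext
    simp [eq_comm]
  calc Fintype.card ι = (Set.range fun i => s(e (i, 0), e (i, 1))).ncard := by
        rw [Set.ncard_range_of_injective, Nat.card_eq_fintype_card]
        intro i j hij
        simpa [he.eq_iff] using hij
    _ ≤ nuOn G S := hedges ▸ hM.ncard_edgeSet_le_nuOn hverts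

theorem card_le_ncard_add_nuOn {ι : Type*} [Fintype ι] {N : Set V} {e : ι × Fin 2 → V}
    (he : e.Injective)
    (h : ∀ i, (∃ j, e (i, j) ∈ N) ∨ (G.Adj (e (i, 0)) (e (i, 1)) ∧ ∀ j, e (i, j) ∈ S)) :
    Fintype.card ι ≤ N.ncard + nuOn G S := by
  classical
  set inS : ι → Prop := fun i => G.Adj (e (i, 0)) (e (i, 1)) ∧ ∀ j, e (i, j) ∈ S
  have hsplit : Fintype.card ι = Fintype.card {i // inS i} + Fintype.card {i // ¬ inS i} := by
    rw [← Fintype.card_sum, Fintype.card_congr (Equiv.sumCompl inS)]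
  have hinS : Fintype.card {i // inS i} ≤ nuOn G S :=
    card_le_nuOn (e := fun q => e (q.1.1, q.2))
      (fun q r hqr => by
        obtain ⟨hi, hj⟩ := Prod.mk.inj (he hqr)
        exact Prod.ext (Subtype.ext hi) hj)
      (fun i => i.2.1) (fun q => q.1.2.2 q.2)
  have hN : Fintype.card {i // ¬ inS i} ≤ N.ncard := by
    choose j hj using fun i : {i // ¬ inS i} => (h i).resolve_right i.2
    rw [← Nat.card_eq_fintype_card, ← Nat.card_coe_set_eq]
    refine Nat.card_le_card_of_injective (fun i => ⟨e (i, j i), hj i⟩) fun i i' hii' => ?_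
    exact Subtype.ext (Prod.mk.inj (he (congrArg Subtype.val hii'))).1
  omega

end SimpleGraph

open SimpleGraph

theorem friendshipGraph_adj_none {k : ℕ} (p : Fin k × Fin 2) :
    (friendshipGraph k).Adj none (some p) := by
  simp [friendshipGraph]

theorem friendshipGraph_adj_some {k : ℕ} (i : Fin k) :
    (friendshipGraph k).Adj (some (i, 0)) (some (i, 1)) := by
  simp [friendshipGraph]

section Hconstr

variable {V : Type*} {X Y A B : Set V} {P Q R : SimpleGraph V} {u v : V}

theorem Hconstr_comm : Hconstr Y X B A Q P R = Hconstr X Y A B P Q R := by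
  ext u v
  simp only [Hconstr, fromRel_adj]
  grind [SimpleGraph.adj_comm]

theorem Hconstr_adj_of_mem_left (hdisj : Disjoint X Y) (hBY : B ⊆ Y)
    (hQB : ∀ u v, Q.Adj u v → u ∈ B ∧ v ∈ B)
    (hRbip : ∀ u v, R.Adj u v → (u ∈ A ∧ v ∈ B) ∨ (u ∈ B ∧ v ∈ A))
    (huv : (Hconstr X Y A B P Q R).Adj u v) (hu : u ∈ X) (hv : v ∈ X) : P.Adj u v := by
  have hXY := Set.disjoint_left.1 hdisj
  simp only [Hconstr, fromRel_adj] at huv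
  grind [SimpleGraph.adj_comm]

theorem Hconstr_adj_of_mem_right (hdisj : Disjoint X Y) (hAX : A ⊆ X)
    (hPA : ∀ u v, P.Adj u v → u ∈ A ∧ v ∈ A)
    (hRbip : ∀ u v, R.Adj u v → (u ∈ A ∧ v ∈ B) ∨ (u ∈ B ∧ v ∈ A))
    (huv : (Hconstr X Y A B P Q R).Adj u v) (hu : u ∈ Y) (hv : v ∈ Y) : Q.Adj u v := by
  rw [← Hconstr_comm] at huv
  exact Hconstr_adj_of_mem_left hdisj.symm hAX hPA (fun u v h => (hRbip u v h).symm) huv hu hv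

theorem Hconstr_adj_of_mem_A_of_mem_B (hdisj : Disjoint X Y) (hAX : A ⊆ X) (hBY : B ⊆ Y)
    (hPA : ∀ u v, P.Adj u v → u ∈ A ∧ v ∈ A) (hQB : ∀ u v, Q.Adj u v → u ∈ B ∧ v ∈ B)
    (huv : (Hconstr X Y A B P Q R).Adj u v) (hu : u ∈ A) (hv : v ∈ B) : R.Adj u v := by
  have hXY := Set.disjoint_left.1 hdisj
  simp only [Hconstr, fromRel_adj] at huv
  grind [SimpleGraph.adj_comm]

theorem Hconstr_triangle_of_mem_left {c : V} (hpart : X ∪ Y = Set.univ) (hdisj : Disjoint X Y)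
    (hAX : A ⊆ X) (hBY : B ⊆ Y) (hPA : ∀ u v, P.Adj u v → u ∈ A ∧ v ∈ A)
    (hQB : ∀ u v, Q.Adj u v → u ∈ B ∧ v ∈ B)
    (hRbip : ∀ u v, R.Adj u v → (u ∈ A ∧ v ∈ B) ∨ (u ∈ B ∧ v ∈ A)) (hc : c ∈ X)
    (hcu : (Hconstr X Y A B P Q R).Adj c u) (hcv : (Hconstr X Y A B P Q R).Adj c v)
    (huv : (Hconstr X Y A B P Q R).Adj u v) : P.Adj c u ∨ P.Adj c v ∨ Q.Adj u v := by
  have hXY : ∀ w, w ∈ X ∨ w ∈ Y := Set.eq_univ_iff_forall.1 hpart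
  rcases hXY u with hu | hu
  · exact .inl (Hconstr_adj_of_mem_left hdisj hBY hQB hRbip hcu hc hu)
  rcases hXY v with hv | hv
  · exact .inr (.inl (Hconstr_adj_of_mem_left hdisj hBY hQB hRbip hcv hc hv))
  · exact .inr (.inr (Hconstr_adj_of_mem_right hdisj hAX hPA hRbip huv hu hv))

theorem Hconstr_center_not_mem_left [Finite V] {k : ℕ} (hk : 1 ≤ k) (hpart : X ∪ Y = Set.univ)
    (hdisj : Disjoint X Y) (hAX : A ⊆ X) (hBY : B ⊆ Y) (hPA : ∀ u v, P.Adj u v → u ∈ A ∧ v ∈ A)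
    (hQB : ∀ u v, Q.Adj u v → u ∈ B ∧ v ∈ B)
    (hRbip : ∀ u v, R.Adj u v → (u ∈ A ∧ v ∈ B) ∨ (u ∈ B ∧ v ∈ A)) (hQnu : nu Q ≤ k - 1)
    (hadmA : ∀ a ∈ A, (P.neighborSet a).ncard + nuOn Q (R.neighborSet a) ≤ k - 1)
    (f : friendshipGraph k →g Hconstr X Y A B P Q R) (hf : Function.Injective f) :
    f none ∉ X := by
  intro hcX
  set c := f none
  set e : Fin k × Fin 2 → V := fun p => f (some p)
  have he : e.Injective := hf.comp (Option.some_injective _)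
  have hce : ∀ p, (Hconstr X Y A B P Q R).Adj c (e p) := fun p =>
    f.map_adj (friendshipGraph_adj_none p)
  have htri : ∀ i, P.Adj c (e (i, 0)) ∨ P.Adj c (e (i, 1)) ∨ Q.Adj (e (i, 0)) (e (i, 1)) :=
    fun i => Hconstr_triangle_of_mem_left hpart hdisj hAX hBY hPA hQB hRbip hcX (hce _) (hce _)
      (f.map_adj (friendshipGraph_adj_some i))
  by_cases hcA : c ∈ A
  · have hcount : k ≤ (P.neighborSet c).ncard + nuOn Q (R.neighborSet c) := by
      simpa using card_le_ncard_add_nuOn (G := Q) he fun i => by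
        rcases htri i with h | h | h
        · exact .inl ⟨0, h⟩
        · exact .inl ⟨1, h⟩
        · refine .inr ⟨h, fun j => ?_⟩
          have heB : e (i, j) ∈ B :=
            (Fin.forall_fin_two (p := fun j => e (i, j) ∈ B)).2 (hQB _ _ h) j
          exact Hconstr_adj_of_mem_A_of_mem_B hdisj hAX hBY hPA hQB (hce _) hcA heB
    have := hadmA c hcA
    omega
  · have hcount : k ≤ nu Q := by
      simpa [nu] using card_le_nuOn (G := Q) (S := Set.univ) he
        (fun i => ((htri i).resolve_left fun h => hcA (hPA _ _ h).1).resolve_left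
          fun h => hcA (hPA _ _ h).1) fun _ => trivial
    omega

end Hconstr

theorem Hconstr_FkFree_general {V : Type*} [Fintype V] (k : ℕ) (hk : 3 ≤ k)
    (X Y A B : Set V) (P Q R : SimpleGraph V)
    (hpart : X ∪ Y = Set.univ) (hdisj : Disjoint X Y)
    (hAX : A ⊆ X) (hBY : B ⊆ Y)
    (hPA : ∀ u v, P.Adj u v → u ∈ A ∧ v ∈ A)
    (hQB : ∀ u v, Q.Adj u v → u ∈ B ∧ v ∈ B)
    (hPnu : nu P ≤ k - 1) (hQnu : nu Q ≤ k - 1)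
    (hRbip : ∀ u v, R.Adj u v → (u ∈ A ∧ v ∈ B) ∨ (u ∈ B ∧ v ∈ A))
    (hadmA : ∀ a ∈ A, (P.neighborSet a).ncard + nuOn Q (R.neighborSet a) ≤ k - 1)
    (hadmB : ∀ b ∈ B, (Q.neighborSet b).ncard + nuOn P (R.neighborSet b) ≤ k - 1) :
    FkFree k (Hconstr X Y A B P Q R) := by
  intro f hf
  rcases Set.eq_univ_iff_forall.1 hpart (f none) with hcX | hcY
  · exact Hconstr_center_not_mem_left (by omega) hpart hdisj hAX hBY hPA hQB hRbip hQnu hadmA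
      f hf hcX
  · exact Hconstr_center_not_mem_left (by omega) (Set.union_comm X Y ▸ hpart) hdisj.symm hBY hAX
      hQB hPA (fun u v h => (hRbip u v h).symm) hPnu hadmB
      ((Hom.ofLE Hconstr_comm.ge).comp f) hf hcY

/-- If `(P,Q,R)` is a `k`-admissible triple, then `H_n(P,Q,R)` is `F_k`-free. -/
theorem Hconstr_FkFree {V : Type*} [Fintype V] (k : ℕ) (hk : 3 ≤ k)
    (X Y A B : Set V) (P Q R : SimpleGraph V)
    (hpart : X ∪ Y = Set.univ) (hdisj : Disjoint X Y)
    (hbal : X.ncard ≤ Y.ncard + 1 ∧ Y.ncard ≤ X.ncard + 1)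
    (hAX : A ⊆ X) (hBY : B ⊆ Y)
    (hPA : ∀ u v, P.Adj u v → u ∈ A ∧ v ∈ A)
    (hQB : ∀ u v, Q.Adj u v → u ∈ B ∧ v ∈ B)
    (hPiso : ∀ a ∈ A, ∃ u, P.Adj a u)
    (hQiso : ∀ b ∈ B, ∃ u, Q.Adj b u)
    (hPnu : nu P ≤ k - 1) (hQnu : nu Q ≤ k - 1)
    (hPdeg : ∀ v, (P.neighborSet v).ncard ≤ k - 1)
    (hQdeg : ∀ v, (Q.neighborSet v).ncard ≤ k - 1)
    (hRbip : ∀ u v, R.Adj u v → (u ∈ A ∧ v ∈ B) ∨ (u ∈ B ∧ v ∈ A))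
    (hadmA : ∀ a ∈ A, (P.neighborSet a).ncard + nuOn Q (R.neighborSet a) ≤ k - 1)
    (hadmB : ∀ b ∈ B, (Q.neighborSet b).ncard + nuOn P (R.neighborSet b) ≤ k - 1) :
    FkFree k (Hconstr X Y A B P Q R) :=
  Hconstr_FkFree_general k hk X Y A B P Q R hpart hdisj hAX hBY hPA hQB hPnu hQnu hRbip hadmA hadmB
end

section
/- Let G be an F_k-free graph with vertex set partitioned as X ∪ Y, and suppose every edge of G[X] has at least |Y| − β common neighbors in Y, where |Y| > kβ + k(β+1). Then the matching number of G[X] is at most k−1 and the maximum degree of G[X] is at most k−1. -/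
open SimpleGraph

/-! If `a i b i` (`i < k`) is a matching in `G[X]`, each edge misses at most `β` vertices of `Y`,
so at most `kβ < |Y|` vertices of `Y` are missed altogether and some `y ∈ Y` is adjacent to all
`2k` endpoints: the triangles `y a i b i` form an `F_k`. If `x ∈ X` has `k` neighbours `x i` in
`X`, each edge `x x i` has at least `|Y| - β ≥ k` common neighbours in `Y`, so distinct ones `y i`
can be chosen, and the triangles `x (x i) (y i)` form an `F_k`; disjointness of `X` and `Y` keeps
the `x i` apart from the `y j`. -/

open Function

theorem not_fkFree_of_triangles {V : Type*} {G : SimpleGraph V} {k : ℕ} {c : V} {a b : Fin k → V}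
    (hca : ∀ i, G.Adj c (a i)) (hcb : ∀ i, G.Adj c (b i)) (hab : ∀ i, G.Adj (a i) (b i))
    (ha : Injective a) (hb : Injective b) (hne : ∀ i j, a i ≠ b j) : ¬ FkFree k G := by
  let t : Fin k × Fin 2 → V := fun p => if p.2 = 0 then a p.1 else b p.1
  have hct : ∀ p, G.Adj c (t p) := by
    rintro ⟨i, j⟩
    fin_cases j
    exacts [hca i, hcb i]
  have ht : Injective t := by
    rintro ⟨i, j⟩ ⟨i', j'⟩ h
    fin_cases j <;> fin_cases j' <;> simp_all [t, ha.eq_iff, hb.eq_iff, (hne _ _).symm]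
  let f : Option (Fin k × Fin 2) → V := fun o => o.elim c t
  have hf : Injective f := by
    rintro (_ | p) (_ | q) h
    · rfl
    · exact absurd h (hct q).ne
    · exact absurd h.symm (hct p).ne
    · exact congrArg some (ht h)
  have hrel : ∀ u v, u ≠ v → (u = none ∨ v = none ∨ ∃ i, u = some (i, 0) ∧ v = some (i, 1)) →
      G.Adj (f u) (f v) := by
    rintro u v huv (rfl | rfl | ⟨i, rfl, rfl⟩)
    · obtain _ | q := v
      · exact absurd rfl huv
      · exact hct q
    · obtain _ | p := u
      · exact absurd rfl huv
      · exact (hct p).symm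
    · simpa [f, t] using hab i
  intro hfree
  refine hfree ⟨f, fun {u v} huv => ?_⟩ hf
  obtain ⟨hne, h | h⟩ := (fromRel_adj _ u v).1 huv
  · exact hrel u v hne h
  · exact (hrel v u hne.symm h).symm

namespace Set

/-- Hall's condition holds trivially when each of the `n` sets has at least `n` elements. -/
theorem exists_injective_forall_mem_of_card_le_ncard {ι α : Type*} [Fintype ι] {S : ι → Set α}
    (hS : ∀ i, Fintype.card ι ≤ (S i).ncard) : ∃ f : ι → α, Injective f ∧ ∀ i, f i ∈ S i := by
  classical
  have hfin : ∀ i, (S i).Finite := fun i =>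
    finite_of_ncard_pos ((Fintype.card_pos_iff.2 ⟨i⟩).trans_le (hS i))
  obtain ⟨f, hf, hmem⟩ := (Finset.all_card_le_biUnion_card_iff_exists_injective
    fun i => (hfin i).toFinset).1 fun s => by
      obtain rfl | ⟨i, hi⟩ := s.eq_empty_or_nonempty
      · simp
      calc s.card ≤ Fintype.card ι := s.card_le_univ
        _ ≤ (hfin i).toFinset.card := by rw [← ncard_eq_toFinset_card _ (hfin i)]; exact hS i
        _ ≤ (s.biUnion fun i => (hfin i).toFinset).card :=
          Finset.card_le_card (Finset.subset_biUnion_of_mem (fun i => (hfin i).toFinset) hi)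
  exact ⟨f, hf, fun i => (hfin i).mem_toFinset.1 (hmem i)⟩

theorem exists_mem_forall_mem_of_card_mul_lt_ncard {ι α : Type*} [Fintype ι] {Y : Set α}
    {S : ι → Set α} {β : ℕ} (hS : ∀ i, Y.ncard - β ≤ (S i ∩ Y).ncard)
    (hY : Fintype.card ι * β < Y.ncard) : ∃ y ∈ Y, ∀ i, y ∈ S i := by
  have hYfin : Y.Finite := finite_of_ncard_pos (Nat.zero_lt_of_lt hY)
  have hmissed : ∀ i, (Y \ S i).ncard ≤ β := fun i => by
    have hsplit := ncard_inter_add_ncard_sdiff_eq_ncard Y (S i) hYfin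
    have hhit := hS i
    rw [inter_comm] at hhit
    omega
  have hunion : (⋃ i, Y \ S i).ncard < Y.ncard :=
    calc (⋃ i, Y \ S i).ncard ≤ ∑ i, (Y \ S i).ncard := ncard_iUnion_le_of_fintype _
      _ ≤ ∑ _i : ι, β := Finset.sum_le_sum fun i _ => hmissed i
      _ < Y.ncard := by simpa using hY
  obtain ⟨y, hyY, hy⟩ := not_subset.1 fun h => (ncard_le_ncard h
    (hYfin.subset (iUnion_subset fun i => sdiff_subset))).not_gt hunion
  exact ⟨y, hyY, fun i => by_contra fun hyS => hy (mem_iUnion.2 ⟨i, hyY, hyS⟩)⟩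

end Set

namespace SimpleGraph.Subgraph.IsMatching

variable {V : Type*} {G : SimpleGraph V} {M : G.Subgraph}

theorem exists_fin_edges (hM : M.IsMatching) {k : ℕ} (hk : k ≤ M.edgeSet.ncard) :
    ∃ a b : Fin k → V, (∀ i, M.Adj (a i) (b i)) ∧ Injective a ∧ Injective b ∧
      ∀ i j, a i ≠ b j := by
  obtain ⟨e, he, heM⟩ :=
    Set.exists_injective_forall_mem_of_card_le_ncard (S := fun _ : Fin k => M.edgeSet)
      fun _ => by simpa using hk
  choose a b hab using fun i => Sym2.ind (f := fun z => ∃ u v, z = s(u, v))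
    (fun u v => ⟨u, v, rfl⟩) (e i)
  have hadj : ∀ i, M.Adj (a i) (b i) := fun i => M.mem_edgeSet.1 (hab i ▸ heM i)
  refine ⟨a, b, hadj, fun i j h => he ?_, fun i j h => he ?_, fun i j h => ?_⟩
  · have hb : b i = b j := hM.eq_of_adj_left (hadj i) (h ▸ hadj j)
    rw [hab i, hab j, h, hb]
  · have ha : a i = a j := hM.eq_of_adj_right (hadj i) (h ▸ hadj j)
    rw [hab i, hab j, h, ha]
  · have hba : b i = a j := hM.eq_of_adj_left (h ▸ hadj i) (hadj j).symm
    obtain rfl : i = j := he (by rw [hab i, hab j, h, hba, Sym2.eq_swap])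
    exact (hadj i).ne h

end SimpleGraph.Subgraph.IsMatching

section HeavyEdges

variable {V : Type*} {G : SimpleGraph V} {k β : ℕ} {X Y : Set V}

theorem nuOn_le_of_fkFree (hfree : FkFree k G)
    (hcn : ∀ x x', x ∈ X → x' ∈ X → G.Adj x x' →
      Y.ncard - β ≤ (G.commonNeighbors x x' ∩ Y).ncard)
    (hY : k * β < Y.ncard) : nuOn G X ≤ k - 1 := by
  refine csSup_le ⟨0, ⊥, fun v hv => by simp at hv, by simp, by simp⟩ ?_
  rintro _ ⟨M, hM, hMX, rfl⟩
  by_contra! hn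
  obtain ⟨a, b, hab, ha, hb, hne⟩ := hM.exists_fin_edges (k := k) (by omega)
  obtain ⟨y, -, hy⟩ := Set.exists_mem_forall_mem_of_card_mul_lt_ncard
    (S := fun i => G.commonNeighbors (a i) (b i))
    (fun i => hcn _ _ (hMX (M.edge_vert (hab i))) (hMX (M.edge_vert (hab i).symm))
      (M.adj_sub (hab i)))
    (by simpa using hY)
  exact not_fkFree_of_triangles (fun i => ((hy i).1).symm) (fun i => ((hy i).2).symm)
    (fun i => M.adj_sub (hab i)) ha hb hne hfree

theorem ncard_neighborSet_inter_le_of_fkFree (hfree : FkFree k G) (hdisj : Disjoint X Y)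
    (hcn : ∀ x x', x ∈ X → x' ∈ X → G.Adj x x' →
      Y.ncard - β ≤ (G.commonNeighbors x x' ∩ Y).ncard)
    (hY : k ≤ Y.ncard - β) {x : V} (hx : x ∈ X) : (G.neighborSet x ∩ X).ncard ≤ k - 1 := by
  by_contra! hdeg
  obtain ⟨a, ha, haN⟩ := Set.exists_injective_forall_mem_of_card_le_ncard
    (S := fun _ : Fin k => G.neighborSet x ∩ X) (by simp only [Fintype.card_fin]; omega)
  obtain ⟨b, hb, hbN⟩ := Set.exists_injective_forall_mem_of_card_le_ncard
    (S := fun i => G.commonNeighbors x (a i) ∩ Y)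
    (fun i => by simpa using hY.trans (hcn x (a i) hx (haN i).2 (haN i).1))
  exact not_fkFree_of_triangles (fun i => (haN i).1) (fun i => (hbN i).1.1)
    (fun i => (hbN i).1.2) ha hb (fun i j => hdisj.ne_of_mem (haN i).2 (hbN j).2) hfree

end HeavyEdges

theorem heavy_edges_structure_general {V : Type*} (k β : ℕ) (hk : 1 ≤ k)
    (G : SimpleGraph V) (X Y : Set V)
    (hdisj : Disjoint X Y) (hfree : FkFree k G)
    (hcn : ∀ x x', x ∈ X → x' ∈ X → G.Adj x x' →
      Y.ncard - β ≤ ((G.neighborSet x ∩ G.neighborSet x') ∩ Y).ncard)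
    (hY : k * β + k * (β + 1) < Y.ncard) :
    nuOn G X ≤ k - 1 ∧ ∀ x ∈ X, (G.neighborSet x ∩ X).ncard ≤ k - 1 := by
  have hβ : β ≤ k * β := Nat.le_mul_of_pos_left β hk
  rw [mul_add_one] at hY
  exact ⟨nuOn_le_of_fkFree hfree hcn (by omega),
    fun x => ncard_neighborSet_inter_le_of_fkFree hfree hdisj hcn (by omega)⟩

/-- If `G` is `F_k`-free and every edge of `G[X]` has at least `|Y| - β` common neighbors
in `Y`, with `|Y| > kβ + k(β+1)`, then `ν(G[X]) ≤ k-1` and `Δ(G[X]) ≤ k-1`. -/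
theorem heavy_edges_structure {V : Type*} [Fintype V] (k β : ℕ) (hk : 1 ≤ k)
    (G : SimpleGraph V) (X Y : Set V)
    (hpart : X ∪ Y = Set.univ) (hdisj : Disjoint X Y) (hfree : FkFree k G)
    (hcn : ∀ x x', x ∈ X → x' ∈ X → G.Adj x x' →
      Y.ncard - β ≤ ((G.neighborSet x ∩ G.neighborSet x') ∩ Y).ncard)
    (hY : k * β + k * (β + 1) < Y.ncard) :
    nuOn G X ≤ k - 1 ∧ ∀ x ∈ X, (G.neighborSet x ∩ X).ncard ≤ k - 1 :=
  heavy_edges_structure_general k β hk G X Y hdisj hfree hcn hY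
end

section
/- Let G be an F_k-free graph with partition V(G) = X ∪ Y such that every edge of G[X] has at least |Y| − β common neighbors in Y, with |Y| sufficiently large in terms of k and β. Then e(G[X]) ≤ f(k−1,k−1), where f(k−1,k−1) = k(k−1) for odd k and k(2k−3)/2 for even k. -/
open SimpleGraph

/-- The Chvátal–Hanson value `f(k-1,k-1)`. -/
def fCH (k : ℕ) : ℕ := if Odd k then k * (k - 1) else k * (2 * k - 3) / 2

open Finset

namespace CHAux

variable {V : Type*} [DecidableEq V] {G : SimpleGraph V}

/-- The two-element finset of vertices of an element of `Sym2 V`. -/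
def evts (e : Sym2 V) : Finset V :=
  Sym2.lift ⟨fun a b => {a, b}, fun a b => Finset.pair_comm a b⟩ e

@[simp] lemma mem_evts {v : V} {e : Sym2 V} : v ∈ evts e ↔ v ∈ e := by
  induction e using Sym2.inductionOn with
  | hf a b => simp [evts, Sym2.mem_iff]

/-- `M` is a matching in `G`: a set of edges of `G` that are pairwise vertex-disjoint. -/
def IsMat (G : SimpleGraph V) (M : Finset (Sym2 V)) : Prop :=
  (∀ e ∈ M, e ∈ G.edgeSet) ∧
    ∀ e ∈ M, ∀ f ∈ M, e ≠ f → ∀ v, v ∈ e → v ∉ f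

/-- vertex set of a matching -/
def vts (M : Finset (Sym2 V)) : Finset V := M.biUnion evts

@[simp] lemma mem_vts {v : V} {M : Finset (Sym2 V)} :
    v ∈ vts M ↔ ∃ e ∈ M, v ∈ e := by
  simp [vts]

omit [DecidableEq V] in
lemma IsMat.subset {M N : Finset (Sym2 V)} (h : IsMat G M) (hNM : N ⊆ M) : IsMat G N :=
  ⟨fun e he => h.1 e (hNM he), fun e he f hf => h.2 e (hNM he) f (hNM hf)⟩

lemma vts_subset {M N : Finset (Sym2 V)} (hNM : N ⊆ M) : vts N ⊆ vts M := by
  intro v hv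
  rw [mem_vts] at hv ⊢
  obtain ⟨e, he, hve⟩ := hv
  exact ⟨e, hNM he, hve⟩

lemma not_mem_vts_erase {M : Finset (Sym2 V)} (h : IsMat G M) {e : Sym2 V} (he : e ∈ M)
    {v : V} (hv : v ∈ e) : v ∉ vts (M.erase e) := by
  rw [mem_vts]
  rintro ⟨f, hf, hvf⟩
  exact h.2 e he f (M.mem_of_mem_erase hf) (Finset.ne_of_mem_erase hf).symm v hv hvf

lemma vts_erase_union {M : Finset (Sym2 V)} {e : Sym2 V} (he : e ∈ M) :
    vts M ⊆ vts (M.erase e) ∪ evts e := by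
  intro v hv
  rw [mem_vts] at hv
  obtain ⟨f, hf, hvf⟩ := hv
  rcases eq_or_ne f e with rfl | hne
  · exact Finset.mem_union_right _ (mem_evts.2 hvf)
  · exact Finset.mem_union_left _ (mem_vts.2 ⟨f, Finset.mem_erase.2 ⟨hne, hf⟩, hvf⟩)

lemma IsMat.insert {M : Finset (Sym2 V)} (h : IsMat G M) {a b : V} (hab : G.Adj a b)
    (ha : a ∉ vts M) (hb : b ∉ vts M) : IsMat G (insert s(a, b) M) := by
  constructor
  · intro e he
    rcases Finset.mem_insert.1 he with rfl | he
    · exact hab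
    · exact h.1 e he
  · intro e he f hf hef v hve hvf
    rcases Finset.mem_insert.1 he with he' | he'
    · rcases Finset.mem_insert.1 hf with hf' | hf'
      · exact hef (he'.trans hf'.symm)
      · subst he'
        rcases Sym2.mem_iff.1 hve with rfl | rfl
        · exact ha (mem_vts.2 ⟨f, hf', hvf⟩)
        · exact hb (mem_vts.2 ⟨f, hf', hvf⟩)
    · rcases Finset.mem_insert.1 hf with hf' | hf'
      · subst hf'
        rcases Sym2.mem_iff.1 hvf with rfl | rfl
        · exact ha (mem_vts.2 ⟨e, he', hve⟩)
        · exact hb (mem_vts.2 ⟨e, he', hve⟩)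
      · exact h.2 e he' f hf' hef v hve hvf

lemma edge_not_mem {M : Finset (Sym2 V)} {a b : V} (ha : a ∉ vts M) : s(a, b) ∉ M := by
  intro h
  exact ha (mem_vts.2 ⟨_, h, Sym2.mem_mk_left a b⟩)

lemma card_insert_edge {M : Finset (Sym2 V)} {a b : V} (ha : a ∉ vts M) :
    (insert s(a, b) M).card = M.card + 1 :=
  Finset.card_insert_of_notMem (edge_not_mem ha)

@[simp] lemma vts_insert {M : Finset (Sym2 V)} {e : Sym2 V} :
    vts (insert e M) = evts e ∪ vts M := Finset.biUnion_insert

lemma edge_mem_left {a b : V} : a ∈ s(a, b) := Sym2.mem_mk_left a b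
lemma edge_mem_right {a b : V} : b ∈ s(a, b) := Sym2.mem_mk_right a b

/-- The key alternating-path swap lemma, proved by induction on `N.card`. -/
lemma swap (G : SimpleGraph V) :
    ∀ (n : ℕ) (M N : Finset (Sym2 V)) (F : Finset V) (w : V), N.card = n →
      IsMat G M → IsMat G N → w ∈ vts M → w ∉ vts N →
      (∀ u ∈ F, u ∉ vts M ∧ u ∉ vts N) →
      (∃ A, IsMat G A ∧ A.card = N.card + 1 ∧ ∀ u ∈ F, u ∉ vts A) ∨
      (∃ B z, IsMat G B ∧ B.card = M.card ∧ w ∉ vts B ∧ z ∈ vts B ∧ z ∉ vts M ∧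
        vts B ⊆ (vts M \ {w}) ∪ {z} ∧ ∀ u ∈ F, u ∉ vts B) := by
  intro n
  induction n using Nat.strong_induction_on with
  | _ n IH =>
  intro M N F w hn hM hN hwM hwN hF
  -- get the M-edge at w
  obtain ⟨e₁, he₁M, hwe₁⟩ := mem_vts.1 hwM
  obtain ⟨v₁, rfl⟩ := Sym2.mem_iff_exists.1 hwe₁
  have hadj₁ : G.Adj w v₁ := G.mem_edgeSet.1 (hM.1 _ he₁M)
  have hwv₁ : w ≠ v₁ := hadj₁.ne
  have hv₁M : v₁ ∈ vts M := mem_vts.2 ⟨_, he₁M, edge_mem_right⟩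
  by_cases hv₁N : v₁ ∈ vts N
  case neg =>
    -- Case 1: augment N with the edge w v₁
    left
    refine ⟨insert s(w, v₁) N, hN.insert hadj₁ hwN hv₁N, card_insert_edge hwN, ?_⟩
    intro u hu
    rw [vts_insert, Finset.mem_union]
    rintro (hu' | hu')
    · rw [mem_evts] at hu'
      rcases Sym2.mem_iff.1 hu' with rfl | rfl
      · exact (hF u hu).1 hwM
      · exact (hF u hu).1 hv₁M
    · exact (hF u hu).2 hu'
  case pos =>
    -- get the N-edge at v₁
    obtain ⟨f₁, hf₁N, hv₁f₁⟩ := mem_vts.1 hv₁N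
    obtain ⟨v₂, rfl⟩ := Sym2.mem_iff_exists.1 hv₁f₁
    have hadj₂ : G.Adj v₁ v₂ := G.mem_edgeSet.1 (hN.1 _ hf₁N)
    have hv₂N : v₂ ∈ vts N := mem_vts.2 ⟨_, hf₁N, edge_mem_right⟩
    have hwv₂ : w ≠ v₂ := fun h => hwN (h ▸ hv₂N)
    by_cases hv₂M : v₂ ∈ vts M
    case neg =>
      -- Case 2: rotate M : drop w v₁, add v₁ v₂
      right
      have hv₁e : v₁ ∉ vts (M.erase s(w, v₁)) := not_mem_vts_erase hM he₁M edge_mem_right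
      have hwe : w ∉ vts (M.erase s(w, v₁)) := not_mem_vts_erase hM he₁M edge_mem_left
      have hv₂e : v₂ ∉ vts (M.erase s(w, v₁)) := fun h => hv₂M (vts_subset (M.erase_subset _) h)
      refine ⟨insert s(v₁, v₂) (M.erase s(w, v₁)), v₂,
        (hM.subset (M.erase_subset _)).insert hadj₂ hv₁e hv₂e, ?_, ?_, ?_, hv₂M, ?_, ?_⟩
      · have h1 : 1 ≤ M.card := Finset.card_pos.2 ⟨_, he₁M⟩
        rw [card_insert_edge hv₁e, Finset.card_erase_of_mem he₁M]
        omega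
      · rw [vts_insert, Finset.mem_union]
        rintro (h | h)
        · rcases Sym2.mem_iff.1 (mem_evts.1 h) with rfl | rfl
          · exact hwv₁ rfl
          · exact hwv₂ rfl
        · exact hwe h
      · exact mem_vts.2 ⟨s(v₁, v₂), Finset.mem_insert_self _ _, edge_mem_right⟩
      · rw [vts_insert]
        intro u hu
        rcases Finset.mem_union.1 hu with h | h
        · rcases Sym2.mem_iff.1 (mem_evts.1 h) with rfl | rfl
          · exact Finset.mem_union_left _ (Finset.mem_sdiff.2 ⟨hv₁M, by simpa using hwv₁.symm⟩)
          · exact Finset.mem_union_right _ (Finset.mem_singleton_self _)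
        · refine Finset.mem_union_left _ (Finset.mem_sdiff.2
            ⟨vts_subset (M.erase_subset _) h, ?_⟩)
          simp only [Finset.mem_singleton]
          rintro rfl
          exact hwe h
      · intro u hu
        rw [vts_insert, Finset.mem_union]
        rintro (h | h)
        · rcases Sym2.mem_iff.1 (mem_evts.1 h) with rfl | rfl
          · exact (hF u hu).2 hv₁N
          · exact (hF u hu).2 hv₂N
        · exact (hF u hu).1 (vts_subset (M.erase_subset _) h)
    case pos =>
      -- Case 3: recurse
      obtain ⟨e₂, he₂M, hv₂e₂⟩ := mem_vts.1 hv₂M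
      obtain ⟨v₃, rfl⟩ := Sym2.mem_iff_exists.1 hv₂e₂
      have hv₂v₁ : v₂ ≠ v₁ := hadj₂.ne'
      have he₂ne : s(v₂, v₃) ≠ s(w, v₁) := by
        intro h
        rcases Sym2.eq_iff.1 h with ⟨rfl, rfl⟩ | ⟨rfl, rfl⟩
        · exact hwv₂ rfl
        · exact hv₂v₁ rfl
      set M₁ := M.erase s(w, v₁) with hM₁def
      set N₁ := N.erase s(v₁, v₂) with hN₁def
      have hMM₁ : M₁ ⊆ M := M.erase_subset _
      have hNN₁ : N₁ ⊆ N := N.erase_subset _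
      have hM₁ : IsMat G M₁ := hM.subset hMM₁
      have hN₁ : IsMat G N₁ := hN.subset hNN₁
      have hv₂M₁ : v₂ ∈ vts M₁ := mem_vts.2 ⟨s(v₂, v₃), Finset.mem_erase.2 ⟨he₂ne, he₂M⟩,
        edge_mem_left⟩
      have hv₂N₁ : v₂ ∉ vts N₁ := not_mem_vts_erase hN hf₁N edge_mem_right
      have hwM₁ : w ∉ vts M₁ := not_mem_vts_erase hM he₁M edge_mem_left
      have hwN₁ : w ∉ vts N₁ := fun h => hwN (vts_subset hNN₁ h)
      have hv₁M₁ : v₁ ∉ vts M₁ := not_mem_vts_erase hM he₁M edge_mem_right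
      have hv₁N₁ : v₁ ∉ vts N₁ := not_mem_vts_erase hN hf₁N edge_mem_left
      have hF' : ∀ u ∈ insert w (insert v₁ F), u ∉ vts M₁ ∧ u ∉ vts N₁ := by
        intro u hu
        rcases Finset.mem_insert.1 hu with rfl | hu
        · exact ⟨hwM₁, hwN₁⟩
        rcases Finset.mem_insert.1 hu with rfl | hu
        · exact ⟨hv₁M₁, hv₁N₁⟩
        · exact ⟨fun h => (hF u hu).1 (vts_subset hMM₁ h),
            fun h => (hF u hu).2 (vts_subset hNN₁ h)⟩
      have hNpos : 1 ≤ N.card := Finset.card_pos.2 ⟨_, hf₁N⟩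
      have hN₁card : N₁.card < n := by
        rw [hN₁def, Finset.card_erase_of_mem hf₁N]
        omega
      rcases IH N₁.card hN₁card M₁ N₁ (insert w (insert v₁ F)) v₂ rfl hM₁ hN₁ hv₂M₁ hv₂N₁ hF'
        with ⟨A₁, hA₁, hA₁card, hA₁F⟩ | ⟨B₁, z, hB₁, hB₁card, hv₂B₁, hzB₁, hzM₁, hB₁sub, hB₁F⟩
      · -- reconstruct augmentation
        left
        have hwA₁ : w ∉ vts A₁ := hA₁F w (Finset.mem_insert_self _ _)
        have hv₁A₁ : v₁ ∉ vts A₁ :=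
          hA₁F v₁ (Finset.mem_insert_of_mem (Finset.mem_insert_self _ _))
        refine ⟨insert s(w, v₁) A₁, hA₁.insert hadj₁ hwA₁ hv₁A₁, ?_, ?_⟩
        · rw [card_insert_edge hwA₁, hA₁card, hN₁def, Finset.card_erase_of_mem hf₁N]
          omega
        · intro u hu
          rw [vts_insert, Finset.mem_union]
          rintro (h | h)
          · rcases Sym2.mem_iff.1 (mem_evts.1 h) with rfl | rfl
            · exact (hF u hu).1 hwM
            · exact (hF u hu).1 hv₁M
          · exact hA₁F u (Finset.mem_insert_of_mem (Finset.mem_insert_of_mem hu)) h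
      · -- reconstruct rotation
        right
        have hzw : z ≠ w := fun h => (hB₁F w (Finset.mem_insert_self _ _)) (h ▸ hzB₁)
        have hzv₁ : z ≠ v₁ := fun h =>
          (hB₁F v₁ (Finset.mem_insert_of_mem (Finset.mem_insert_self _ _))) (h ▸ hzB₁)
        have hzM : z ∉ vts M := by
          intro h
          rcases Finset.mem_union.1 (vts_erase_union he₁M h) with h' | h'
          · exact hzM₁ h'
          · rcases Sym2.mem_iff.1 (mem_evts.1 h') with rfl | rfl
            · exact hzw rfl
            · exact hzv₁ rfl
        have hv₁B₁ : v₁ ∉ vts B₁ := by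
          intro h
          rcases Finset.mem_union.1 (hB₁sub h) with h' | h'
          · exact hv₁M₁ (Finset.mem_sdiff.1 h').1
          · exact hzv₁ (Finset.mem_singleton.1 h').symm
        refine ⟨insert s(v₁, v₂) B₁, z, hB₁.insert hadj₂ hv₁B₁ hv₂B₁, ?_, ?_, ?_, hzM, ?_, ?_⟩
        · have hMpos : 1 ≤ M.card := Finset.card_pos.2 ⟨_, he₁M⟩
          rw [card_insert_edge hv₁B₁, hB₁card, hM₁def, Finset.card_erase_of_mem he₁M]
          omega
        · rw [vts_insert, Finset.mem_union]
          rintro (h | h)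
          · rcases Sym2.mem_iff.1 (mem_evts.1 h) with rfl | rfl
            · exact hwv₁ rfl
            · exact hwv₂ rfl
          · exact hB₁F w (Finset.mem_insert_self _ _) h
        · exact vts_subset (Finset.subset_insert _ _) hzB₁
        · rw [vts_insert]
          intro u hu
          rcases Finset.mem_union.1 hu with h | h
          · rcases Sym2.mem_iff.1 (mem_evts.1 h) with rfl | rfl
            · exact Finset.mem_union_left _ (Finset.mem_sdiff.2 ⟨hv₁M, by simpa using hwv₁.symm⟩)
            · exact Finset.mem_union_left _ (Finset.mem_sdiff.2 ⟨hv₂M, by simpa using hwv₂.symm⟩)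
          · rcases Finset.mem_union.1 (hB₁sub h) with h' | h'
            · have := Finset.mem_sdiff.1 h'
              exact Finset.mem_union_left _ (Finset.mem_sdiff.2
                ⟨vts_subset hMM₁ this.1, by
                  simp only [Finset.mem_singleton]
                  intro hq
                  exact hwM₁ (hq ▸ this.1)⟩)
            · exact Finset.mem_union_right _ h'
        · intro u hu
          rw [vts_insert, Finset.mem_union]
          rintro (h | h)
          · rcases Sym2.mem_iff.1 (mem_evts.1 h) with rfl | rfl
            · exact (hF u hu).2 hv₁N
            · exact (hF u hu).2 hv₂N
          · exact hB₁F u (Finset.mem_insert_of_mem (Finset.mem_insert_of_mem hu)) h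

section Nu

variable [Fintype V]

/-- matching number via Finset matchings -/
noncomputable def nuF (G : SimpleGraph V) : ℕ :=
  sSup {n | ∃ M : Finset (Sym2 V), IsMat G M ∧ M.card = n}

lemma nuF_bddAbove : BddAbove {n | ∃ M : Finset (Sym2 V), IsMat G M ∧ M.card = n} := by
  classical
  refine ⟨Fintype.card (Sym2 V), ?_⟩
  rintro n ⟨M, _, rfl⟩
  exact Finset.card_le_univ M

lemma IsMat.card_le_nuF {M : Finset (Sym2 V)} (h : IsMat G M) : M.card ≤ nuF G :=
  le_csSup nuF_bddAbove ⟨M, h, rfl⟩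

lemma isMat_empty : IsMat G (∅ : Finset (Sym2 V)) := by
  constructor <;> simp

lemma exists_max_matching (G : SimpleGraph V) :
    ∃ M : Finset (Sym2 V), IsMat G M ∧ M.card = nuF G := by
  have h := Nat.sSup_mem (s := {n | ∃ M : Finset (Sym2 V), IsMat G M ∧ M.card = n})
    ⟨0, ∅, isMat_empty, by simp⟩ nuF_bddAbove
  exact h

lemma card_vts {M : Finset (Sym2 V)} (h : IsMat G M) : (vts M).card = 2 * M.card := by
  have hdisj : ∀ e ∈ M, ∀ f ∈ M, e ≠ f → Disjoint (evts e) (evts f) := by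
    intro e he f hf hef
    rw [Finset.disjoint_left]
    intro v hv hv'
    exact h.2 e he f hf hef v (mem_evts.1 hv) (mem_evts.1 hv')
  have hcard2 : ∀ e ∈ M, (evts e).card = 2 := by
    intro e he
    obtain ⟨a, b⟩ := e
    have hab : a ≠ b := (G.mem_edgeSet.1 (h.1 _ he)).ne
    show ({a, b} : Finset V).card = 2
    rw [Finset.card_insert_of_notMem (by simpa using hab), Finset.card_singleton]
  rw [vts, Finset.card_biUnion hdisj, Finset.sum_congr rfl hcard2, Finset.sum_const,
    smul_eq_mul, mul_comm]

lemma singleton_isMat {e : Sym2 V} (he : e ∈ G.edgeSet) : IsMat G {e} := by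
  constructor
  · simpa using he
  · intro a ha b hb hab
    simp only [Finset.mem_singleton] at ha hb
    exact absurd (ha.trans hb.symm) hab

end Nu

section Gallai

variable [Fintype V]

lemma adj_dist_le_one {G : SimpleGraph V} {x y : V} (h : G.Adj x y) : G.dist x y ≤ 1 := by
  have := G.dist_le (SimpleGraph.Walk.cons h SimpleGraph.Walk.nil)
  simpa using this

lemma gallai (G : SimpleGraph V) [DecidableRel G.Adj]
    (hcon : ∀ x y, 0 < G.degree x → 0 < G.degree y → G.Reachable x y)
    (hmiss : ∀ v, ∃ M : Finset (Sym2 V), IsMat G M ∧ M.card = nuF G ∧ v ∉ vts M) :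
    (Finset.univ.filter fun v => 0 < G.degree v).card ≤ 2 * nuF G + 1 := by
  classical
  by_contra hlt
  push_neg at hlt
  set supp := Finset.univ.filter fun v => 0 < G.degree v with hsupp
  have hvts_supp : ∀ {M : Finset (Sym2 V)}, IsMat G M → vts M ⊆ supp := by
    intro M hM v hv
    obtain ⟨e, heM, hve⟩ := mem_vts.1 hv
    obtain ⟨b, rfl⟩ := Sym2.mem_iff_exists.1 hve
    have hadj : G.Adj v b := G.mem_edgeSet.1 (hM.1 _ heM)
    exact Finset.mem_filter.2 ⟨Finset.mem_univ _,
      (G.degree_pos_iff_exists_adj v).2 ⟨b, hadj⟩⟩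
  set P : Finset (Sym2 V) → V → V → Prop := fun M x y =>
    IsMat G M ∧ M.card = nuF G ∧ x ≠ y ∧ x ∉ vts M ∧ y ∉ vts M ∧
      0 < G.degree x ∧ 0 < G.degree y with hP
  set D : Set ℕ := {n | ∃ M x y, P M x y ∧ G.dist x y = n} with hD
  have htwo : ∀ (M : Finset (Sym2 V)), IsMat G M → M.card = nuF G →
      ∃ x y, P M x y := by
    intro M hM hMcard
    have hsub : vts M ⊆ supp := hvts_supp hM
    have hcard : 2 ≤ (supp \ vts M).card := by
      have h1 : (vts M).card = 2 * nuF G := hMcard ▸ card_vts hM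
      have h2 := Finset.card_sdiff_add_card_eq_card hsub
      omega
    obtain ⟨x, hx, y, hy, hxy⟩ := Finset.one_lt_card.1 (by omega : 1 < (supp \ vts M).card)
    rw [Finset.mem_sdiff] at hx hy
    exact ⟨x, y, hM, hMcard, hxy, hx.2, hy.2, (Finset.mem_filter.1 hx.1).2,
      (Finset.mem_filter.1 hy.1).2⟩
  have hDne : D.Nonempty := by
    obtain ⟨M, hM, hMcard⟩ := exists_max_matching G
    obtain ⟨x, y, hxy⟩ := htwo M hM hMcard
    exact ⟨G.dist x y, M, x, y, hxy, rfl⟩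
  obtain ⟨M, x, y, ⟨hM, hMcard, hxyne, hxM, hyM, hxd, hyd⟩, hdist⟩ := Nat.sInf_mem hDne
  have hreach : G.Reachable x y := hcon x y hxd hyd
  have hρpos : 0 < G.dist x y := hreach.pos_dist_of_ne hxyne
  -- dist x y = 1 would give an augmenting edge
  have hρne1 : G.dist x y ≠ 1 := by
    intro h1
    obtain ⟨p, hp⟩ := hreach.exists_walk_length_eq_dist
    rw [h1] at hp
    have hadj : G.Adj x y := by
      cases p with
      | nil => simp at hp
      | cons h q =>
        cases q with
        | nil => exact h
        | cons h' q' => simp [SimpleGraph.Walk.length_cons] at hp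
    have hins : IsMat G (insert s(x, y) M) := hM.insert hadj hxM hyM
    have := hins.card_le_nuF
    rw [card_insert_edge hxM, hMcard] at this
    omega
  have hρ2 : 2 ≤ G.dist x y := by omega
  -- find the second vertex w on a geodesic from x to y
  obtain ⟨p, hp⟩ := hreach.exists_walk_length_eq_dist
  cases p with
  | nil =>
    simp only [SimpleGraph.Walk.length_nil] at hp
    omega
  | cons hxw q =>
    rename_i w
    simp only [SimpleGraph.Walk.length_cons] at hp
    have hwy_dist : G.dist w y ≤ G.dist x y - 1 := by
      have := G.dist_le q
      omega
    have hwx : w ≠ x := hxw.ne'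
    have hwd : 0 < G.degree w := (G.degree_pos_iff_exists_adj w).2 ⟨x, hxw.symm⟩
    have hdxw : G.dist x w = 1 := by
      have h1 := adj_dist_le_one hxw
      have h2 := (hcon x w hxd hwd).pos_dist_of_ne (Ne.symm hwx)
      omega
    have hwy : w ≠ y := by
      intro h
      subst h
      omega
    -- w must be saturated by M
    have hwM : w ∈ vts M := by
      by_contra hwM
      have hmem : G.dist x w ∈ D :=
        ⟨M, x, w, ⟨hM, hMcard, Ne.symm hwx, hxM, hwM, hxd, hwd⟩, rfl⟩
      have := Nat.sInf_le hmem
      rw [hdxw, ← hdist] at this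
      omega
    obtain ⟨N, hN, hNcard, hwN⟩ := hmiss w
    rcases swap G N.card M N ∅ w rfl hM hN hwM hwN (by simp) with
      ⟨A, hA, hAcard, _⟩ | ⟨B, z, hB, hBcard, hwB, hzB, hzM, hBsub, _⟩
    · have := hA.card_le_nuF
      rw [hAcard, hNcard] at this
      omega
    · have hBmax : B.card = nuF G := hBcard.trans hMcard
      by_cases hzx : z = x
      · -- use the pair (w, y)
        have hyB : y ∉ vts B := by
          intro h
          rcases Finset.mem_union.1 (hBsub h) with h' | h'
          · exact hyM (Finset.mem_sdiff.1 h').1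
          · rw [Finset.mem_singleton] at h'
            exact hxyne (h'.trans hzx).symm
        have hmem : G.dist w y ∈ D := ⟨B, w, y, ⟨hB, hBmax, hwy, hwB, hyB, hwd, hyd⟩, rfl⟩
        have := Nat.sInf_le hmem
        rw [← hdist] at this
        omega
      · -- use the pair (x, w)
        have hxB : x ∉ vts B := by
          intro h
          rcases Finset.mem_union.1 (hBsub h) with h' | h'
          · exact hxM (Finset.mem_sdiff.1 h').1
          · rw [Finset.mem_singleton] at h'
            exact hzx h'.symm
        have hmem : G.dist x w ∈ D := ⟨B, x, w, ⟨hB, hBmax, Ne.symm hwx, hxB, hwB, hxd, hwd⟩, rfl⟩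
        have := Nat.sInf_le hmem
        rw [hdxw, ← hdist] at this
        omega

end Gallai

section Graphs

/-- Delete a vertex (keeping it in the type, removing all incident edges). -/
def del (G : SimpleGraph V) (v : V) : SimpleGraph V where
  Adj a b := G.Adj a b ∧ a ≠ v ∧ b ≠ v
  symm := ⟨fun a b h => ⟨h.1.symm, h.2.2, h.2.1⟩⟩
  loopless := ⟨fun a h => G.loopless.irrefl a h.1⟩

instance {G : SimpleGraph V} [DecidableRel G.Adj] {v : V} : DecidableRel (del G v).Adj :=
  fun _ _ => instDecidableAnd

lemma del_edgeSet {G : SimpleGraph V} {v : V} {e : Sym2 V} :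
    e ∈ (del G v).edgeSet ↔ e ∈ G.edgeSet ∧ v ∉ e := by
  induction e using Sym2.inductionOn with
  | hf a b =>
    simp only [SimpleGraph.mem_edgeSet, Sym2.mem_iff]
    show (G.Adj a b ∧ a ≠ v ∧ b ≠ v) ↔ _
    constructor
    · rintro ⟨h1, h2, h3⟩
      exact ⟨h1, by rintro (rfl | rfl) <;> simp_all⟩
    · rintro ⟨h1, h2⟩
      push_neg at h2
      exact ⟨h1, Ne.symm h2.1, Ne.symm h2.2⟩

lemma isMat_del {G : SimpleGraph V} {v : V} {M : Finset (Sym2 V)} :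
    IsMat (del G v) M ↔ IsMat G M ∧ v ∉ vts M := by
  constructor
  · intro h
    refine ⟨⟨fun e he => (del_edgeSet.1 (h.1 e he)).1, h.2⟩, ?_⟩
    rw [mem_vts]
    rintro ⟨e, he, hv⟩
    exact (del_edgeSet.1 (h.1 e he)).2 hv
  · rintro ⟨h, hv⟩
    refine ⟨fun e he => del_edgeSet.2 ⟨h.1 e he, fun hve => hv (mem_vts.2 ⟨e, he, hve⟩)⟩, h.2⟩

variable [Fintype V]

lemma edgeFinset_del_card {G : SimpleGraph V} [DecidableRel G.Adj] (v : V) :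
    (del G v).edgeFinset.card + G.degree v = G.edgeFinset.card := by
  classical
  have heq : (del G v).edgeFinset = G.edgeFinset \ G.incidenceFinset v := by
    ext e
    simp only [SimpleGraph.mem_edgeFinset, Finset.mem_sdiff, SimpleGraph.mem_incidenceFinset,
      SimpleGraph.incidenceSet, Set.mem_setOf_eq, del_edgeSet]
    tauto
  have hsub : G.incidenceFinset v ⊆ G.edgeFinset := by
    intro e he
    rw [SimpleGraph.mem_incidenceFinset] at he
    exact SimpleGraph.mem_edgeFinset.2 he.1
  rw [heq, ← G.card_incidenceFinset_eq_degree v, Finset.card_sdiff_add_card_eq_card hsub]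

lemma degree_del_le {G : SimpleGraph V} [DecidableRel G.Adj] {v u : V} :
    (del G v).degree u ≤ G.degree u := by
  classical
  apply Finset.card_le_card
  intro w hw
  rw [SimpleGraph.mem_neighborFinset] at hw ⊢
  exact hw.1

lemma nuF_del_le {G : SimpleGraph V} {v : V} : nuF (del G v) ≤ nuF G := by
  obtain ⟨M, hM, hMcard⟩ := exists_max_matching (del G v)
  rw [← hMcard]
  exact (isMat_del.1 hM).1.card_le_nuF

/-- Restriction of a graph to edges inside a finset of vertices. -/
def part (G : SimpleGraph V) (S : Finset V) : SimpleGraph V where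
  Adj a b := G.Adj a b ∧ a ∈ S ∧ b ∈ S
  symm := ⟨fun a b h => ⟨h.1.symm, h.2.2, h.2.1⟩⟩
  loopless := ⟨fun a h => G.loopless.irrefl a h.1⟩

instance {G : SimpleGraph V} [DecidableRel G.Adj] {S : Finset V} :
    DecidableRel (part G S).Adj := fun _ _ => instDecidableAnd

lemma part_edgeSet {G : SimpleGraph V} {S : Finset V} {e : Sym2 V} :
    e ∈ (part G S).edgeSet ↔ e ∈ G.edgeSet ∧ ∀ w ∈ e, w ∈ S := by
  induction e using Sym2.inductionOn with
  | hf a b =>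
    simp only [SimpleGraph.mem_edgeSet, Sym2.mem_iff]
    show (G.Adj a b ∧ a ∈ S ∧ b ∈ S) ↔ _
    constructor
    · rintro ⟨h1, h2, h3⟩
      exact ⟨h1, by rintro w (rfl | rfl) <;> assumption⟩
    · rintro ⟨h1, h2⟩
      exact ⟨h1, h2 a (Or.inl rfl), h2 b (Or.inr rfl)⟩

lemma part_le {G : SimpleGraph V} {S : Finset V} {M : Finset (Sym2 V)}
    (h : IsMat (part G S) M) : IsMat G M ∧ ∀ v ∈ vts M, v ∈ S := by
  refine ⟨⟨fun e he => (part_edgeSet.1 (h.1 e he)).1, h.2⟩, ?_⟩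
  intro v hv
  obtain ⟨e, he, hve⟩ := mem_vts.1 hv
  exact (part_edgeSet.1 (h.1 e he)).2 v hve

lemma degree_part_le {G : SimpleGraph V} [DecidableRel G.Adj] {S : Finset V} {u : V} :
    (part G S).degree u ≤ G.degree u := by
  classical
  apply Finset.card_le_card
  intro w hw
  rw [SimpleGraph.mem_neighborFinset] at hw ⊢
  exact hw.1

lemma part_split_card {G : SimpleGraph V} [DecidableRel G.Adj] {S : Finset V}
    (hS : ∀ a b, G.Adj a b → (a ∈ S ↔ b ∈ S)) :
    G.edgeFinset.card = (part G S).edgeFinset.card + (part G Sᶜ).edgeFinset.card := by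
  classical
  rw [← Finset.card_union_of_disjoint, eq_comm]
  · congr 1
    ext e
    induction e using Sym2.inductionOn with
    | hf a b =>
      simp only [Finset.mem_union, SimpleGraph.mem_edgeFinset, part_edgeSet,
        SimpleGraph.mem_edgeSet, Sym2.mem_iff]
      constructor
      · rintro (⟨h, _⟩ | ⟨h, _⟩) <;> exact h
      · intro h
        by_cases ha : a ∈ S
        · exact Or.inl ⟨h, ha, (hS a b h).1 ha⟩
        · refine Or.inr ⟨h, ?_, ?_⟩
          · simpa using ha
          · simp only [Finset.mem_compl]
            exact fun hw => ha ((hS a b h).2 hw)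
  · rw [Finset.disjoint_left]
    intro e he1 he2
    rw [SimpleGraph.mem_edgeFinset, part_edgeSet] at he1 he2
    obtain ⟨a, b⟩ := e
    have ha1 := he1.2 a (Sym2.mem_mk_left a b)
    have ha2 := he2.2 a (Sym2.mem_mk_left a b)
    simp at ha2
    exact ha2 ha1

lemma nuF_part_add {G : SimpleGraph V} {S : Finset V} :
    nuF (part G S) + nuF (part G Sᶜ) ≤ nuF G := by
  classical
  obtain ⟨M₁, hM₁, hc₁⟩ := exists_max_matching (part G S)
  obtain ⟨M₂, hM₂, hc₂⟩ := exists_max_matching (part G Sᶜ)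
  obtain ⟨hM₁G, hM₁S⟩ := part_le hM₁
  obtain ⟨hM₂G, hM₂S⟩ := part_le hM₂
  have hvdisj : ∀ v, v ∈ vts M₁ → v ∈ vts M₂ → False := by
    intro v h1 h2
    have := hM₂S v h2
    simp only [Finset.mem_compl] at this
    exact this (hM₁S v h1)
  have hdisj : Disjoint M₁ M₂ := by
    rw [Finset.disjoint_left]
    intro e he1 he2
    obtain ⟨a, b⟩ := e
    exact hvdisj a (mem_vts.2 ⟨_, he1, Sym2.mem_mk_left a b⟩)
      (mem_vts.2 ⟨_, he2, Sym2.mem_mk_left a b⟩)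
  have hunion : IsMat G (M₁ ∪ M₂) := by
    constructor
    · intro e he
      rcases Finset.mem_union.1 he with h | h
      · exact hM₁G.1 e h
      · exact hM₂G.1 e h
    · intro e he f hf hef v hve hvf
      rcases Finset.mem_union.1 he with h1 | h1 <;> rcases Finset.mem_union.1 hf with h2 | h2
      · exact hM₁G.2 e h1 f h2 hef v hve hvf
      · exact hvdisj v (mem_vts.2 ⟨e, h1, hve⟩) (mem_vts.2 ⟨f, h2, hvf⟩)
      · exact hvdisj v (mem_vts.2 ⟨f, h2, hvf⟩) (mem_vts.2 ⟨e, h1, hve⟩)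
      · exact hM₂G.2 e h1 f h2 hef v hve hvf
  have := hunion.card_le_nuF
  rwa [Finset.card_union_of_disjoint hdisj, hc₁, hc₂] at this

end Graphs

lemma div_add_div_le (a b c : ℕ) : a / c + b / c ≤ (a + b) / c := by
  rcases Nat.eq_zero_or_pos c with rfl | hc
  · simp
  · rw [Nat.le_div_iff_mul_le hc, add_mul]
    exact Nat.add_le_add (Nat.div_mul_le_self a c) (Nat.div_mul_le_self b c)

lemma rhs_mono (d c : ℕ) {a b : ℕ} (h : a ≤ b) :
    d * a + (d / 2) * (a / c) ≤ d * b + (d / 2) * (b / c) :=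
  Nat.add_le_add (Nat.mul_le_mul_left _ h) (Nat.mul_le_mul_left _ (Nat.div_le_div_right h))

section MainInduction

variable [Fintype V]

lemma main_bound (d : ℕ) :
    ∀ (m : ℕ) (G : SimpleGraph V) [DecidableRel G.Adj], G.edgeFinset.card = m →
      (∀ v, G.degree v ≤ d) →
      G.edgeFinset.card ≤ d * nuF G + (d / 2) * (nuF G / ((d + 1) / 2)) := by
  intro m
  induction m using Nat.strong_induction_on with
  | _ m IH =>
  intro G instG hm hdeg
  by_cases h0 : G.edgeFinset.card = 0
  · rw [h0]
    exact Nat.zero_le _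
  -- there is an edge, so `nuF G ≥ 1`
  obtain ⟨e₀, he₀⟩ := Finset.card_pos.1 (Nat.pos_of_ne_zero h0)
  have hν1 : 1 ≤ nuF G := by
    have h := (singleton_isMat (SimpleGraph.mem_edgeFinset.1 he₀)).card_le_nuF
    simpa using h
  by_cases hcase1 : ∃ v, 0 < G.degree v ∧ nuF (del G v) < nuF G
  · -- delete an essential vertex
    obtain ⟨v, hvdeg, hvlt⟩ := hcase1
    obtain ⟨ν₀, hν₀⟩ := Nat.exists_eq_add_of_le hν1
    have hdel_deg : ∀ u, (del G v).degree u ≤ d := fun u => le_trans degree_del_le (hdeg u)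
    have hcard := edgeFinset_del_card (G := G) v
    have hlt : (del G v).edgeFinset.card < m := by omega
    have hIH := IH _ hlt (del G v) rfl hdel_deg
    have hν' : nuF (del G v) ≤ ν₀ := by omega
    have hmono := rhs_mono d ((d + 1) / 2) hν'
    have hstep : G.edgeFinset.card ≤ d * ν₀ + (d / 2) * (ν₀ / ((d + 1) / 2)) + d := by
      rw [← hcard]
      exact Nat.add_le_add (le_trans hIH hmono) (hdeg v)
    rw [hν₀]
    calc G.edgeFinset.card ≤ d * ν₀ + (d / 2) * (ν₀ / ((d + 1) / 2)) + d := hstep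
      _ = d * (1 + ν₀) + (d / 2) * (ν₀ / ((d + 1) / 2)) := by ring
      _ ≤ d * (1 + ν₀) + (d / 2) * ((1 + ν₀) / ((d + 1) / 2)) :=
          Nat.add_le_add_left (Nat.mul_le_mul_left _
            (Nat.div_le_div_right (by omega))) _
  · -- every vertex is missed by some maximum matching
    push_neg at hcase1
    have hmiss : ∀ v, ∃ M : Finset (Sym2 V), IsMat G M ∧ M.card = nuF G ∧ v ∉ vts M := by
      intro v
      by_cases hv : 0 < G.degree v
      · have hge := hcase1 v hv
        obtain ⟨M, hM, hMcard⟩ := exists_max_matching (del G v)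
        obtain ⟨hMG, hvM⟩ := isMat_del.1 hM
        have hle := hMG.card_le_nuF
        have := nuF_del_le (G := G) (v := v)
        exact ⟨M, hMG, by omega, hvM⟩
      · obtain ⟨M, hM, hMcard⟩ := exists_max_matching G
        refine ⟨M, hM, hMcard, fun hvM => hv ?_⟩
        obtain ⟨e, heM, hve⟩ := mem_vts.1 hvM
        obtain ⟨b, rfl⟩ := Sym2.mem_iff_exists.1 hve
        exact (G.degree_pos_iff_exists_adj v).2 ⟨b, G.mem_edgeSet.1 (hM.1 _ heM)⟩
    by_cases hconn : ∀ x y, 0 < G.degree x → 0 < G.degree y → G.Reachable x y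
    · -- connected support: use Gallai's lemma
      have hs := gallai G hconn hmiss
      set supp := Finset.univ.filter fun v => 0 < G.degree v with hsupp
      set ν := nuF G with hν
      have hsum : ∑ v ∈ supp, G.degree v = 2 * G.edgeFinset.card := by
        rw [← G.sum_degrees_eq_twice_card_edges]
        rw [← Finset.sum_filter_add_sum_filter_not Finset.univ (fun v => 0 < G.degree v)]
        have : ∑ v ∈ Finset.univ.filter (fun v => ¬ 0 < G.degree v), G.degree v = 0 := by
          apply Finset.sum_eq_zero
          intro v hv
          rw [Finset.mem_filter] at hv
          omega
        rw [this, add_zero]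
      by_cases hcmp : 2 * ν + 1 ≤ d
      · -- small case : count within the support clique bound
        have hdegs : ∀ v ∈ supp, G.degree v ≤ supp.card - 1 := by
          intro v hv
          have hsub : G.neighborFinset v ⊆ supp.erase v := by
            intro u hu
            rw [SimpleGraph.mem_neighborFinset] at hu
            refine Finset.mem_erase.2 ⟨hu.ne', ?_⟩
            exact Finset.mem_filter.2 ⟨Finset.mem_univ _,
              (G.degree_pos_iff_exists_adj u).2 ⟨v, hu.symm⟩⟩
          calc G.degree v ≤ (supp.erase v).card := Finset.card_le_card hsub
            _ = supp.card - 1 := Finset.card_erase_of_mem hv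
        have h2e : 2 * G.edgeFinset.card ≤ supp.card * (supp.card - 1) := by
          rw [← hsum]
          exact Finset.sum_le_card_nsmul supp _ _ hdegs
        have hmul : supp.card * (supp.card - 1) ≤ (2 * ν + 1) * (2 * ν) :=
          Nat.mul_le_mul hs (by omega)
        have he_le : G.edgeFinset.card ≤ ν * (2 * ν + 1) := by
          have h1 : 2 * G.edgeFinset.card ≤ 2 * (ν * (2 * ν + 1)) := by
            calc 2 * G.edgeFinset.card ≤ (2 * ν + 1) * (2 * ν) := le_trans h2e hmul
              _ = 2 * (ν * (2 * ν + 1)) := by ring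
          omega
        calc G.edgeFinset.card ≤ ν * (2 * ν + 1) := he_le
          _ ≤ ν * d := Nat.mul_le_mul_left _ hcmp
          _ = d * ν := by ring
          _ ≤ d * ν + (d / 2) * (ν / ((d + 1) / 2)) := Nat.le_add_right _ _
      · -- large case : degree bound
        push_neg at hcmp
        have h2e : 2 * G.edgeFinset.card ≤ supp.card * d := by
          rw [← hsum]
          exact Finset.sum_le_card_nsmul supp _ _ (fun v _ => hdeg v)
        have hsd : supp.card * d ≤ (2 * ν + 1) * d := Nat.mul_le_mul_right _ hs
        have key : 2 * G.edgeFinset.card ≤ 2 * (d * ν) + d := by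
          have : (2 * ν + 1) * d = 2 * (d * ν) + d := by ring
          omega
        have step1 : G.edgeFinset.card ≤ d * ν + d / 2 := by
          generalize d * ν = q at key ⊢
          omega
        have hcν : (d + 1) / 2 ≤ ν := by omega
        have step2 : d / 2 ≤ (d / 2) * (ν / ((d + 1) / 2)) := by
          rcases Nat.eq_zero_or_pos d with rfl | hd
          · simp
          · have hcpos : 0 < (d + 1) / 2 := by omega
            have : 0 < ν / ((d + 1) / 2) := Nat.div_pos hcν hcpos
            exact Nat.le_mul_of_pos_right _ this
        exact le_trans step1 (Nat.add_le_add_left step2 _)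
    · -- disconnected support : split along a reachability class
      push_neg at hconn
      obtain ⟨x, y, hxd, hyd, hxy⟩ := hconn
      letI : DecidablePred (G.Reachable x) := fun u => Classical.dec _
      set S : Finset V := Finset.univ.filter (fun u => G.Reachable x u) with hSdef
      have hxS : x ∈ S := Finset.mem_filter.2 ⟨Finset.mem_univ _, ⟨SimpleGraph.Walk.nil⟩⟩
      have hyS : y ∉ S := by
        rw [hSdef, Finset.mem_filter]
        exact fun h => hxy h.2
      have hSclosed : ∀ a b, G.Adj a b → (a ∈ S ↔ b ∈ S) := by
        intro a b hab
        simp only [hSdef, Finset.mem_filter, Finset.mem_univ, true_and]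
        exact ⟨fun h => h.trans hab.reachable, fun h => h.trans hab.symm.reachable⟩
      have hsplit := part_split_card (G := G) hSclosed
      -- both sides have an edge
      obtain ⟨u, hu⟩ := (G.degree_pos_iff_exists_adj x).1 hxd
      have he1 : 0 < (part G S).edgeFinset.card := by
        rw [Finset.card_pos]
        refine ⟨s(x, u), SimpleGraph.mem_edgeFinset.2 ?_⟩
        show (part G S).Adj x u
        exact ⟨hu, hxS, (hSclosed x u hu).1 hxS⟩
      obtain ⟨u', hu'⟩ := (G.degree_pos_iff_exists_adj y).1 hyd
      have he2 : 0 < (part G Sᶜ).edgeFinset.card := by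
        rw [Finset.card_pos]
        refine ⟨s(y, u'), SimpleGraph.mem_edgeFinset.2 ?_⟩
        show (part G Sᶜ).Adj y u'
        refine ⟨hu', Finset.mem_compl.2 hyS, Finset.mem_compl.2 fun h => hyS ?_⟩
        exact (hSclosed y u' hu').2 h
      have hIH1 := IH _ (by omega) (part G S) rfl
        (fun u => le_trans degree_part_le (hdeg u))
      have hIH2 := IH _ (by omega) (part G Sᶜ) rfl
        (fun u => le_trans degree_part_le (hdeg u))
      have hνadd := nuF_part_add (G := G) (S := S)
      set ν₁ := nuF (part G S)
      set ν₂ := nuF (part G Sᶜ)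
      have hdiv : ν₁ / ((d + 1) / 2) + ν₂ / ((d + 1) / 2) ≤ (ν₁ + ν₂) / ((d + 1) / 2) :=
        div_add_div_le _ _ _
      have hfinal : d * ν₁ + (d / 2) * (ν₁ / ((d + 1) / 2)) +
          (d * ν₂ + (d / 2) * (ν₂ / ((d + 1) / 2))) ≤
          d * nuF G + (d / 2) * (nuF G / ((d + 1) / 2)) := by
        have h1 : d * ν₁ + d * ν₂ = d * (ν₁ + ν₂) := by ring
        have h2 : (d / 2) * (ν₁ / ((d + 1) / 2)) + (d / 2) * (ν₂ / ((d + 1) / 2)) =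
            (d / 2) * (ν₁ / ((d + 1) / 2) + ν₂ / ((d + 1) / 2)) := by ring
        have h3 : d * (ν₁ + ν₂) + (d / 2) * ((ν₁ + ν₂) / ((d + 1) / 2)) ≤
            d * nuF G + (d / 2) * (nuF G / ((d + 1) / 2)) := rhs_mono _ _ hνadd
        calc d * ν₁ + (d / 2) * (ν₁ / ((d + 1) / 2)) +
            (d * ν₂ + (d / 2) * (ν₂ / ((d + 1) / 2)))
            = d * (ν₁ + ν₂) + ((d / 2) * (ν₁ / ((d + 1) / 2)) +
              (d / 2) * (ν₂ / ((d + 1) / 2))) := by ring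
          _ ≤ d * (ν₁ + ν₂) + (d / 2) * ((ν₁ + ν₂) / ((d + 1) / 2)) := by
              rw [h2]
              exact Nat.add_le_add_left (Nat.mul_le_mul_left _ hdiv) _
          _ ≤ _ := h3
      calc G.edgeFinset.card
          = (part G S).edgeFinset.card + (part G Sᶜ).edgeFinset.card := hsplit
        _ ≤ d * ν₁ + (d / 2) * (ν₁ / ((d + 1) / 2)) +
            (d * ν₂ + (d / 2) * (ν₂ / ((d + 1) / 2))) := Nat.add_le_add hIH1 hIH2
        _ ≤ _ := hfinal

/-- The Chvátal–Hanson bound in the special case `ν ≤ d`, `Δ ≤ d`. -/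
lemma ch_bound (d : ℕ) (G : SimpleGraph V) [DecidableRel G.Adj]
    (hν : nuF G ≤ d) (hdeg : ∀ v, G.degree v ≤ d) :
    G.edgeFinset.card ≤ fCH (d + 1) := by
  have h := main_bound d G.edgeFinset.card G rfl hdeg
  have h2 := rhs_mono d ((d + 1) / 2) hν
  have hle : G.edgeFinset.card ≤ d * d + (d / 2) * (d / ((d + 1) / 2)) := le_trans h h2
  rcases Nat.even_or_odd d with hev | hodd
  · -- d even, k = d + 1 odd : fCH = (d+1) * d
    obtain ⟨t, rfl⟩ := hev
    have hodd' : Odd (t + t + 1) := ⟨t, by ring⟩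
    unfold fCH
    rw [if_pos (by simpa using hodd')]
    rcases Nat.eq_zero_or_pos t with rfl | ht
    · simpa using hle
    · have h1 : (t + t + 1) / 2 = t := by omega
      have h2 : (t + t) / t = 2 := Nat.div_eq_of_lt_le (by omega) (by omega)
      have h3 : (t + t) / 2 = t := by omega
      rw [h1, h2, h3] at hle
      have h4 : t + t + 1 - 1 = t + t := by omega
      rw [h4]
      calc G.edgeFinset.card ≤ (t + t) * (t + t) + t * 2 := hle
        _ = (t + t + 1) * (t + t) := by ring
  · -- d odd, k = d + 1 even
    obtain ⟨t, rfl⟩ := hodd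
    have hnotodd : ¬ Odd (2 * t + 1 + 1) := by
      simp [Nat.odd_iff, Nat.add_mod, Nat.mul_mod]
    unfold fCH
    rw [if_neg hnotodd]
    have hdiv1 : (2 * t + 1) / 2 = t := by omega
    have hdiv2 : (2 * t + 1 + 1) / 2 = t + 1 := by omega
    have hdiv3 : (2 * t + 1) / ((2 * t + 1 + 1) / 2) = 1 := by
      rw [hdiv2]
      refine Nat.div_eq_of_lt_le (by omega) (by omega)
    rw [hdiv1, hdiv3] at hle
    have htarget : (2 * t + 1 + 1) * (2 * (2 * t + 1 + 1) - 3) / 2 =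
        (2 * t + 1) * (2 * t + 1) + t := by
      have h2 : 2 * (2 * t + 1 + 1) - 3 = 4 * t + 1 := by omega
      have h1 : (2 * t + 1 + 1) * (4 * t + 1) = 2 * ((2 * t + 1) * (2 * t + 1) + t) := by ring
      rw [h2]
      omega
    rw [htarget]
    simpa using hle

end MainInduction

section Select

variable {α : Type*} [DecidableEq α]

/-- Greedy system of distinct representatives for large finsets. -/
lemma sdr : ∀ (m : ℕ) (C : Fin m → Finset α), (∀ i, m ≤ (C i).card) →
    ∃ y : Fin m → α, Function.Injective y ∧ ∀ i, y i ∈ C i := by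
  intro m
  induction m with
  | zero => exact fun C h => ⟨fun i => i.elim0, fun a => a.elim0, fun i => i.elim0⟩
  | succ n IH =>
    intro C h
    obtain ⟨a, ha⟩ := Finset.card_pos.1 (lt_of_lt_of_le (Nat.succ_pos n) (h 0))
    obtain ⟨y', hinj, hmem⟩ := IH (fun i => (C i.succ).erase a) (fun i => by
      show n ≤ ((C i.succ).erase a).card
      have h1 := h i.succ
      have h2 := Finset.pred_card_le_card_erase (s := C i.succ) (a := a)
      omega)
    refine ⟨fun i => if hi : i = 0 then a else y' (i.pred hi), ?_, ?_⟩
    · intro i j hij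
      dsimp only at hij
      by_cases hi : i = 0 <;> by_cases hj : j = 0
      · rw [hi, hj]
      · rw [dif_pos hi, dif_neg hj] at hij
        exact absurd hij.symm (Finset.ne_of_mem_erase (hmem (j.pred hj)))
      · rw [dif_neg hi, dif_pos hj] at hij
        exact absurd hij (Finset.ne_of_mem_erase (hmem (i.pred hi)))
      · rw [dif_neg hi, dif_neg hj] at hij
        rw [← Fin.succ_pred i hi, ← Fin.succ_pred j hj, hinj hij]
    · intro i
      dsimp only
      by_cases hi : i = 0
      · subst hi
        rw [dif_pos rfl]
        exact ha
      · rw [dif_neg hi]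
        have := Finset.mem_of_mem_erase (hmem (i.pred hi))
        rwa [Fin.succ_pred] at this

/-- Intersection of finitely many large subsets of `Yf` is large. -/
lemma inter_bound : ∀ (m : ℕ) (C : Fin m → Finset α) (Yf : Finset α) (β : ℕ),
    (∀ i, Yf.card ≤ (C i).card + β) → (∀ i, C i ⊆ Yf) →
    ∃ T, T ⊆ Yf ∧ (∀ i, T ⊆ C i) ∧ Yf.card ≤ T.card + m * β := by
  intro m
  induction m with
  | zero =>
    intro C Yf β h hsub
    exact ⟨Yf, Finset.Subset.refl _, fun i => i.elim0, by omega⟩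
  | succ n IH =>
    intro C Yf β h hsub
    obtain ⟨T', hT'Y, hT'C, hT'card⟩ := IH (fun i => C i.succ) Yf β
      (fun i => h i.succ) (fun i => hsub i.succ)
    refine ⟨T' ∩ C 0, le_trans Finset.inter_subset_left hT'Y, ?_, ?_⟩
    · intro i
      rcases Fin.eq_zero_or_eq_succ i with rfl | ⟨j, rfl⟩
      · exact Finset.inter_subset_right
      · exact le_trans Finset.inter_subset_left (hT'C j)
    · have h1 : (T' \ C 0).card + (T' ∩ C 0).card = T'.card :=
        Finset.card_sdiff_add_card_inter _ _
      have h2 : T' \ C 0 ⊆ Yf \ C 0 := Finset.sdiff_subset_sdiff hT'Y (le_refl _)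
      have h3 : (Yf \ C 0).card = Yf.card - (C 0).card := Finset.card_sdiff_of_subset (hsub 0)
      have h4 := Finset.card_le_card h2
      have h5 := h 0
      have h6 := Finset.card_le_card (hsub 0)
      have e1 : (n + 1) * β = n * β + β := Nat.succ_mul n β
      omega

end Select

section Config

/-- A configuration of `k` triangles through a common vertex gives a copy of `F_k`. -/
lemma not_fkFree_of_config {W : Type*} (k : ℕ) (G : SimpleGraph W) (c : W) (p q : Fin k → W)
    (hcp : ∀ i, G.Adj c (p i)) (hcq : ∀ i, G.Adj c (q i)) (hpq : ∀ i, G.Adj (p i) (q i))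
    (hp : Function.Injective p) (hq : Function.Injective q)
    (hpq' : ∀ i j, p i ≠ q j) (hcp' : ∀ i, c ≠ p i) (hcq' : ∀ i, c ≠ q i)
    (hfree : FkFree k G) : False := by
  set φ : Option (Fin k × Fin 2) → W := fun a =>
    match a with
    | none => c
    | some (i, j) => if j = 0 then p i else q i with hφ
  have hφnone : φ none = c := rfl
  have hφ0 : ∀ i : Fin k, φ (some (i, 0)) = p i := fun i => if_pos rfl
  have hφ1 : ∀ i : Fin k, φ (some (i, 1)) = q i := fun i => if_neg (by decide)
  have hsome : ∀ (x : Fin k × Fin 2), φ (some x) = p x.1 ∨ φ (some x) = q x.1 := by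
    rintro ⟨i, j⟩
    have : j = 0 ∨ j = 1 := by omega
    rcases this with rfl | rfl
    · exact Or.inl (hφ0 i)
    · exact Or.inr (hφ1 i)
  have hadjc : ∀ (x : Fin k × Fin 2), G.Adj c (φ (some x)) := by
    intro x
    rcases hsome x with h | h <;> rw [h]
    · exact hcp x.1
    · exact hcq x.1
  have hrel : ∀ a b : Option (Fin k × Fin 2),
      (a = none ∨ b = none ∨ ∃ i, a = some (i, 0) ∧ b = some (i, 1)) → a ≠ b →
      G.Adj (φ a) (φ b) := by
    rintro a b (rfl | rfl | ⟨i, rfl, rfl⟩) hne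
    · cases b with
      | none => exact absurd rfl hne
      | some x => exact hadjc x
    · cases a with
      | none => exact absurd rfl hne
      | some x => exact (hadjc x).symm
    · rw [hφ0, hφ1]
      exact hpq i
  have hmap : ∀ {a b : Option (Fin k × Fin 2)}, (friendshipGraph k).Adj a b →
      G.Adj (φ a) (φ b) := by
    intro a b hab
    rw [friendshipGraph, SimpleGraph.fromRel_adj] at hab
    obtain ⟨hne, h | h⟩ := hab
    · exact hrel a b h hne
    · exact (hrel b a h hne.symm).symm
  have hinj : Function.Injective φ := by
    intro a b hab
    cases a with
    | none =>
      cases b with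
      | none => rfl
      | some x =>
        rw [hφnone] at hab
        rcases hsome x with h | h <;> rw [h] at hab
        · exact absurd hab (hcp' x.1)
        · exact absurd hab (hcq' x.1)
    | some x =>
      cases b with
      | none =>
        rw [hφnone] at hab
        rcases hsome x with h | h <;> rw [h] at hab
        · exact absurd hab.symm (hcp' x.1)
        · exact absurd hab.symm (hcq' x.1)
      | some x' =>
        obtain ⟨i, j⟩ := x
        obtain ⟨i', j'⟩ := x'
        have hj : j = 0 ∨ j = 1 := by omega
        have hj' : j' = 0 ∨ j' = 1 := by omega
        rcases hj with rfl | rfl <;> rcases hj' with rfl | rfl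
        · rw [hφ0, hφ0] at hab
          rw [hp hab]
        · rw [hφ0, hφ1] at hab
          exact absurd hab (hpq' i i')
        · rw [hφ1, hφ0] at hab
          exact absurd hab.symm (hpq' i' i)
        · rw [hφ1, hφ1] at hab
          rw [hq hab]
  exact hfree ⟨φ, hmap⟩ hinj

end Config

lemma enum_finset {γ : Type*} (t : Finset γ) (k : ℕ) (hc : t.card = k) :
    ∃ g : Fin k → γ, Function.Injective g ∧ ∀ i, g i ∈ t := by
  refine ⟨fun i => (t.equivFin.symm ⟨i.1, lt_of_lt_of_le i.2 hc.ge⟩).1, ?_,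
    fun i => (t.equivFin.symm _).2⟩
  intro i j hij
  have h1 := t.equivFin.symm.injective (Subtype.coe_injective hij)
  injection h1 with h2
  exact Fin.ext h2

lemma exists_rep_sym2 {γ : Type*} (z : Sym2 γ) : ∃ a b, z = s(a, b) :=
  Sym2.inductionOn z (fun a b => ⟨a, b, rfl⟩)

end CHAux


open CHAux

/-- If `G` is `F_k`-free and every edge of `G[X]` has at least `|Y| - β` common neighbors
in `Y`, with `|Y| > 2k(β+1)`, then `e(G[X]) ≤ f(k-1,k-1)`. -/
theorem heavy_edges_count {V : Type*} [Fintype V] (k β : ℕ) (hk : 1 ≤ k)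
    (G : SimpleGraph V) (X Y : Set V)
    (hpart : X ∪ Y = Set.univ) (hdisj : Disjoint X Y) (hfree : FkFree k G)
    (hcn : ∀ x x', x ∈ X → x' ∈ X → G.Adj x x' →
      Y.ncard - β ≤ ((G.neighborSet x ∩ G.neighborSet x') ∩ Y).ncard)
    (hY : 2 * k * (β + 1) < Y.ncard) :
    ((G.induce X).edgeSet).ncard ≤ fCH k := by
  classical
  letI : Fintype ↥X := X.toFinite.fintype
  letI : Fintype ↥Y := Y.toFinite.fintype
  set H : SimpleGraph ↥X := G.induce X with hH
  letI : DecidableRel H.Adj := Classical.decRel _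
  have hkb : β ≤ k * β := Nat.le_mul_of_pos_left β hk
  have hexp : 2 * k * (β + 1) = 2 * (k * β) + 2 * k := by ring
  have hYcard : Y.ncard = Y.toFinset.card := Set.ncard_eq_toFinset_card' Y
  have hadjH : ∀ {a b : ↥X}, H.Adj a b → G.Adj ↑a ↑b := fun h => h
  -- common neighbourhood sets
  have hC : ∀ a b : ↥X, H.Adj a b →
      Y.toFinset.card ≤ ((G.neighborSet ↑a ∩ G.neighborSet ↑b) ∩ Y).toFinset.card + β ∧
      ((G.neighborSet ↑a ∩ G.neighborSet ↑b) ∩ Y).toFinset ⊆ Y.toFinset := by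
    intro a b hab
    have h1 := hcn ↑a ↑b a.2 b.2 (hadjH hab)
    have h2 : ((G.neighborSet ↑a ∩ G.neighborSet ↑b) ∩ Y).ncard =
        ((G.neighborSet ↑a ∩ G.neighborSet ↑b) ∩ Y).toFinset.card :=
      Set.ncard_eq_toFinset_card' _
    constructor
    · omega
    · intro v hv
      rw [Set.mem_toFinset] at hv ⊢
      exact hv.2
  -- the degree bound
  have hdeg : ∀ v : ↥X, H.degree v ≤ k - 1 := by
    intro x
    by_contra hx
    push_neg at hx
    have hxk : k ≤ H.degree x := by omega
    obtain ⟨t, htsub, htcard⟩ := Finset.exists_subset_card_eq (s := H.neighborFinset x) hxk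
    obtain ⟨g, hginj, hgmem⟩ := enum_finset t k htcard
    have hgadj : ∀ i, H.Adj x (g i) := by
      intro i
      have := htsub (hgmem i)
      rwa [SimpleGraph.mem_neighborFinset] at this
    have hCcard : ∀ i, k ≤ (((G.neighborSet ↑x ∩ G.neighborSet ↑(g i)) ∩ Y).toFinset).card := by
      intro i
      have := (hC x (g i) (hgadj i)).1
      omega
    obtain ⟨y, hyinj, hymem⟩ := sdr k
      (fun i => ((G.neighborSet ↑x ∩ G.neighborSet ↑(g i)) ∩ Y).toFinset) hCcard
    have hymem' : ∀ i, y i ∈ (G.neighborSet ↑x ∩ G.neighborSet ↑(g i)) ∩ Y := by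
      intro i
      have := hymem i
      simpa only [Set.mem_toFinset] using this
    have hyY : ∀ i, y i ∈ Y := fun i => (hymem' i).2
    have hyadjx : ∀ i, G.Adj ↑x (y i) := fun i => (hymem' i).1.1
    have hyadjg : ∀ i, G.Adj ↑(g i) (y i) := fun i => (hymem' i).1.2
    have hXnotY : ∀ (a : ↥X) (v : V), v ∈ Y → (a : V) ≠ v := by
      intro a v hv h
      exact Set.disjoint_left.1 hdisj (h ▸ a.2) hv
    exact not_fkFree_of_config k G ↑x (fun i => ↑(g i)) y
      (fun i => hadjH (hgadj i)) hyadjx hyadjg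
      (fun i j hij => hginj (Subtype.coe_injective hij)) hyinj
      (fun i j => hXnotY (g i) (y j) (hyY j))
      (fun i h => (hgadj i).ne (Subtype.coe_injective h))
      (fun i => hXnotY x (y i) (hyY i)) hfree
  -- the matching bound
  have hnu : nuF H ≤ k - 1 := by
    by_contra hnu
    push_neg at hnu
    have hnuk : k ≤ nuF H := by omega
    obtain ⟨M, hM, hMcard⟩ := exists_max_matching H
    obtain ⟨M', hM'sub, hM'card⟩ := Finset.exists_subset_card_eq (s := M) (n := k) (by omega)
    have hM' : IsMat H M' := hM.subset hM'sub
    obtain ⟨e, heinj, hemem⟩ := enum_finset M' k hM'card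
    have hrep : ∀ i, ∃ a b : ↥X, e i = s(a, b) := fun i => exists_rep_sym2 (e i)
    choose p q hpq using hrep
    have hadj : ∀ i, H.Adj (p i) (q i) := by
      intro i
      have := hM'.1 _ (hemem i)
      rw [hpq i] at this
      exact H.mem_edgeSet.1 this
    have hmem_p : ∀ i, p i ∈ e i := by
      intro i
      rw [hpq i]
      exact Sym2.mem_mk_left _ _
    have hmem_q : ∀ i, q i ∈ e i := by
      intro i
      rw [hpq i]
      exact Sym2.mem_mk_right _ _
    have hdistinct : ∀ i j, i ≠ j → ∀ v, v ∈ e i → v ∉ e j := by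
      intro i j hij v hvi hvj
      exact hM'.2 _ (hemem i) _ (hemem j) (fun h => hij (heinj h)) v hvi hvj
    obtain ⟨T, hTY, hTC, hTcard⟩ := inter_bound k
      (fun i => ((G.neighborSet ↑(p i) ∩ G.neighborSet ↑(q i)) ∩ Y).toFinset) Y.toFinset β
      (fun i => (hC (p i) (q i) (hadj i)).1) (fun i => (hC (p i) (q i) (hadj i)).2)
    have hTpos : 0 < T.card := by omega
    obtain ⟨y, hy⟩ := Finset.card_pos.1 hTpos
    have hyY : y ∈ Y := by
      have := hTY hy
      rwa [Set.mem_toFinset] at this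
    have hyC : ∀ i, y ∈ ((G.neighborSet ↑(p i) ∩ G.neighborSet ↑(q i)) ∩ Y) := by
      intro i
      have := hTC i hy
      simpa only [Set.mem_toFinset] using this
    have hXnotY : ∀ (a : ↥X) (v : V), v ∈ Y → (a : V) ≠ v := by
      intro a v hv h
      exact Set.disjoint_left.1 hdisj (h ▸ a.2) hv
    exact not_fkFree_of_config k G y (fun i => ↑(p i)) (fun i => ↑(q i))
      (fun i => ((hyC i).1.1 : G.Adj ↑(p i) y).symm)
      (fun i => ((hyC i).1.2 : G.Adj ↑(q i) y).symm)
      (fun i => hadjH (hadj i))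
      (by
        intro i j hij
        by_contra hne
        have hpp : p i = p j := Subtype.coe_injective hij
        refine hdistinct i j hne (p i) (hmem_p i) ?_
        rw [hpp]
        exact hmem_p j)
      (by
        intro i j hij
        by_contra hne
        have hqq : q i = q j := Subtype.coe_injective hij
        refine hdistinct i j hne (q i) (hmem_q i) ?_
        rw [hqq]
        exact hmem_q j)
      (by
        intro i j h
        have hpq2 : p i = q j := Subtype.coe_injective h
        by_cases hij : i = j
        · subst hij
          exact (hadj i).ne hpq2
        · refine hdistinct i j hij (p i) (hmem_p i) ?_
          rw [hpq2]
          exact hmem_q j)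
      (fun i h => hXnotY (p i) y hyY h.symm)
      (fun i h => hXnotY (q i) y hyY h.symm) hfree
  -- conclude via the Chvátal–Hanson bound
  have hch := ch_bound (k - 1) H hnu hdeg
  have hk1 : k - 1 + 1 = k := by omega
  rw [hk1] at hch
  have hcount : ((G.induce X).edgeSet).ncard = H.edgeFinset.card := by
    show H.edgeSet.ncard = H.edgeFinset.card
    rw [← SimpleGraph.coe_edgeFinset H, Set.ncard_coe_finset]
  rw [hcount]
  exact hch
end

section
/- Let G be an F_k-free graph with bipartition V(G) = X ∪ Y such that the number of non-edges between X and Y is r. If v ∈ X satisfies d_{G[X]}(v) ≥ 2k and d_{G[Y]}(v) ≥ d_{G[X]}(v), then r ≥ ⌊d_{G[X]}(v)/k⌋ · (d_{G[X]}(v) − k + 1); consequently d_{G[X]}(v) ≤ 2√(kr). -/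
open SimpleGraph

/-!
Let `A` and `B` be the neighbours of `v` in `X` and in `Y`, and `d = |A| ≤ |B|`. An edge between
`A` and `B` closes a triangle through `v`, so `k` vertex-disjoint such edges would form a copy of
`F_k` centred at `v`: every matching between `A` and `B` has fewer than `k` edges. Deleting the
endpoints of a maximum matching leaves at least `d - k + 1` vertices on each side with no edge
between them, so `r ≥ (d - k + 1)²`. Both bounds follow, since `d / k ≤ d - k + 1` and
`d ≤ 2 (d - k + 1)` when `2k ≤ d`.
-/

open Finset

section CrossMatching

variable {α β : Type*} (R : α → β → Prop) (A : Finset α) (B : Finset β)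

def IsCrossMatching (M : Finset (α × β)) : Prop :=
  (∀ p ∈ M, p.1 ∈ A ∧ p.2 ∈ B ∧ R p.1 p.2) ∧
    Set.InjOn Prod.fst (M : Set (α × β)) ∧ Set.InjOn Prod.snd (M : Set (α × β))

variable {R A B} [DecidableEq α] [DecidableEq β]

theorem IsCrossMatching.insert {M : Finset (α × β)} (hM : IsCrossMatching R A B M)
    {a : α} {b : β} (ha : a ∈ A) (hb : b ∈ B) (hab : R a b) (ha' : a ∉ M.image Prod.fst)
    (hb' : b ∉ M.image Prod.snd) : IsCrossMatching R A B (insert (a, b) M) := by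
  have hnew : (a, b) ∉ (M : Set (α × β)) := fun h => ha' (mem_image_of_mem Prod.fst h)
  rw [IsCrossMatching, coe_insert, Set.injOn_insert hnew, Set.injOn_insert hnew, ← coe_image,
    ← coe_image, mem_coe, mem_coe]
  refine ⟨?_, ⟨hM.2.1, ha'⟩, ⟨hM.2.2, hb'⟩⟩
  rintro p hp
  rcases mem_insert.1 hp with rfl | hp
  exacts [⟨ha, hb, hab⟩, hM.1 p hp]

/-- A maximum matching meets every edge between `A` and `B`. -/
theorem exists_isCrossMatching_covering :
    ∃ M, IsCrossMatching R A B M ∧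
      ∀ a ∈ A, ∀ b ∈ B, R a b → a ∈ M.image Prod.fst ∨ b ∈ M.image Prod.snd := by
  classical
  have hempty : IsCrossMatching R A B ∅ := by simp [IsCrossMatching]
  obtain ⟨M, hMmem, hMmax⟩ := exists_max_image
    ((A ×ˢ B).powerset.filter (IsCrossMatching R A B)) card ⟨∅, by simpa using hempty⟩
  have hM : IsCrossMatching R A B M := (mem_filter.1 hMmem).2
  refine ⟨M, hM, fun a ha b hb hab => ?_⟩
  by_contra! hfree
  have hnew : (a, b) ∉ M := fun h => hfree.1 (mem_image_of_mem Prod.fst h)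
  have hM' := hM.insert ha hb hab hfree.1 hfree.2
  have hsub : insert (a, b) M ⊆ A ×ˢ B := fun p hp =>
    mem_product.2 ⟨(hM'.1 p hp).1, (hM'.1 p hp).2.1⟩
  have := hMmax _ (mem_filter.2 ⟨mem_powerset.2 hsub, hM'⟩)
  rw [card_insert_of_notMem hnew] at this
  omega

theorem card_sub_mul_card_sub_le_card_filter_not [DecidableRel R] {k : ℕ}
    (hk : ∀ M, IsCrossMatching R A B M → #M < k) :
    (#A + 1 - k) * (#B + 1 - k) ≤ #((A ×ˢ B).filter fun p => ¬ R p.1 p.2) := by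
  obtain ⟨M, hM, hcover⟩ := exists_isCrossMatching_covering (R := R) (A := A) (B := B)
  have hMk := hk M hM
  have hA : #A + 1 - k ≤ #(A \ M.image Prod.fst) := by
    have := le_card_sdiff (M.image Prod.fst) A
    have := card_image_le (s := M) (f := Prod.fst)
    omega
  have hB : #B + 1 - k ≤ #(B \ M.image Prod.snd) := by
    have := le_card_sdiff (M.image Prod.snd) B
    have := card_image_le (s := M) (f := Prod.snd)
    omega
  have hsub : (A \ M.image Prod.fst) ×ˢ (B \ M.image Prod.snd) ⊆
      (A ×ˢ B).filter fun p => ¬ R p.1 p.2 := by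
    rintro ⟨a, b⟩ hp
    simp only [mem_product, mem_sdiff] at hp
    obtain ⟨⟨ha, ha'⟩, hb, hb'⟩ := hp
    exact mem_filter.2 ⟨mem_product.2 ⟨ha, hb⟩, fun hab => (hcover a ha b hb hab).elim ha' hb'⟩
  calc (#A + 1 - k) * (#B + 1 - k)
      ≤ #(A \ M.image Prod.fst) * #(B \ M.image Prod.snd) := Nat.mul_le_mul hA hB
    _ = #((A \ M.image Prod.fst) ×ˢ (B \ M.image Prod.snd)) := (card_product _ _).symm
    _ ≤ _ := card_le_card hsub

end CrossMatching

section Friendship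

variable {V : Type*} {G : SimpleGraph V} {k : ℕ}

theorem not_fkFree_of_neighbor_edges (v : V) (z : Fin k × Fin 2 → V)
    (hz : Function.Injective z) (hv : ∀ p, G.Adj v (z p))
    (hedge : ∀ i, G.Adj (z (i, 0)) (z (i, 1))) :
    ¬ FkFree k G := by
  intro hG
  refine hG ⟨fun o => o.elim v z, fun {a b} hab => ?_⟩
    (Option.injective_iff.2 ⟨hz, by rintro ⟨p, hp⟩; exact G.ne_of_adj (hv p) hp.symm⟩)
  rw [friendshipGraph, fromRel_adj] at hab
  obtain ⟨hne, (rfl | rfl | ⟨i, rfl, rfl⟩) | (rfl | rfl | ⟨i, rfl, rfl⟩)⟩ := hab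
  · cases b
    exacts [absurd rfl hne, hv _]
  · cases a
    exacts [absurd rfl hne, (hv _).symm]
  · exact hedge i
  · cases a
    exacts [absurd rfl hne, (hv _).symm]
  · cases b
    exacts [absurd rfl hne, hv _]
  · exact (hedge i).symm

theorem FkFree.card_lt_of_isCrossMatching (hG : FkFree k G) {v : V} {A B : Finset V}
    (hAB : Disjoint A B) (hA : ∀ a ∈ A, G.Adj v a) (hB : ∀ b ∈ B, G.Adj v b)
    {M : Finset (V × V)} (hM : IsCrossMatching G.Adj A B M) : #M < k := by
  by_contra! hkM
  obtain ⟨e⟩ := Function.Embedding.nonempty_of_card_le (α := Fin k) (β := M)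
    (by simpa using hkM)
  set f : Fin k → V × V := fun i => e i
  have hf : Function.Injective f := Subtype.val_injective.comp e.injective
  have hmem (i : Fin k) : f i ∈ M := (e i).2
  have hedge (i : Fin k) := hM.1 _ (hmem i)
  have hne (i j : Fin k) : (f i).1 ≠ (f j).2 := fun h =>
    disjoint_left.1 hAB (hedge i).1 (h ▸ (hedge j).2.1)
  refine not_fkFree_of_neighbor_edges v (fun p => if p.2 = 0 then (f p.1).1 else (f p.1).2)
    ?_ ?_ (fun i => by simpa using (hedge i).2.2) hG
  · rintro ⟨i, s⟩ ⟨j, t⟩ h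
    fin_cases s <;> fin_cases t <;> simp only [Fin.zero_eta, Fin.mk_one, if_pos, one_ne_zero,
      if_false, Prod.mk.injEq, and_true] at h ⊢
    · exact hf (hM.2.1 (hmem i) (hmem j) h)
    · exact (hne i j h).elim
    · exact (hne j i h.symm).elim
    · exact hf (hM.2.2 (hmem i) (hmem j) h)
  · rintro ⟨i, s⟩
    fin_cases s
    exacts [hA _ (hedge i).1, hB _ (hedge i).2.1]

end Friendship

theorem Nat.div_le_sub_add_one {d k : ℕ} (hkd : k ≤ d) : d / k ≤ d - k + 1 := by
  rcases Nat.eq_zero_or_pos k with rfl | hk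
  · simp
  · refine Nat.div_le_of_le_mul ?_
    obtain ⟨c, rfl⟩ := Nat.exists_eq_add_of_le hkd
    rw [Nat.add_sub_cancel_left]
    nlinarith

theorem Nat.cast_le_two_mul_sqrt {d n : ℕ} (h : d ^ 2 ≤ 4 * n) : (d : ℝ) ≤ 2 * √n := by
  rw [← pow_le_pow_iff_left₀ (by positivity) (by positivity) two_ne_zero, mul_pow,
    Real.sq_sqrt (by positivity)]
  exact_mod_cast h

theorem internal_degree_bound_general {V : Type*} [Fintype V] (k : ℕ) (hk : 1 ≤ k)
    (G : SimpleGraph V) (X Y : Set V)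
    (hdisj : Disjoint X Y) (hfree : FkFree k G)
    (r : ℕ) (hr : r = Set.ncard {p : V × V | p.1 ∈ X ∧ p.2 ∈ Y ∧ ¬ G.Adj p.1 p.2})
    (v : V)
    (hdeg : 2 * k ≤ (G.neighborSet v ∩ X).ncard)
    (hXY : (G.neighborSet v ∩ X).ncard ≤ (G.neighborSet v ∩ Y).ncard) :
    (G.neighborSet v ∩ X).ncard / k * ((G.neighborSet v ∩ X).ncard - k + 1) ≤ r ∧
      ((G.neighborSet v ∩ X).ncard : ℝ) ≤ 2 * Real.sqrt (k * r) := by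
  classical
  set d := (G.neighborSet v ∩ X).ncard
  set A := (G.neighborSet v ∩ X).toFinset
  set B := (G.neighborSet v ∩ Y).toFinset
  have hA : #A = d := (Set.ncard_eq_toFinset_card' _).symm
  have hB : d ≤ #B := by rwa [← Set.ncard_eq_toFinset_card']
  have hAB : Disjoint A B := Set.disjoint_toFinset.2 <|
    hdisj.mono Set.inter_subset_right Set.inter_subset_right
  have hnonedges : #((A ×ˢ B).filter fun p => ¬ G.Adj p.1 p.2) ≤ r := by
    rw [hr, ← Set.ncard_coe_finset]
    refine Set.ncard_le_ncard (fun p hp => ?_) (Set.toFinite _)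
    simp only [coe_filter, mem_product, Set.mem_toFinset, A, B] at hp
    exact ⟨hp.1.1.2, hp.1.2.2, hp.2⟩
  have hsq : (d - k + 1) * (d - k + 1) ≤ r := calc
    (d - k + 1) * (d - k + 1) ≤ (#A + 1 - k) * (#B + 1 - k) := by gcongr <;> omega
    _ ≤ r := (card_sub_mul_card_sub_le_card_filter_not fun M hM =>
      hfree.card_lt_of_isCrossMatching hAB (fun a ha => (Set.mem_toFinset.1 ha).1)
        (fun b hb => (Set.mem_toFinset.1 hb).1) hM).trans hnonedges
  refine ⟨(Nat.mul_le_mul_right _ (Nat.div_le_sub_add_one (by omega))).trans hsq, ?_⟩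
  have hhalf : d ≤ 2 * (d - k + 1) := by omega
  exact_mod_cast Nat.cast_le_two_mul_sqrt (n := k * r) <| calc
    d ^ 2 ≤ (2 * (d - k + 1)) ^ 2 := Nat.pow_le_pow_left hhalf 2
    _ = 4 * ((d - k + 1) * (d - k + 1)) := by ring
    _ ≤ 4 * (k * r) := Nat.mul_le_mul_left 4 (hsq.trans (Nat.le_mul_of_pos_left r hk))

/-- Missing-crossing-edge bound on internal degrees in an `F_k`-free graph:
if `d_{G[X]}(v) ≥ 2k` and `d_{G[Y]}(v) ≥ d_{G[X]}(v)`, then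
`r ≥ ⌊d_{G[X]}(v)/k⌋·(d_{G[X]}(v) - k + 1)`, hence `d_{G[X]}(v) ≤ 2√(kr)`. -/
theorem internal_degree_bound {V : Type*} [Fintype V] (k : ℕ) (hk : 1 ≤ k)
    (G : SimpleGraph V) (X Y : Set V)
    (hpart : X ∪ Y = Set.univ) (hdisj : Disjoint X Y) (hfree : FkFree k G)
    (r : ℕ) (hr : r = Set.ncard {p : V × V | p.1 ∈ X ∧ p.2 ∈ Y ∧ ¬ G.Adj p.1 p.2})
    (v : V) (hv : v ∈ X)
    (hdeg : 2 * k ≤ (G.neighborSet v ∩ X).ncard)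
    (hXY : (G.neighborSet v ∩ X).ncard ≤ (G.neighborSet v ∩ Y).ncard) :
    (G.neighborSet v ∩ X).ncard / k * ((G.neighborSet v ∩ X).ncard - k + 1) ≤ r ∧
      ((G.neighborSet v ∩ X).ncard : ℝ) ≤ 2 * Real.sqrt (k * r) :=
  internal_degree_bound_general k hk G X Y hdisj hfree r hr v hdeg hXY
end

section
/- Let G be an F_k-free graph with bipartition V(G) = X ∪ Y, where the number of missing crossing edges between X and Y is r. Then the matching number of G[X] satisfies ⌊ν(G[X])/k⌋ · |Y| ≤ r; in particular, if |Y| ≥ n/3 then ν(G[X]) ≤ k(1 + 3r/n). -/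
open SimpleGraph

/-!
Fix a maximum matching `M` of `G[X]`. Fewer than `k` edges of `M` lie in the neighbourhood of a
vertex `y`, since `k` of them together with `y` would span a copy of `F_k`. Every other edge of `M`
has an endpoint not adjacent to `y`, and distinct edges of a matching have distinct endpoints, so
`y` has at least `ν(G[X]) + 1 - k ≥ ⌊ν(G[X])/k⌋` non-neighbours in `X`. Summing over `y ∈ Y`
bounds `r` from below.
-/

open Function

lemma Nat.div_le_add_one_sub (m k : ℕ) : m / k ≤ m + 1 - k := by
  rcases Nat.eq_zero_or_pos (m / k) with h | h
  · simp [h]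
  · have hk : 0 < k := Nat.pos_of_ne_zero fun hk => by simp [hk] at h
    have := Nat.div_mul_le_self m k
    have : m / k + k ≤ m / k * k + 1 := by nlinarith
    omega

lemma Nat.cast_le_mul_one_add_of_div_mul_le {m k y r n : ℕ} (hk : 0 < k) (hn : 0 < n)
    (hny : (n : ℝ) ≤ 3 * y) (h : m / k * y ≤ r) : (m : ℝ) ≤ k * (1 + 3 * r / n) := by
  have hnR : (0 : ℝ) < n := by exact_mod_cast hn
  have hyR : (0 : ℝ) < y := by linarith
  have hq : ((m / k : ℕ) : ℝ) ≤ 3 * r / n := by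
    rw [le_div_iff₀ hnR]
    have : ((m / k : ℕ) : ℝ) * y ≤ r := by exact_mod_cast h
    nlinarith [(Nat.cast_nonneg (m / k) : (0 : ℝ) ≤ _)]
  have hm : (m : ℝ) ≤ k * ((m / k : ℕ) + 1) := by exact_mod_cast (Nat.lt_mul_div_succ m hk).le
  calc (m : ℝ) ≤ k * ((m / k : ℕ) + 1) := hm
    _ ≤ k * (1 + 3 * r / n) := mul_le_mul_of_nonneg_left (by linarith) k.cast_nonneg

lemma Set.ncard_eq_sum_ncard_fiber {α β : Type*} [Fintype α] [Fintype β] (S : Set (α × β)) :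
    S.ncard = ∑ b, {a | (a, b) ∈ S}.ncard := by
  classical
  rw [Set.ncard_eq_toFinset_card', ← Set.filter_mem_univ_eq_toFinset, Finset.card_filter,
    Fintype.sum_prod_type_right]
  refine Finset.sum_congr rfl fun b _ => ?_
  rw [Set.ncard_eq_toFinset_card', ← Set.filter_mem_univ_eq_toFinset, Finset.card_filter]
  rfl

namespace SimpleGraph

variable {V : Type*} {G : SimpleGraph V} {k : ℕ}

lemma Subgraph.IsMatching.eq_of_mem_of_mem {M : G.Subgraph} (hM : M.IsMatching) {v : V}
    {e e' : Sym2 V} (he : e ∈ M.edgeSet) (he' : e' ∈ M.edgeSet) (hv : v ∈ e) (hv' : v ∈ e') :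
    e = e' := by
  obtain ⟨w, rfl⟩ := Sym2.mem_iff_exists.mp hv
  obtain ⟨w', rfl⟩ := Sym2.mem_iff_exists.mp hv'
  rw [hM.eq_of_adj_left (Subgraph.mem_edgeSet.mp he) (Subgraph.mem_edgeSet.mp he')]

lemma exists_isMatching_ncard_eq_nuOn [Finite V] (G : SimpleGraph V) (S : Set V) :
    ∃ M : G.Subgraph, M.IsMatching ∧ M.verts ⊆ S ∧ M.edgeSet.ncard = nuOn G S := by
  unfold nuOn
  refine Nat.sSup_mem
    (s := {n | ∃ M : G.Subgraph, M.IsMatching ∧ M.verts ⊆ S ∧ M.edgeSet.ncard = n}) ?_ ?_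
  · exact ⟨0, ⊥, fun v hv => hv.elim, by simp, by simp⟩
  · refine ⟨Nat.card (Sym2 V), ?_⟩
    rintro _ ⟨M, -, -, rfl⟩
    exact Set.ncard_le_card _

lemma not_fkFree_of_injective {y : V} (a : Fin k × Fin 2 → V) (ha : Injective a)
    (hay : ∀ p, G.Adj (a p) y) (hedge : ∀ i, G.Adj (a (i, 0)) (a (i, 1))) : ¬ FkFree k G := by
  let f : Option (Fin k × Fin 2) → V := fun o => o.elim y a
  have hrel : ∀ u v, u ≠ v → (u = none ∨ v = none ∨ ∃ i, u = some (i, 0) ∧ v = some (i, 1)) →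
      G.Adj (f u) (f v) := by
    rintro u v huv (rfl | rfl | ⟨i, rfl, rfl⟩)
    · obtain ⟨p, rfl⟩ := Option.ne_none_iff_exists'.mp huv.symm
      exact (hay p).symm
    · obtain ⟨p, rfl⟩ := Option.ne_none_iff_exists'.mp huv
      exact hay p
    · exact hedge i
  have hf : ∀ u v, (friendshipGraph k).Adj u v → G.Adj (f u) (f v) := by
    rintro u v ⟨huv, h | h⟩
    · exact hrel u v huv h
    · exact (hrel v u huv.symm h).symm
  have hinj : Injective f := by
    rintro (_ | p) (_ | q) h
    · rfl
    · exact absurd h (hay q).ne.symm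
    · exact absurd h (hay p).ne
    · exact congrArg some (ha h)
  exact fun hfree => hfree ⟨f, hf _ _⟩ hinj

lemma not_fkFree_of_matching {M : G.Subgraph} (hM : M.IsMatching) {y : V} (e : Fin k → Sym2 V)
    (he : Injective e) (heM : ∀ i, e i ∈ M.edgeSet) (hey : ∀ i, ∀ x ∈ e i, G.Adj x y) :
    ¬ FkFree k G := by
  let a : Fin k × Fin 2 → V := fun p => ![(e p.1).out.1, (e p.1).out.2] p.2
  have ha_mem : ∀ p, a p ∈ e p.1 := by
    rintro ⟨i, j⟩
    fin_cases j
    exacts [Sym2.out_fst_mem _, Sym2.out_snd_mem _]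
  have hedge : ∀ i, G.Adj (a (i, 0)) (a (i, 1)) := fun i => by
    have hout : s((e i).out.1, (e i).out.2) = e i := (e i).out_eq
    exact M.adj_sub (Subgraph.mem_edgeSet.mp (hout ▸ heM i))
  have ha : Injective a := by
    rintro ⟨i, j⟩ ⟨i', j'⟩ h
    obtain rfl : i = i' :=
      he (hM.eq_of_mem_of_mem (heM i) (heM i') (ha_mem (i, j)) (h ▸ ha_mem (i', j')))
    have hne := (hedge i).ne
    fin_cases j <;> fin_cases j' <;> simp_all [a]
  exact not_fkFree_of_injective a ha (fun p => hey _ _ (ha_mem p)) hedge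

lemma FkFree.ncard_edges_adj_lt [Finite V] (hfree : FkFree k G) {M : G.Subgraph}
    (hM : M.IsMatching) (y : V) : {e ∈ M.edgeSet | ∀ x ∈ e, G.Adj x y}.ncard < k := by
  by_contra! hk
  obtain ⟨t, hts, htk⟩ := Set.exists_subset_card_eq hk
  let σ : Fin k ≃ t := (Finite.equivFinOfCardEq (by rwa [Nat.card_coe_set_eq])).symm
  exact not_fkFree_of_matching hM (fun i => σ i) (Subtype.val_injective.comp σ.injective)
    (fun i => (hts (σ i).2).1) (fun i => (hts (σ i).2).2) hfree

lemma FkFree.ncard_edgeSet_lt_add_ncard_nonAdj [Finite V] (hfree : FkFree k G) {M : G.Subgraph}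
    (hM : M.IsMatching) (y : V) :
    M.edgeSet.ncard < k + {x | x ∈ M.verts ∧ ¬ G.Adj x y}.ncard := by
  set good := {e ∈ M.edgeSet | ∀ x ∈ e, G.Adj x y}
  set bad := {e ∈ M.edgeSet | ∃ x ∈ e, ¬ G.Adj x y}
  have hsplit : M.edgeSet ⊆ good ∪ bad := fun e he => by
    by_cases h : ∀ x ∈ e, G.Adj x y
    · exact Or.inl ⟨he, h⟩
    · push Not at h
      exact Or.inr ⟨he, h⟩
  -- each bad edge is recovered from any of its endpoints
  have hbad : bad.ncard ≤ {x | x ∈ M.verts ∧ ¬ G.Adj x y}.ncard := by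
    have : Nonempty V := ⟨y⟩
    choose! f hf using fun e (he : e ∈ bad) => he.2
    refine Set.ncard_le_ncard_of_injOn f (fun e he => ⟨?_, (hf e he).2⟩) ?_
    · obtain ⟨w, hw⟩ := Sym2.mem_iff_exists.mp (hf e he).1
      exact M.edge_vert (show s(f e, w) ∈ M.edgeSet from hw ▸ he.1)
    · intro e he e' he' h
      exact hM.eq_of_mem_of_mem he.1 he'.1 (hf e he).1 (h ▸ (hf e' he').1)
  calc M.edgeSet.ncard ≤ (good ∪ bad).ncard := Set.ncard_le_ncard hsplit
    _ ≤ good.ncard + bad.ncard := Set.ncard_union_le _ _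
    _ < k + {x | x ∈ M.verts ∧ ¬ G.Adj x y}.ncard := by
      have hgood : good.ncard < k := hfree.ncard_edges_adj_lt hM y
      omega

lemma FkFree.ncard_mul_le_ncard_nonAdj [Fintype V] (hfree : FkFree k G) {M : G.Subgraph}
    (hM : M.IsMatching) {X : Set V} (hMX : M.verts ⊆ X) (Y : Set V) :
    Y.ncard * (M.edgeSet.ncard + 1 - k) ≤
      {p : V × V | p.1 ∈ X ∧ p.2 ∈ Y ∧ ¬ G.Adj p.1 p.2}.ncard := by
  classical
  rw [Set.ncard_eq_sum_ncard_fiber]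
  calc Y.ncard * (M.edgeSet.ncard + 1 - k) = ∑ y ∈ Y.toFinset, (M.edgeSet.ncard + 1 - k) := by
        simp [Set.ncard_eq_toFinset_card']
    _ ≤ ∑ y ∈ Y.toFinset, {x | x ∈ X ∧ y ∈ Y ∧ ¬ G.Adj x y}.ncard := by
        refine Finset.sum_le_sum fun y hy => ?_
        have hsub : {x | x ∈ M.verts ∧ ¬ G.Adj x y} ⊆ {x | x ∈ X ∧ y ∈ Y ∧ ¬ G.Adj x y} :=
          fun x hx => ⟨hMX hx.1, Set.mem_toFinset.mp hy, hx.2⟩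
        have := hfree.ncard_edgeSet_lt_add_ncard_nonAdj hM y
        have := Set.ncard_le_ncard hsub
        omega
    _ ≤ _ := Finset.sum_le_univ_sum_of_nonneg fun _ => Nat.zero_le _

end SimpleGraph

theorem internal_matching_bound_general {V : Type*} [Fintype V] (k : ℕ) (hk : 1 ≤ k)
    (G : SimpleGraph V) (X Y : Set V) (hfree : FkFree k G)
    (r : ℕ) (hr : r = Set.ncard {p : V × V | p.1 ∈ X ∧ p.2 ∈ Y ∧ ¬ G.Adj p.1 p.2}) :
    nuOn G X / k * Y.ncard ≤ r ∧
      ((Fintype.card V : ℝ) ≤ 3 * Y.ncard →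
        (nuOn G X : ℝ) ≤ k * (1 + 3 * r / Fintype.card V)) := by
  obtain ⟨M, hM, hMX, hMν⟩ := exists_isMatching_ncard_eq_nuOn G X
  have hcount : nuOn G X / k * Y.ncard ≤ r := by
    rw [hr, ← hMν, mul_comm]
    exact (Nat.mul_le_mul_left _ (Nat.div_le_add_one_sub _ _)).trans
      (hfree.ncard_mul_le_ncard_nonAdj hM hMX Y)
  refine ⟨hcount, fun hY => ?_⟩
  rcases (Fintype.card V).eq_zero_or_pos with hn | hn
  · have : IsEmpty V := Fintype.card_eq_zero_iff.mp hn
    rw [← hMν, M.edgeSet.eq_empty_of_isEmpty]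
    simp
  · exact Nat.cast_le_mul_one_add_of_div_mul_le hk hn hY hcount

/-- Matching-number bound inside one side of a bipartition of an `F_k`-free graph:
`⌊ν(G[X])/k⌋·|Y| ≤ r`; in particular if `|Y| ≥ n/3` then `ν(G[X]) ≤ k(1 + 3r/n)`. -/
theorem internal_matching_bound {V : Type*} [Fintype V] (k : ℕ) (hk : 1 ≤ k)
    (G : SimpleGraph V) (X Y : Set V)
    (hpart : X ∪ Y = Set.univ) (hdisj : Disjoint X Y) (hfree : FkFree k G)
    (r : ℕ) (hr : r = Set.ncard {p : V × V | p.1 ∈ X ∧ p.2 ∈ Y ∧ ¬ G.Adj p.1 p.2}) :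
    nuOn G X / k * Y.ncard ≤ r ∧
      ((Fintype.card V : ℝ) ≤ 3 * Y.ncard →
        (nuOn G X : ℝ) ≤ k * (1 + 3 * r / Fintype.card V)) :=
  internal_matching_bound_general k hk G X Y hfree r hr
end

section
/- Let k ≥ 3 be odd and let P = Q = 2K_k (two disjoint copies of K_k), with cliques P_1, P_2 in P and Q_1, Q_2 in Q. If (P,Q,R) is a k-admissible triple, then for all i,j ∈ {1,2}, the bipartite graph R restricted to parts V(P_i) and V(Q_j) is a matching; in particular e(R) ≤ 4k. -/
open SimpleGraph

/-- `2K_k`: two disjoint copies of the complete graph `K_k`; the first coordinate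
indexes the clique. -/
def twoKk (k : ℕ) : SimpleGraph (Fin 2 × Fin k) where
  Adj a b := a.1 = b.1 ∧ a ≠ b
  symm := ⟨fun a b h => ⟨h.1.symm, Ne.symm h.2⟩⟩
  loopless := ⟨fun a h => h.2 rfl⟩

instance (k : ℕ) : DecidableRel (twoKk k).Adj :=
  fun a b => inferInstanceAs (Decidable (a.1 = b.1 ∧ a ≠ b))

/-! In `2K_k` every vertex has degree `k - 1`, so `k`-admissibility forces `ν = 0` on every
`R`-neighbourhood. A set spanning no matching edge of `2K_k` meets each clique at most once,
which is exactly the matching condition on each `R[P_i, Q_j]`; then an edge of `R` is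
determined by its endpoint in `P` and the clique of its endpoint in `Q`, giving `e(R) ≤ 4k`. -/

lemma one_le_nuOn_of_adj {V : Type*} [Finite V] (G : SimpleGraph V) {S : Set V} {u v : V}
    (hu : u ∈ S) (hv : v ∈ S) (huv : G.Adj u v) : 1 ≤ nuOn G S := by
  refine le_csSup ⟨Nat.card (Sym2 V), ?_⟩ ⟨G.subgraphOfAdj huv, .subgraphOfAdj huv, ?_, ?_⟩
  · rintro n ⟨M, -, -, rfl⟩
    exact Set.ncard_le_card _
  · rw [subgraphOfAdj_verts]
    exact Set.insert_subset hu (Set.singleton_subset_iff.mpr hv)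
  · rw [edgeSet_subgraphOfAdj, Set.ncard_singleton]

lemma twoKk_neighborSet (k : ℕ) (a : Fin 2 × Fin k) :
    (twoKk k).neighborSet a = Prod.mk a.1 '' {a.2}ᶜ := by
  ext ⟨i, x⟩
  simp only [mem_neighborSet, twoKk, Set.mem_image, Set.mem_compl_singleton_iff, Prod.mk.injEq]
  constructor
  · rintro ⟨rfl, hne⟩
    exact ⟨x, fun h => hne (Prod.ext rfl h.symm), rfl, rfl⟩
  · rintro ⟨x, hx, rfl, rfl⟩
    exact ⟨rfl, fun h => hx (congrArg Prod.snd h).symm⟩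

lemma twoKk_ncard_neighborSet (k : ℕ) (a : Fin 2 × Fin k) :
    ((twoKk k).neighborSet a).ncard = k - 1 := by
  rw [twoKk_neighborSet, Set.ncard_image_of_injective _ (Prod.mk_right_injective a.1),
    Set.ncard_compl, Set.ncard_singleton, Nat.card_fin]

lemma nuOn_twoKk_eq_zero {k : ℕ} {S : Set (Fin 2 × Fin k)} {a : Fin 2 × Fin k}
    (h : ((twoKk k).neighborSet a).ncard + nuOn (twoKk k) S ≤ k - 1) :
    nuOn (twoKk k) S = 0 := by
  rw [twoKk_ncard_neighborSet] at h
  omega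

lemma eq_of_mem_of_nuOn_twoKk_eq_zero {k : ℕ} {S : Set (Fin 2 × Fin k)}
    (hS : nuOn (twoKk k) S = 0) {j : Fin 2} {b b' : Fin k} (hb : (j, b) ∈ S)
    (hb' : (j, b') ∈ S) : b = b' := by
  by_contra hne
  have hadj : (twoKk k).Adj (j, b) (j, b') := ⟨rfl, fun h => hne (congrArg Prod.snd h)⟩
  have := one_le_nuOn_of_adj (twoKk k) hb hb' hadj
  omega

lemma ncard_le_of_right_determined {α β γ : Type*} [Finite α] [Finite β]
    (R : α → β × γ → Prop) (hR : ∀ a b c c', R a (b, c) → R a (b, c') → c = c') :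
    Set.ncard {p : α × β × γ | R p.1 p.2} ≤ Nat.card α * Nat.card β := by
  rw [← Nat.card_prod, ← Set.ncard_univ]
  refine Set.ncard_le_ncard_of_injOn (fun p => (p.1, p.2.1)) (fun _ _ => trivial) ?_
  rintro ⟨a, b, c⟩ hp ⟨a', b', c'⟩ hq heq
  obtain ⟨rfl, rfl⟩ := Prod.mk.inj heq
  rw [hR a b c c' hp hq]

theorem twoKk_admissible_matching_general (k : ℕ)
    (R : Fin 2 × Fin k → Fin 2 × Fin k → Prop)
    (hadmA : ∀ a, ((twoKk k).neighborSet a).ncard + nuOn (twoKk k) {b | R a b} ≤ k - 1)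
    (hadmB : ∀ b, ((twoKk k).neighborSet b).ncard + nuOn (twoKk k) {a | R a b} ≤ k - 1) :
    (∀ i j : Fin 2,
        (∀ a b b', R (i, a) (j, b) → R (i, a) (j, b') → b = b') ∧
        (∀ a a' b, R (i, a) (j, b) → R (i, a') (j, b) → a = a')) ∧
      Set.ncard {p : (Fin 2 × Fin k) × Fin 2 × Fin k | R p.1 p.2} ≤ 4 * k := by
  have hA : ∀ a, nuOn (twoKk k) {b | R a b} = 0 := fun a => nuOn_twoKk_eq_zero (hadmA a)
  have hB : ∀ b, nuOn (twoKk k) {a | R a b} = 0 := fun b => nuOn_twoKk_eq_zero (hadmB b)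
  have hrow : ∀ a j b b', R a (j, b) → R a (j, b') → b = b' :=
    fun a _ _ _ => eq_of_mem_of_nuOn_twoKk_eq_zero (hA a)
  refine ⟨fun i j => ⟨fun a => hrow (i, a) j,
    fun _ _ b => eq_of_mem_of_nuOn_twoKk_eq_zero (hB (j, b))⟩, ?_⟩
  calc Set.ncard {p : (Fin 2 × Fin k) × Fin 2 × Fin k | R p.1 p.2}
      ≤ Nat.card (Fin 2 × Fin k) * Nat.card (Fin 2) := ncard_le_of_right_determined R hrow
    _ = 4 * k := by simp only [Nat.card_prod, Nat.card_fin]; ring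

/-- For odd `k ≥ 3` and `P = Q = 2K_k`, if `(P,Q,R)` is `k`-admissible then each bipartite
restriction `R[P_i,Q_j]` is a matching, and in particular `e(R) ≤ 4k`. -/
theorem twoKk_admissible_matching (k : ℕ) (hk : 3 ≤ k) (hodd : Odd k)
    (R : Fin 2 × Fin k → Fin 2 × Fin k → Prop)
    (hadmA : ∀ a, ((twoKk k).neighborSet a).ncard + nuOn (twoKk k) {b | R a b} ≤ k - 1)
    (hadmB : ∀ b, ((twoKk k).neighborSet b).ncard + nuOn (twoKk k) {a | R a b} ≤ k - 1) :
    (∀ i j : Fin 2,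
        (∀ a b b', R (i, a) (j, b) → R (i, a) (j, b') → b = b') ∧
        (∀ a a' b, R (i, a) (j, b) → R (i, a') (j, b) → a = a')) ∧
      Set.ncard {p : (Fin 2 × Fin k) × Fin 2 × Fin k | R p.1 p.2} ≤ 4 * k :=
  twoKk_admissible_matching_general k R hadmA hadmB
end
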